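/- arXiv:1710.03931 — 4 statements merged into one kernel-verified Lean document; each statement's English description precedes it below -/
import Mathlib

section
/- If the rooted digraph D is a quasi-vertex-flame and L ⊆ D is D-vertex-large, then L is a quasi-vertex-flame as well. -/
namespace FlamePaper

universe u
variable {V : Type u}

/-- A (nonempty, repetition-free) directed path, given by the list of its vertices;
its edge set consists of the pairs of consecutive vertices. A one-vertex list is the
trivial `v→v` path. -/
structure DiPath (V : Type u) where
  verts : List V
  ne : verts ≠ []
  nodup : verts.Nodup

namespace DiPath
variable (P : DiPath V)
def first : V := P.verts.head P.ne
def last : V := P.verts.getLast P.ne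
def vertexSet : Set V := {x | x ∈ P.verts}
def edges : Set (V × V) := {e | e ∈ P.verts.zip P.verts.tail}
def internal : Set V := P.vertexSet \ {P.first, P.last}
/-- The last edge of `P` (as a set; empty for the trivial path). -/
def lastEdge : Set (V × V) := {e ∈ P.edges | e.2 = P.last}
end DiPath

/-- `P` is a path of the digraph `D`. -/
def IsPathIn (D : Set (V × V)) (P : DiPath V) : Prop := P.edges ⊆ D

/-- `P` is an `a→b` path in `D`. -/
def IsPath (D : Set (V × V)) (a b : V) (P : DiPath V) : Prop :=
  IsPathIn D P ∧ P.first = a ∧ P.last = b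

/-- The set of ingoing edges of `v` in `D`. -/
def inEdges (D : Set (V × V)) (v : V) : Set (V × V) := {e ∈ D | e.2 = v}

/-- The set of outgoing edges of `v` in `D`. -/
def outEdges (D : Set (V × V)) (v : V) : Set (V × V) := {e ∈ D | e.1 = v}

/-- A rooted digraph: the root has no ingoing edges. -/
def IsRooted (D : Set (V × V)) (r : V) : Prop := inEdges D r = ∅

/-- `Ps` is a system of internally disjoint `r→v` paths in `D`: any two distinct
members share exactly the vertices `r` and `v`. -/
def IntDisjSystem (D : Set (V × V)) (r v : V) (Ps : Set (DiPath V)) : Prop :=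
  (∀ P ∈ Ps, IsPath D r v P) ∧
  ∀ P ∈ Ps, ∀ Q ∈ Ps, P ≠ Q → P.vertexSet ∩ Q.vertexSet = {r, v}

/-- `A_last(Ps)`: the set of last edges of the paths in `Ps`. -/
def lastEdges (Ps : Set (DiPath V)) : Set (V × V) := ⋃ P ∈ Ps, P.lastEdge

/-- `𝒢_D(v)`: the set of those `I ⊆ in_D(v)` which arise as the set of last edges
of a system of internally disjoint `r→v` paths of `D`. -/
def GSet (D : Set (V × V)) (r v : V) : Set (Set (V × V)) :=
  {I | ∃ Ps, IntDisjSystem D r v Ps ∧ lastEdges Ps = I}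

/-- `Ps ∈ ℑ_D(v)`: an internally disjoint system of `r→v` paths of `D` from each member
of which one can choose either an internal vertex or an edge so that the resulting set
meets every `r→v` path of `D`. -/
def EMSystem (D : Set (V × V)) (r v : V) (Ps : Set (DiPath V)) : Prop :=
  IntDisjSystem D r v Ps ∧
  ∃ sel : DiPath V → V ⊕ (V × V),
    (∀ P ∈ Ps, (∀ x, sel P = Sum.inl x → x ∈ P.internal) ∧
              (∀ e, sel P = Sum.inr e → e ∈ P.edges)) ∧
    ∀ Q : DiPath V, IsPath D r v Q →
      ∃ P ∈ Ps, (∀ x, sel P = Sum.inl x → x ∈ Q.vertexSet) ∧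
               (∀ e, sel P = Sum.inr e → e ∈ Q.edges)

/-- The path-system `Ps` lies in `L`. -/
def LiesIn (Ps : Set (DiPath V)) (L : Set (V × V)) : Prop := ∀ P ∈ Ps, IsPathIn L P

/-- `L` is a `D`-vertex-large spanning subdigraph of `D`. -/
def IsLarge (D L : Set (V × V)) (r : V) : Prop :=
  L ⊆ D ∧ ∀ v, v ≠ r → ∃ Ps, EMSystem D r v Ps ∧ LiesIn Ps L

/-- `F` is a vertex-flame with root `r`. -/
def IsFlame (F : Set (V × V)) (r : V) : Prop :=
  ∀ v, v ≠ r → inEdges F v ∈ GSet F r v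

/-- `F` is a quasi-vertex-flame with root `r`. -/
def IsQuasiFlame (F : Set (V × V)) (r : V) : Prop :=
  ∀ v, v ≠ r → ∀ I ⊆ inEdges F v, I.Finite → I ∈ GSet F r v

/-- `S` separates `b` from `a` in `D`: every `a→b` path of `D` meets `S`. -/
def Separates (D : Set (V × V)) (a b : V) (S : Set V) : Prop :=
  ∀ P : DiPath V, IsPath D a b P → (P.vertexSet ∩ S).Nonempty

/-- `𝔖_D(v)`: the Erdős–Menger separations corresponding to `v`. -/
def SepSet (D : Set (V × V)) (r v : V) : Set (Set V) :=
  {S | r ∉ S ∧ v ∉ S ∧ Separates (D \ {(r, v)}) r v S ∧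
    ∃ Ps, IntDisjSystem D r v Ps ∧
      ∃ sel : DiPath V → V, (∀ P ∈ Ps, sel P ∈ P.internal) ∧ S = sel '' Ps}

/-- The entrance of `X` with respect to `D`. -/
def entrance (D : Set (V × V)) (X : Set V) : Set V :=
  {v ∈ X | ∃ u, u ∉ X ∧ (u, v) ∈ D}

/-- `int_D(X) = X ∖ ent_D(X)`. -/
def interiorSet (D : Set (V × V)) (X : Set V) : Set V := X \ entrance D X

/-- `B` is a `v`-bubble of `D` (with root `r`): `B ⊆ V − r` and there is a `v`-infan
`{P_u : u ∈ ent_D(B)}` in `D ∩ (B × B)` where `P_u` starts at `u`. -/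
def IsBubble (D : Set (V × V)) (r v : V) (B : Set V) : Prop :=
  r ∉ B ∧
  ∃ F : V → DiPath V,
    (∀ u ∈ entrance D B, IsPath (D ∩ B ×ˢ B) u v (F u)) ∧
    ∀ u ∈ entrance D B, ∀ u' ∈ entrance D B, u ≠ u' →
      (F u).vertexSet ∩ (F u').vertexSet = {v}

/-- `bubb_D(v)`. -/
def bubbles (D : Set (V × V)) (r v : V) : Set (Set V) := {B | IsBubble D r v B}

/-- `B_{v,D}`: the union of all `v`-bubbles of `D`. -/
def maxBubble (D : Set (V × V)) (r v : V) : Set V := ⋃₀ bubbles D r v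

/-- `B_{S,v,D}`: the set of vertices `u` such that every `r→u` path of `D−rv` meets `S`. -/
def Bset (D : Set (V × V)) (r v : V) (S : Set V) : Set V :=
  {u | ∀ P : DiPath V, IsPath (D \ {(r, v)}) r u P → (P.vertexSet ∩ S).Nonempty}

/-- `Ps` is an `r`-fan in `D`: paths of `D` starting at `r`, any two distinct members
having only the vertex `r` in common. -/
def IsRFan (D : Set (V × V)) (r : V) (Ps : Set (DiPath V)) : Prop :=
  (∀ P ∈ Ps, IsPathIn D P ∧ P.first = r) ∧
  ∀ P ∈ Ps, ∀ Q ∈ Ps, P ≠ Q → P.vertexSet ∩ Q.vertexSet = {r}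

/-- The set of first vertices of the paths in `Ps`. -/
def Vfirst (Ps : Set (DiPath V)) : Set V := DiPath.first '' Ps

/-- The set of last vertices of the paths in `Ps`. -/
def Vlast (Ps : Set (DiPath V)) : Set V := DiPath.last '' Ps

/-- `P` is an `X→Y` path in `D`: exactly its first vertex lies in `X` and
exactly its last vertex lies in `Y`. -/
def IsXYPath (D : Set (V × V)) (X Y : Set V) (P : DiPath V) : Prop :=
  IsPathIn D P ∧ P.vertexSet ∩ X = {P.first} ∧ P.vertexSet ∩ Y = {P.last}

/-- `Ps` is a system of pairwise (vertex-)disjoint `X→Y` paths of `D`. -/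
def DisjXYSystem (D : Set (V × V)) (X Y : Set V) (Ps : Set (DiPath V)) : Prop :=
  (∀ P ∈ Ps, IsXYPath D X Y P) ∧
  ∀ P ∈ Ps, ∀ Q ∈ Ps, P ≠ Q → P.vertexSet ∩ Q.vertexSet = ∅

/-- `κ_D(r,v)`: the maximum size of a (finite) system of internally disjoint `r→v`
paths of `D`. -/
noncomputable def kappa (D : Set (V × V)) (r v : V) : ℕ :=
  sSup {n : ℕ | ∃ Ps : Set (DiPath V), IntDisjSystem D r v Ps ∧ Ps.Finite ∧ Ps.ncard = n}

section Aux

theorem mem_zipTail_iff {l : List V} {e : V × V} :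
    e ∈ l.zip l.tail ↔ ∃ i, l[i]? = some e.1 ∧ l[i + 1]? = some e.2 := by
  induction l with
  | nil => simp
  | cons a t ih =>
    cases t with
    | nil => simp
    | cons b t' =>
      rw [show (a :: b :: t' : List V).tail = b :: t' from rfl, List.zip_cons_cons]
      constructor
      · intro h
        rcases List.mem_cons.1 h with h | h
        · exact ⟨0, by simp [h], by simp [h]⟩
        · obtain ⟨i, h1, h2⟩ := ih.1 (by simpa using h)
          exact ⟨i + 1, h1, h2⟩
      · rintro ⟨i, h1, h2⟩
        cases i with
        | zero =>
          simp only [List.getElem?_cons_zero, Option.some_inj] at h1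
          simp only [List.getElem?_cons_succ, List.getElem?_cons_zero, Option.some_inj] at h2
          exact List.mem_cons.2 (Or.inl (by rw [Prod.ext_iff]; exact ⟨h1.symm, h2.symm⟩))
        | succ i =>
          exact List.mem_cons_of_mem _ (by simpa using ih.2 ⟨i, h1, h2⟩)

theorem zipTail_append {t s : List V} {e : V × V} :
    e ∈ (t ++ s).zip (t ++ s).tail ↔
      e ∈ t.zip t.tail ∨ e ∈ s.zip s.tail ∨
        ∃ (ht : t ≠ []) (hs : s ≠ []), e = (t.getLast ht, s.head hs) := by
  induction t with
  | nil => simp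
  | cons a t ih =>
    cases t with
    | nil =>
      cases s with
      | nil => simp
      | cons b s' =>
        simp only [List.nil_append, List.singleton_append, List.tail_cons, List.zip_cons_cons]
        constructor
        · intro h
          rcases List.mem_cons.1 h with h | h
          · refine Or.inr (Or.inr ⟨by simp, by simp, ?_⟩)
            rw [h]; rfl
          · exact Or.inr (Or.inl h)
        · rintro (h | h | ⟨ht, hs, h⟩)
          · simp at h
          · exact List.mem_cons_of_mem _ h
          · rw [h]
            exact List.mem_cons_self
    | cons c t' =>
      have hcc : ((a :: c :: t') ++ s).zip (((a :: c :: t') ++ s)).tail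
          = (a, c) :: ((c :: t' ++ s).zip ((c :: t' ++ s)).tail) := by
        simp [List.zip_cons_cons]
      have hlhs : (a :: c :: t').zip ((a :: c :: t')).tail
          = (a, c) :: ((c :: t').zip ((c :: t')).tail) := by
        simp [List.zip_cons_cons]
      rw [hcc, hlhs]
      constructor
      · intro h
        rcases List.mem_cons.1 h with h | h
        · exact Or.inl (h ▸ List.mem_cons_self)
        · rcases ih.1 h with h | h | ⟨ht, hs, h⟩
          · exact Or.inl (List.mem_cons_of_mem _ h)
          · exact Or.inr (Or.inl h)
          · refine Or.inr (Or.inr ⟨by simp, hs, ?_⟩)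
            rw [h]; congr 1
      · rintro (h | h | ⟨ht, hs, h⟩)
        · rcases List.mem_cons.1 h with h | h
          · exact h ▸ List.mem_cons_self
          · exact List.mem_cons_of_mem _ (ih.2 (Or.inl h))
        · exact List.mem_cons_of_mem _ (ih.2 (Or.inr (Or.inl h)))
        · refine List.mem_cons_of_mem _ (ih.2 (Or.inr (Or.inr ⟨by simp, hs, ?_⟩)))
          rw [h]; congr 1

theorem get?_getLast {l : List V} (h : l ≠ []) : l[l.length - 1]? = some (l.getLast h) := by
  rw [List.getLast_eq_getElem]; exact List.getElem?_eq_getElem _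

theorem get?_head {l : List V} (h : l ≠ []) : l[0]? = some (l.head h) := by
  rw [← List.head?_eq_getElem?, List.head?_eq_head]

theorem mem_of_mem_zipTail {l : List V} {e : V × V} (h : e ∈ l.zip l.tail) :
    e.1 ∈ l ∧ e.2 ∈ l := by
  obtain ⟨h1, h2⟩ := List.of_mem_zip (by exact h)
  exact ⟨h1, List.mem_of_mem_tail h2⟩

theorem ne_of_mem_zipTail {l : List V} (hl : l.Nodup) {e : V × V} (h : e ∈ l.zip l.tail) :
    e.1 ≠ e.2 := by
  obtain ⟨i, h1, h2⟩ := mem_zipTail_iff.1 h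
  intro hee
  have hilt : i < l.length := List.getElem?_eq_some_iff.1 h1 |>.1
  have : i = i + 1 := (List.getElem?_inj hilt hl).1 (by rw [h1, h2, hee])
  omega

theorem snd_ne_head {l : List V} (hl : l.Nodup) (hne : l ≠ []) {e : V × V}
    (h : e ∈ l.zip l.tail) : e.2 ≠ l.head hne := by
  obtain ⟨i, h1, h2⟩ := mem_zipTail_iff.1 h
  intro hee
  have hilt : i + 1 < l.length := List.getElem?_eq_some_iff.1 h2 |>.1
  have : i + 1 = 0 := (List.getElem?_inj hilt hl).1 (by rw [h2, hee, get?_head hne])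
  omega

theorem eq_of_snd_getLast {l : List V} (hl : l.Nodup) (hne : l ≠ []) {e e' : V × V}
    (he : e ∈ l.zip l.tail) (he' : e' ∈ l.zip l.tail)
    (h2 : e.2 = l.getLast hne) (h2' : e'.2 = l.getLast hne) : e = e' := by
  obtain ⟨i, hi1, hi2⟩ := mem_zipTail_iff.1 he
  obtain ⟨j, hj1, hj2⟩ := mem_zipTail_iff.1 he'
  have hilt : i + 1 < l.length := List.getElem?_eq_some_iff.1 hi2 |>.1
  have hjlt : j + 1 < l.length := List.getElem?_eq_some_iff.1 hj2 |>.1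
  have hi : i + 1 = l.length - 1 := (List.getElem?_inj hilt hl).1 (by rw [hi2, h2, get?_getLast hne])
  have hj : j + 1 = l.length - 1 := (List.getElem?_inj hjlt hl).1 (by rw [hj2, h2', get?_getLast hne])
  have hij : i = j := by omega
  subst hij
  have h1 : e.1 = e'.1 := by rw [hi1] at hj1; exact Option.some_inj.1 hj1
  have h2'' : e.2 = e'.2 := by rw [h2, h2']
  exact Prod.ext h1 h2''

theorem verts_eq_pair' {l : List V} (hl : l.Nodup) (hne : l ≠ []) {e : V × V}
    (he : e ∈ l.zip l.tail) (h1 : e.1 = l.head hne) (h2 : e.2 = l.getLast hne) :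
    l = [e.1, e.2] := by
  obtain ⟨i, hi1, hi2⟩ := mem_zipTail_iff.1 he
  have hilt : i < l.length := List.getElem?_eq_some_iff.1 hi1 |>.1
  have hilt2 : i + 1 < l.length := List.getElem?_eq_some_iff.1 hi2 |>.1
  have hi0 : i = 0 := (List.getElem?_inj hilt hl).1 (by rw [hi1, h1, get?_head hne])
  have hi1' : i + 1 = l.length - 1 := (List.getElem?_inj hilt2 hl).1 (by rw [hi2, h2, get?_getLast hne])
  have hlen : l.length = 2 := by omega
  obtain ⟨a, b, hab⟩ := List.length_eq_two.1 hlen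
  subst hab
  simp only [List.getElem?_cons_zero, List.getElem?_cons_succ, Option.some_inj] at hi1 hi2
  rw [hi0] at hi1 hi2
  simp only [List.getElem?_cons_zero, List.getElem?_cons_succ, Option.some_inj] at hi1 hi2
  rw [← hi1, ← hi2]

theorem snd_getLast_append {t s : List V} (hnd : (t ++ s).Nodup) (hs : s ≠ [])
    (hhl : s.head hs ≠ s.getLast hs) {e : V × V} :
    (e ∈ (t ++ s).zip (t ++ s).tail ∧ e.2 = (t ++ s).getLast (by simp [hs])) ↔
    (e ∈ s.zip s.tail ∧ e.2 = s.getLast hs) := by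
  have hgl : (t ++ s).getLast (by simp [hs]) = s.getLast hs := List.getLast_append_of_ne_nil _ hs
  constructor
  · rintro ⟨he, h2⟩
    rw [hgl] at h2
    rcases zipTail_append.1 he with h | h | ⟨ht', hs', h⟩
    · exfalso
      have h2t : e.2 ∈ t := (mem_of_mem_zipTail h).2
      have hgm : s.getLast hs ∈ s := List.getLast_mem hs
      have hdisj := (List.nodup_append.1 hnd).2.2
      exact hdisj _ h2t _ hgm h2
    · exact ⟨h, h2⟩
    · exfalso
      apply hhl
      have : e.2 = s.head hs := by rw [h]
      rw [← this, h2]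
  · rintro ⟨he, h2⟩
    exact ⟨zipTail_append.2 (Or.inr (Or.inl he)), by rw [hgl, h2]⟩

open Classical in
/-- choose a bad edge all of whose suffix edges are good -/
theorem exists_bad_clean_suffix (L : Set (V × V)) :
    ∀ (l : List V), l.Nodup → ∀ e₀ ∈ l.zip l.tail, e₀ ∉ L →
    ∃ x y : V, (x, y) ∈ l.zip l.tail ∧ (x, y) ∉ L ∧ y ∈ l ∧
      ∀ e ∈ (l.dropWhile (fun z => decide (z ≠ y))).zip
             (l.dropWhile (fun z => decide (z ≠ y))).tail, e ∈ L := by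
  intro l
  induction l with
  | nil => intro _ e₀ h; simp at h
  | cons a t ih =>
    intro hnd e₀ he₀ hbad
    by_cases hbt : ∃ e ∈ t.zip t.tail, e ∉ L
    · obtain ⟨e₁, he₁, hbad₁⟩ := hbt
      obtain ⟨x, y, hmem, hxyL, hyt, hclean⟩ := ih (List.nodup_cons.1 hnd).2 e₁ he₁ hbad₁
      have hay : a ≠ y := by
        intro h; exact (List.nodup_cons.1 hnd).1 (h ▸ hyt)
      refine ⟨x, y, ?_, hxyL, List.mem_cons_of_mem _ hyt, ?_⟩
      · cases t with
        | nil => simp at hmem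
        | cons b t' =>
          rw [show (a :: b :: t' : List V).tail = b :: t' from rfl, List.zip_cons_cons]
          exact List.mem_cons_of_mem _ hmem
      · rwa [List.dropWhile_cons_of_pos (by simp [hay])]
    · push_neg at hbt
      cases t with
      | nil => simp at he₀
      | cons b t' =>
        have he₀' : e₀ = (a, b) ∨ e₀ ∈ (b :: t').zip (b :: t').tail := by
          rw [show (a :: b :: t' : List V).tail = b :: t' from rfl, List.zip_cons_cons] at he₀
          simpa using he₀
        rcases he₀' with rfl | h
        · have hab : a ≠ b := by
            intro h
            exact (List.nodup_cons.1 hnd).1 (h ▸ (List.mem_cons_self (a := b) (l := t')))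
          refine ⟨a, b, ?_, hbad, List.mem_cons_of_mem _ ((List.mem_cons_self (a := b) (l := t'))), ?_⟩
          · rw [show (a :: b :: t' : List V).tail = b :: t' from rfl, List.zip_cons_cons]
            exact List.mem_cons_self
          · rw [List.dropWhile_cons_of_pos (by simp [hab]),
              List.dropWhile_cons_of_neg (by simp)]
            exact hbt
        · exact absurd (hbt e₀ (by simpa using h)) hbad

namespace DiPath
variable (P : DiPath V)

theorem ext' {P Q : DiPath V} (h : P.verts = Q.verts) : P = Q := by
  cases P; cases Q; simpa using h

theorem first_mem : P.first ∈ P.verts := List.head_mem _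

theorem last_mem : P.last ∈ P.verts := List.getLast_mem _

theorem edge_mem {e : V × V} (h : e ∈ P.edges) : e.1 ∈ P.verts ∧ e.2 ∈ P.verts :=
  mem_of_mem_zipTail h

theorem edge_ne {e : V × V} (h : e ∈ P.edges) : e.1 ≠ e.2 :=
  ne_of_mem_zipTail P.nodup h

theorem snd_ne_first {e : V × V} (h : e ∈ P.edges) : e.2 ≠ P.first :=
  snd_ne_head P.nodup P.ne h

theorem dropLast_ne (h : P.first ≠ P.last) : P.verts.dropLast ≠ [] := by
  cases hv : P.verts with
  | nil => exact absurd hv P.ne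
  | cons a t =>
    cases t with
    | nil =>
      exfalso; apply h
      unfold first last
      simp only [hv]
      simp
    | cons b t' => simp [hv]

/-- the second-to-last vertex (junk value for too-short paths) -/
def penult : V := P.verts.dropLast.getLastD P.first

def lastE : V × V := (P.penult, P.last)

theorem penult_eq (h : P.first ≠ P.last) :
    P.penult = P.verts.dropLast.getLast (P.dropLast_ne h) := by
  unfold penult
  rw [List.getLastD_eq_getLast?, List.getLast?_eq_getLast (P.dropLast_ne h)]
  rfl

@[simp] theorem lastE_snd : P.lastE.2 = P.last := rfl

theorem lastE_mem (h : P.first ≠ P.last) : P.lastE ∈ P.edges := by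
  have hd : P.verts.dropLast ++ [P.verts.getLast P.ne] = P.verts :=
    List.dropLast_append_getLast P.ne
  show P.lastE ∈ P.verts.zip P.verts.tail
  rw [← hd]
  refine zipTail_append.2 (Or.inr (Or.inr ⟨P.dropLast_ne h, by simp, ?_⟩))
  rw [lastE, penult_eq _ h]
  rfl

theorem eq_lastE {e : V × V} (h : P.first ≠ P.last) (he : e ∈ P.edges)
    (h2 : e.2 = P.last) : e = P.lastE :=
  eq_of_snd_getLast P.nodup P.ne he (P.lastE_mem h) h2 rfl

theorem lastEdge_eq (h : P.first ≠ P.last) : P.lastEdge = {P.lastE} := by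
  ext e
  simp only [lastEdge, Set.mem_setOf_eq, Set.mem_singleton_iff]
  constructor
  · rintro ⟨he, h2⟩; exact P.eq_lastE h he h2
  · rintro rfl; exact ⟨P.lastE_mem h, rfl⟩

theorem verts_eq_pair {e : V × V} (he : e ∈ P.edges) (h1 : e.1 = P.first)
    (h2 : e.2 = P.last) : P.verts = [e.1, e.2] :=
  verts_eq_pair' P.nodup P.ne he h1 h2

end DiPath
end Aux


section Systems
variable {V : Type u} {D L : Set (V × V)} {r v y : V} {Q Ps : Set (DiPath V)}

theorem IntDisjSystem.lastE_injOn (h : IntDisjSystem D r v Q) (hrv : r ≠ v) :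
    Set.InjOn DiPath.lastE Q := by
  intro P hP P' hP' heq
  by_contra hne
  have hfl : P.first ≠ P.last := by
    rw [(h.1 P hP).2.1, (h.1 P hP).2.2]; exact hrv
  have hfl' : P'.first ≠ P'.last := by
    rw [(h.1 P' hP').2.1, (h.1 P' hP').2.2]; exact hrv
  have hz : P.lastE.1 ∈ ({r, v} : Set V) := by
    rw [← h.2 P hP P' hP' hne]
    exact ⟨(P.edge_mem (P.lastE_mem hfl)).1,
      by rw [heq]; exact (P'.edge_mem (P'.lastE_mem hfl')).1⟩
  have hP2 : P.lastE.2 = v := by rw [DiPath.lastE_snd, (h.1 P hP).2.2]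
  rcases hz with hz | hz
  · -- P.lastE = (r, v) : both paths are [r, v]
    have hv1 : P.verts = [P.lastE.1, P.lastE.2] :=
      P.verts_eq_pair (P.lastE_mem hfl) (by rw [hz, (h.1 P hP).2.1]) (by rw [hP2, (h.1 P hP).2.2])
    have hv2 : P'.verts = [P.lastE.1, P.lastE.2] := by
      have := P'.verts_eq_pair (e := P'.lastE) (P'.lastE_mem hfl')
        (by rw [← heq, hz, (h.1 P' hP').2.1])
        (by rw [DiPath.lastE_snd, (h.1 P' hP').2.2])
      rw [heq]; exact this
    exact hne (DiPath.ext' (hv1.trans hv2.symm))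
  · exact P.edge_ne (P.lastE_mem hfl) (by rw [hz, hP2])

theorem IntDisjSystem.lastEdges_eq (h : IntDisjSystem D r v Q) (hrv : r ≠ v) :
    lastEdges Q = DiPath.lastE '' Q := by
  ext e
  simp only [lastEdges, Set.mem_iUnion, Set.mem_image]
  constructor
  · rintro ⟨P, hP, he⟩
    have hfl : P.first ≠ P.last := by
      rw [(h.1 P hP).2.1, (h.1 P hP).2.2]; exact hrv
    rw [P.lastEdge_eq hfl] at he
    exact ⟨P, hP, he.symm⟩
  · rintro ⟨P, hP, he⟩
    have hfl : P.first ≠ P.last := by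
      rw [(h.1 P hP).2.1, (h.1 P hP).2.2]; exact hrv
    exact ⟨P, hP, by rw [P.lastEdge_eq hfl, ← he]; rfl⟩

theorem IntDisjSystem.finite_of_lastEdges (h : IntDisjSystem D r v Q) (hrv : r ≠ v)
    (hfin : (lastEdges Q).Finite) : Q.Finite :=
  Set.Finite.of_finite_image (by rw [← h.lastEdges_eq hrv]; exact hfin) (h.lastE_injOn hrv)

theorem IntDisjSystem.ncard_lastEdges (h : IntDisjSystem D r v Q) (hrv : r ≠ v) :
    (lastEdges Q).ncard = Q.ncard := by
  rw [h.lastEdges_eq hrv]; exact Set.ncard_image_of_injOn (h.lastE_injOn hrv)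

theorem IntDisjSystem.lastE_mem_inEdges (h : IntDisjSystem D r v Q) (hrv : r ≠ v)
    {P : DiPath V} (hP : P ∈ Q) : P.lastE ∈ inEdges D v := by
  have hfl : P.first ≠ P.last := by
    rw [(h.1 P hP).2.1, (h.1 P hP).2.2]; exact hrv
  exact ⟨(h.1 P hP).1 (P.lastE_mem hfl), by rw [DiPath.lastE_snd, (h.1 P hP).2.2]⟩

theorem hit_ncard_le (hry : r ≠ y)
    (hQ : IntDisjSystem D r y Q) (hPs : EMSystem D r y Ps) (hfin : Ps.Finite) :
    Q.ncard ≤ Ps.ncard := by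
  obtain ⟨hPsys, sel, hsel, hcov⟩ := hPs
  choose f hfmem hfv hfe using fun (q : DiPath V) (h : IsPath D r y q) => hcov q h
  classical
  set g : DiPath V → DiPath V := fun q => if hq2 : IsPath D r y q then f q hq2 else q with hg
  have key : Set.InjOn g Q := by
    intro q hq1 q' hq1' heq
    by_contra hne
    have hp : IsPath D r y q := hQ.1 q hq1
    have hp' : IsPath D r y q' := hQ.1 q' hq1'
    rw [hg] at heq
    simp only [dif_pos hp, dif_pos hp'] at heq
    have hint : q.vertexSet ∩ q'.vertexSet = {r, y} := hQ.2 q hq1 q' hq1' hne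
    have hPmem : f q hp ∈ Ps := hfmem q hp
    have hPpath : IsPath D r y (f q hp) := hPsys.1 _ hPmem
    obtain ⟨hselv, hsele⟩ := hsel _ hPmem
    cases hs : sel (f q hp) with
    | inl x =>
      have hx1 : x ∈ q.vertexSet := hfv q hp x hs
      have hx2 : x ∈ q'.vertexSet := hfv q' hp' x (by rw [← heq]; exact hs)
      have hxry : x ∈ ({r, y} : Set V) := hint ▸ Set.mem_inter hx1 hx2
      have hxint : x ∈ (f q hp).internal := hselv x hs
      rcases hxry with hx | hx
      · exact hxint.2 (by rw [hPpath.2.1]; simp [hx])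
      · exact hxint.2 (by rw [hPpath.2.1, hPpath.2.2]; simp [hx])
    | inr e =>
      have he1 : e ∈ q.edges := hfe q hp e hs
      have he2 : e ∈ q'.edges := hfe q' hp' e (by rw [← heq]; exact hs)
      have hfst : e.1 ∈ ({r, y} : Set V) :=
        hint ▸ Set.mem_inter (q.edge_mem he1).1 (q'.edge_mem he2).1
      have hsnd : e.2 ∈ ({r, y} : Set V) :=
        hint ▸ Set.mem_inter (q.edge_mem he1).2 (q'.edge_mem he2).2
      have hne12 : e.1 ≠ e.2 := q.edge_ne he1
      have h2r : e.2 ≠ r := by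
        have := q.snd_ne_first he1; rwa [hp.2.1] at this
      have h2y : e.2 = y := by
        rcases hsnd with h | h
        · exact absurd h h2r
        · exact h
      have h1r : e.1 = r := by
        rcases hfst with h | h
        · exact h
        · exact absurd (h.trans h2y.symm) hne12
      have hv1 : q.verts = [e.1, e.2] :=
        q.verts_eq_pair he1 (by rw [h1r, hp.2.1]) (by rw [h2y, hp.2.2])
      have hv2 : q'.verts = [e.1, e.2] :=
        q'.verts_eq_pair he2 (by rw [h1r, hp'.2.1]) (by rw [h2y, hp'.2.2])
      exact hne (DiPath.ext' (hv1.trans hv2.symm))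
  refine Set.ncard_le_ncard_of_injOn g (fun q hq1 => ?_) key hfin
  have hp := hQ.1 q hq1
  rw [hg]; simp only [dif_pos hp]
  exact hfmem q hp

end Systems


section Key
variable {V : Type u} {D L : Set (V × V)} {r y : V}

/-- Key dichotomy: if some `D`-edge into `y` is missing from `L`, then the
Erdős–Menger system for `y` lying in `L` must be infinite. -/
theorem em_infinite (hq : IsQuasiFlame D r) (hsub : L ⊆ D)
    {Ps : Set (DiPath V)} (hPs : EMSystem D r y Ps) (hlies : LiesIn Ps L)
    (hyr : y ≠ r) {x : V} (hxyD : (x, y) ∈ D) (hxyL : (x, y) ∉ L) : Ps.Infinite := by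
  intro hfin
  have hry : r ≠ y := fun h => hyr h.symm
  set m := Ps.ncard with hm
  -- first: inEdges D y is finite
  have hinfin : (inEdges D y).Finite := by
    by_contra hinf
    replace hinf : (inEdges D y).Infinite := hinf
    obtain ⟨J, hJsub, hJfin, hJcard⟩ := hinf.exists_subset_ncard_eq (m + 1)
    obtain ⟨QJ, hQJ, hQJlast⟩ := hq y hyr J hJsub hJfin
    have h1 : QJ.ncard = m + 1 := by
      rw [← hQJ.ncard_lastEdges hry, hQJlast, hJcard]
    have h2 : QJ.ncard ≤ m := hit_ncard_le hry hQJ hPs hfin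
    omega
  -- now the full fan case
  obtain ⟨QJ, hQJ, hQJlast⟩ := hq y hyr (inEdges D y) (fun e he => he) hinfin
  have hle1 : (inEdges D y).ncard ≤ m := by
    rw [← hQJlast, hQJ.ncard_lastEdges hry]
    exact hit_ncard_le hry hQJ hPs hfin
  have himg : DiPath.lastE '' Ps ⊆ inEdges D y := by
    rintro e ⟨P, hP, rfl⟩
    exact hPs.1.lastE_mem_inEdges hry hP
  have hle2 : m ≤ (DiPath.lastE '' Ps).ncard := by
    rw [Set.ncard_image_of_injOn (hPs.1.lastE_injOn hry)]
  have heq : DiPath.lastE '' Ps = inEdges D y :=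
    Set.eq_of_subset_of_ncard_le himg (le_trans hle1 hle2) hinfin
  have hmem : (x, y) ∈ DiPath.lastE '' Ps := by rw [heq]; exact ⟨hxyD, rfl⟩
  obtain ⟨P, hP, hPe⟩ := hmem
  have hfl : P.first ≠ P.last := by
    rw [(hPs.1.1 P hP).2.1, (hPs.1.1 P hP).2.2]; exact hry
  exact hxyL (hlies P hP (hPe ▸ P.lastE_mem hfl))

/-- From an infinite internally disjoint system one can pick a member avoiding
any finite set not containing `r`, `y`. -/
theorem exists_avoiding {Ps : Set (DiPath V)} (hPs : IntDisjSystem D r y Ps)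
    (hinf : Ps.Infinite) {X : Set V} (hX : X.Finite) (hrX : r ∉ X) (hyX : y ∉ X) :
    ∃ P ∈ Ps, ∀ z ∈ X, z ∉ P.vertexSet := by
  classical
  set Bad : Set (DiPath V) := {P ∈ Ps | ∃ z ∈ X, z ∈ P.vertexSet} with hBad
  have hchoice : ∀ P ∈ Bad, ∃ z, z ∈ X ∧ z ∈ P.vertexSet := fun P hP => by
    obtain ⟨z, hz1, hz2⟩ := hP.2; exact ⟨z, hz1, hz2⟩
  choose wit hwit1 hwit2 using hchoice
  have hinj : Set.InjOn (fun P => if h : P ∈ Bad then wit P h else r) Bad := by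
    intro P hP P' hP' heq
    by_contra hne
    simp only [dif_pos hP, dif_pos hP'] at heq
    have h1 : wit P hP ∈ P.vertexSet ∩ P'.vertexSet :=
      ⟨hwit2 P hP, by rw [heq]; exact hwit2 P' hP'⟩
    rw [hPs.2 P hP.1 P' hP'.1 hne] at h1
    rcases h1 with h | h
    · exact hrX (h ▸ hwit1 P hP)
    · exact hyX (h ▸ hwit1 P hP)
  have hBadfin : Bad.Finite := by
    refine Set.Finite.of_finite_image (hX.subset ?_) hinj
    rintro z ⟨P, hP, rfl⟩
    simp only [dif_pos hP]
    exact hwit1 P hP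
  obtain ⟨P, hP⟩ := (hinf.diff hBadfin).nonempty
  refine ⟨P, hP.1, fun z hz hzP => hP.2 ⟨hP.1, z, hz, hzP⟩⟩

end Key


section StepSec
variable {V : Type u}

theorem lastEdge_suffix {P : DiPath V} {t s0 : List V} (hdec : t ++ s0 = P.verts)
    (hs0 : s0 ≠ []) (hne2 : s0.head hs0 ≠ s0.getLast hs0) :
    P.lastEdge = {e | e ∈ s0.zip s0.tail ∧ some e.2 = s0.getLast?} := by
  have hnd : (t ++ s0).Nodup := by rw [hdec]; exact P.nodup
  ext e
  simp only [DiPath.lastEdge, DiPath.edges, DiPath.last, Set.mem_setOf_eq]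
  have h2 : (e.2 = P.verts.getLast P.ne) ↔ (some e.2 = P.verts.getLast?) := by
    rw [List.getLast?_eq_getLast P.ne]
    exact ⟨congrArg some, Option.some_inj.1⟩
  rw [h2, ← hdec, List.getLast?_append_of_ne_nil _ hs0]
  constructor
  · rintro ⟨he, hel⟩
    refine ⟨?_, hel⟩
    have hel' : e.2 = s0.getLast hs0 := by
      rw [List.getLast?_eq_getLast hs0] at hel
      exact Option.some_inj.1 hel
    rcases zipTail_append.1 he with h | h | ⟨ht', hs', h⟩
    · exfalso
      have h2t : e.2 ∈ t := (mem_of_mem_zipTail h).2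
      have hdisj := (List.nodup_append.1 hnd).2.2
      exact hdisj _ h2t _ (List.getLast_mem hs0) hel'
    · exact h
    · exfalso
      apply hne2
      have : e.2 = s0.head hs0 := by rw [h]
      rw [← this, hel']
  · rintro ⟨he, hel⟩
    exact ⟨zipTail_append.2 (Or.inr (Or.inl he)), hel⟩

theorem step_lemma {D L : Set (V × V)} {r v : V}
    (hroot : IsRooted D r) (hq : IsQuasiFlame D r) (hL : IsLarge D L r)
    (hvr : v ≠ r) {I : Set (V × V)} (hIL : I ⊆ inEdges L v)
    {Q : Set (DiPath V)} (hQ : IntDisjSystem D r v Q) (hlast : lastEdges Q = I)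
    (hQfin : Q.Finite)
    (hbad : ¬ (⋃ P ∈ Q, P.edges) ⊆ L) :
    ∃ Q' : Set (DiPath V), IntDisjSystem D r v Q' ∧ lastEdges Q' = I ∧
      ((⋃ P ∈ Q', P.edges) \ L) ⊂ ((⋃ P ∈ Q, P.edges) \ L) := by
  classical
  have hrv : r ≠ v := fun h => hvr h.symm
  rw [Set.not_subset] at hbad
  obtain ⟨e₀, he₀, he₀L⟩ := hbad
  rw [Set.mem_iUnion₂] at he₀
  obtain ⟨q, hqQ, he₀q⟩ := he₀
  have hqpath : IsPath D r v q := hQ.1 q hqQ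
  obtain ⟨x, y, hxye, hxyL, hyq, hclean⟩ :=
    exists_bad_clean_suffix L q.verts q.nodup e₀ he₀q he₀L
  have hxyD : (x, y) ∈ D := hqpath.1 hxye
  have hyr : y ≠ r := by
    rintro rfl
    have h1 : (x, y) ∈ inEdges D y := ⟨hxyD, rfl⟩
    rw [hroot] at h1
    exact h1
  have hfl : q.first ≠ q.last := by rw [hqpath.2.1, hqpath.2.2]; exact hrv
  have hyv : y ≠ v := by
    rintro rfl
    have hle : (x, y) = q.lastE := q.eq_lastE hfl hxye (by rw [hqpath.2.2])
    have hmem : (x, y) ∈ lastEdges Q := by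
      refine Set.mem_biUnion hqQ ?_
      rw [q.lastEdge_eq hfl, hle]
      rfl
    rw [hlast] at hmem
    exact hxyL (hIL hmem).1
  obtain ⟨Ps, hEM, hlies⟩ := hL.2 y hyr
  have hPsinf : Ps.Infinite := em_infinite hq hL.1 hEM hlies hyr hxyD hxyL
  set X : Set V := ((⋃ P ∈ Q, P.vertexSet) ∪ {v}) \ {r, y} with hX
  have hXfin : X.Finite := by
    exact Set.Finite.diff (Set.Finite.union
      (hQfin.biUnion (fun P _ => P.verts.finite_toSet)) (Set.finite_singleton v))
  have hrX : r ∉ X := by simp [hX]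
  have hyX : y ∉ X := by simp [hX]
  obtain ⟨π, hπPs, hπavoid⟩ := exists_avoiding hEM.1 hPsinf hXfin hrX hyX
  have hπpath : IsPath D r y π := hEM.1.1 π hπPs
  have hπL : IsPathIn L π := hlies π hπPs
  have hπfl : π.first ≠ π.last := by
    rw [hπpath.2.1, hπpath.2.2]; exact fun h => hyr h.symm
  -- the suffix s of q from y on
  set s : List V := q.verts.dropWhile (fun z => decide (z ≠ y)) with hs
  have hsne : s ≠ [] := by
    rw [hs]
    intro h
    rw [List.dropWhile_eq_nil_iff] at h
    simpa using h y hyq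
  have hshead : s.head hsne = y := by
    have := List.head_dropWhile_not (fun z => decide (z ≠ y)) (hs ▸ hsne)
    simpa [hs] using this
  have hsnd : s.Nodup := q.nodup.sublist (hs ▸ (List.dropWhile_suffix _).sublist)
  have hdecomp : q.verts.takeWhile (fun z => decide (z ≠ y)) ++ s = q.verts := by
    rw [hs]; exact List.takeWhile_append_dropWhile
  have hsq : ∀ z ∈ s, z ∈ q.verts :=
    fun z hz => (hs ▸ (List.dropWhile_suffix (l := q.verts) (fun z => decide (z ≠ y))).sublist).subset hz
  have hslast? : s.getLast? = some v := by
    have h1 : q.verts.getLast? = some v := by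
      rw [List.getLast?_eq_getLast q.ne, ← hqpath.2.2]
      rfl
    rw [← hdecomp, List.getLast?_append_of_ne_nil _ hsne] at h1
    exact h1
  have hslast : s.getLast hsne = v := by
    have := hslast?
    rw [List.getLast?_eq_getLast hsne] at this
    exact Option.some_inj.1 this
  have hrs : r ∉ s := by
    have hqv : q.first :: q.verts.tail = q.verts := List.cons_head_tail q.ne
    have hdw : s = q.verts.tail.dropWhile (fun z => decide (z ≠ y)) := by
      have hpa : (fun z => decide (z ≠ y)) q.first = true := by
        simp only [decide_eq_true_eq]
        rw [hqpath.2.1]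
        exact fun hh => hyr hh.symm
      conv_lhs => rw [hs, ← hqv]
      exact List.dropWhile_cons_of_pos hpa
    intro hr
    have hrt : r ∈ q.verts.tail :=
      ((List.dropWhile_suffix _).sublist).subset (hdw ▸ hr)
    have hnd : (q.first :: q.verts.tail).Nodup := by rw [hqv]; exact q.nodup
    rw [hqpath.2.1] at hnd
    exact (List.nodup_cons.1 hnd).1 hrt
  have hsedges : ∀ e ∈ s.zip s.tail, e ∈ q.edges := by
    intro e he
    show e ∈ q.verts.zip q.verts.tail
    rw [← hdecomp]
    exact zipTail_append.2 (Or.inr (Or.inl he))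
  -- the prefix d of π
  set d : List V := π.verts.dropLast with hd
  have hdne : d ≠ [] := π.dropLast_ne hπfl
  have hddecomp : d ++ [π.verts.getLast π.ne] = π.verts := List.dropLast_append_getLast π.ne
  have hdnodup : d.Nodup := π.nodup.sublist (List.dropLast_sublist _)
  have hdsubπ : ∀ z ∈ d, z ∈ π.verts := fun z hz => (List.dropLast_sublist _).subset hz
  have hglπ : π.verts.getLast π.ne = y := by rw [← hπpath.2.2]; rfl
  have hydn : y ∉ d := by
    have hnd : (d ++ [π.verts.getLast π.ne]).Nodup := by rw [hddecomp]; exact π.nodup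
    have hdisj := (List.nodup_append.1 hnd).2.2
    intro hyd
    exact hdisj _ hyd _ (List.mem_singleton.2 rfl) hglπ.symm
  have hdhead : d.head hdne = r := by
    cases hv : π.verts with
    | nil => exact absurd hv π.ne
    | cons a t =>
      have htne : t ≠ [] := by
        intro h
        apply hπfl
        unfold DiPath.first DiPath.last
        simp only [hv, h]
        simp
      have hda : d = a :: t.dropLast := by
        rw [hd, hv]
        exact List.dropLast_cons_of_ne_nil htne
      have hfa : π.first = a := by unfold DiPath.first; simp only [hv]; rfl
      have h1 : d.head? = some a := by rw [hda]; rfl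
      rw [List.head?_eq_head hdne] at h1
      rw [Option.some_inj.1 h1, ← hfa]
      exact hπpath.2.1
  -- the new path
  have hdisjds : ∀ z ∈ d, z ∉ s := by
    intro z hzd hzs
    by_cases hzr : z = r
    · exact hrs (hzr ▸ hzs)
    by_cases hzy : z = y
    · exact hydn (hzy ▸ hzd)
    have hzX : z ∈ X := ⟨Or.inl (Set.mem_biUnion hqQ (hsq z hzs)), by simp [hzr, hzy]⟩
    exact hπavoid z hzX (hdsubπ z hzd)
  have hwnodup : (d ++ s).Nodup := List.Nodup.append hdnodup hsnd hdisjds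
  have hwne : d ++ s ≠ [] := by simp [hdne]
  set q' : DiPath V := ⟨d ++ s, hwne, hwnodup⟩ with hq'def
  have hq'verts : q'.verts = d ++ s := rfl
  have hq'first : q'.first = r := by
    show (d ++ s).head hwne = r
    rw [← hdhead]
    exact List.head_append_of_ne_nil hdne
  have hq'last : q'.last = v := by
    have h1 : (d ++ s).getLast? = some v := by
      rw [List.getLast?_append_of_ne_nil _ hsne, hslast?]
    show (d ++ s).getLast hwne = v
    rw [List.getLast?_eq_getLast hwne] at h1
    exact Option.some_inj.1 h1
  have hq'edges : q'.edges ⊆ L := by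
    intro e he
    rcases zipTail_append.1 he with h | h | ⟨ht, hs', h⟩
    · apply hπL
      show e ∈ π.verts.zip π.verts.tail
      rw [← hddecomp]
      exact zipTail_append.2 (Or.inl h)
    · exact hclean e h
    · have hcross : e = π.lastE := by
        rw [h, DiPath.lastE, π.penult_eq hπfl]
        have : s.head hs' = π.last := by
          rw [hshead]
          exact hπpath.2.2.symm
        rw [this]
      rw [hcross]
      exact hπL (π.lastE_mem hπfl)
  have hkey : ∀ q'' ∈ Q, q'' ≠ q → q'.vertexSet ∩ q''.vertexSet = {r, v} := by
    intro q'' hq''Q hq''ne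
    have hq''path := hQ.1 q'' hq''Q
    have hqq'' : q.vertexSet ∩ q''.vertexSet = {r, v} :=
      hQ.2 q hqQ q'' hq''Q (fun h => hq''ne h.symm)
    ext z
    constructor
    · rintro ⟨hz1, hz2⟩
      have hz1' : z ∈ d ∨ z ∈ s := by
        have : z ∈ d ++ s := hz1
        simpa using this
      rcases hz1' with hzd | hzs
      · by_cases hzr : z = r
        · exact Or.inl hzr
        by_cases hzy : z = y
        · exfalso
          have hyy : y ∈ q.vertexSet ∩ q''.vertexSet := ⟨hyq, hzy ▸ hz2⟩
          rw [hqq''] at hyy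
          rcases hyy with h | h
          · exact hyr h
          · exact hyv h
        have hzX : z ∈ X := ⟨Or.inl (Set.mem_biUnion hq''Q hz2), by simp [hzr, hzy]⟩
        exact absurd (hdsubπ z hzd) (hπavoid z hzX)
      · have hzz : z ∈ q.vertexSet ∩ q''.vertexSet := ⟨hsq z hzs, hz2⟩
        rw [hqq''] at hzz
        exact hzz
    · rintro (rfl | rfl)
      · exact ⟨hq'first ▸ q'.first_mem, hq''path.2.1 ▸ q''.first_mem⟩
      · exact ⟨hq'last ▸ q'.last_mem, hq''path.2.2 ▸ q''.last_mem⟩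
  have hq'path : IsPath D r v q' :=
    ⟨fun e he => hL.1 (hq'edges he), hq'first, hq'last⟩
  refine ⟨insert q' (Q \ {q}), ⟨?_, ?_⟩, ?_, ?_⟩
  · rintro P (rfl | ⟨hP, -⟩)
    · exact hq'path
    · exact hQ.1 P hP
  · rintro P₁ (rfl | ⟨h₁, h₁'⟩) P₂ (rfl | ⟨h₂, h₂'⟩) hne
    · exact absurd rfl hne
    · exact hkey P₂ h₂ (by simpa using h₂')
    · rw [Set.inter_comm]
      exact hkey P₁ h₁ (by simpa using h₁')
    · exact hQ.2 P₁ h₁ P₂ h₂ hne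
  · -- lastEdges
    have hleq' : q'.lastEdge = {e | e ∈ s.zip s.tail ∧ some e.2 = s.getLast?} :=
      lastEdge_suffix (t := d) (s0 := s) rfl hsne (by rw [hshead, hslast]; exact hyv)
    have hleq : q.lastEdge = {e | e ∈ s.zip s.tail ∧ some e.2 = s.getLast?} :=
      lastEdge_suffix (t := q.verts.takeWhile (fun z => decide (z ≠ y))) (s0 := s)
        hdecomp hsne (by rw [hshead, hslast]; exact hyv)
    have hQins : Q = insert q (Q \ {q}) := by
      rw [Set.insert_diff_singleton, Set.insert_eq_self.2 hqQ]
    rw [← hlast]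
    show ⋃ P ∈ insert q' (Q \ {q}), P.lastEdge = lastEdges Q
    rw [Set.biUnion_insert, hleq', ← hleq]
    conv_rhs => rw [lastEdges, hQins, Set.biUnion_insert]
  · rw [Set.ssubset_iff_of_subset]
    · exact ⟨(x, y), ⟨Set.mem_biUnion hqQ hxye, hxyL⟩, by
        intro hcon
        obtain ⟨hmem, -⟩ := hcon
        rw [Set.mem_iUnion₂] at hmem
        obtain ⟨P, hP, hPe⟩ := hmem
        rcases hP with rfl | ⟨hPQ, hPne⟩
        · exact hxyL (hq'edges hPe)
        · have hPpath := hQ.1 P hPQ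
          have hyy : y ∈ P.vertexSet ∩ q.vertexSet :=
            ⟨(P.edge_mem hPe).2, hyq⟩
          rw [hQ.2 P hPQ q hqQ (by simpa using hPne)] at hyy
          rcases hyy with h | h
          · exact hyr h
          · exact hyv h⟩
    · rintro e ⟨hee, heL⟩
      rw [Set.mem_iUnion₂] at hee
      obtain ⟨P, hP, hPe⟩ := hee
      rcases hP with rfl | ⟨hPQ, -⟩
      · exact absurd (hq'edges hPe) heL
      · exact ⟨Set.mem_biUnion hPQ hPe, heL⟩

end StepSec

/-- If `D` is a quasi-vertex-flame and `L` is `D`-vertex-large, then `L` is a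
quasi-vertex-flame as well. -/
theorem key_lemma1 {V : Type u} [Infinite V] (r : V) (D L : Set (V × V))
    (hroot : IsRooted D r) (hq : IsQuasiFlame D r) (hL : IsLarge D L r) :
    IsQuasiFlame L r := by
  intro v hvr I hIL hIfin
  have hrv : r ≠ v := fun h => hvr h.symm
  have hID : I ⊆ inEdges D v := fun e he => ⟨hL.1 (hIL he).1, (hIL he).2⟩
  have hedf : ∀ P : DiPath V, P.edges.Finite :=
    fun P => (P.verts.zip P.verts.tail).finite_toSet
  have finish : ∀ Q : Set (DiPath V), IntDisjSystem D r v Q → lastEdges Q = I →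
      (⋃ P ∈ Q, P.edges) ⊆ L → I ∈ GSet L r v := by
    intro Q hQ hlast hsubL
    exact ⟨Q, ⟨fun P hP => ⟨fun e he => hsubL (Set.mem_biUnion hP he),
      (hQ.1 P hP).2.1, (hQ.1 P hP).2.2⟩, hQ.2⟩, hlast⟩
  suffices h : ∀ n : ℕ, ∀ Q : Set (DiPath V), IntDisjSystem D r v Q → lastEdges Q = I →
      ((⋃ P ∈ Q, P.edges) \ L).ncard ≤ n → I ∈ GSet L r v by
    obtain ⟨Q₀, hQ₀, hlast₀⟩ := hq v hvr I hID hIfin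
    exact h _ Q₀ hQ₀ hlast₀ le_rfl
  intro n
  induction n with
  | zero =>
    intro Q hQ hlast hn
    have hQfin : Q.Finite := hQ.finite_of_lastEdges hrv (by rw [hlast]; exact hIfin)
    have hbfin : ((⋃ P ∈ Q, P.edges) \ L).Finite :=
      Set.Finite.diff (hQfin.biUnion (fun P _ => hedf P))
    have h0 : ((⋃ P ∈ Q, P.edges) \ L).ncard = 0 := Nat.le_zero.1 hn
    have hempty : (⋃ P ∈ Q, P.edges) \ L = ∅ := (Set.ncard_eq_zero hbfin).1 h0
    exact finish Q hQ hlast (by rwa [Set.diff_eq_empty] at hempty)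
  | succ n ih =>
    intro Q hQ hlast hn
    by_cases hb : (⋃ P ∈ Q, P.edges) ⊆ L
    · exact finish Q hQ hlast hb
    · have hQfin : Q.Finite := hQ.finite_of_lastEdges hrv (by rw [hlast]; exact hIfin)
      obtain ⟨Q', hQ', hlast', hss⟩ := step_lemma hroot hq hL hvr hIL hQ hlast hQfin hb
      have hbfin : ((⋃ P ∈ Q, P.edges) \ L).Finite :=
        Set.Finite.diff (hQfin.biUnion (fun P _ => hedf P))
      have hlt : ((⋃ P ∈ Q', P.edges) \ L).ncard < ((⋃ P ∈ Q, P.edges) \ L).ncard :=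
        Set.ncard_lt_ncard hss hbfin
      exact ih Q' hQ' hlast' (by omega)

end FlamePaper
end

section
/- (Pym's linking theorem) Let D be a digraph and let P and Q be systems of pairwise disjoint X→Y paths in D for some vertex sets X and Y. Then there is a system R of pairwise disjoint X→Y paths such that the set of first vertices of R contains the set of first vertices of P, and the set of last vertices of R contains the set of last vertices of Q. -/
namespace FlamePaper

universe u
variable {V : Type u}

section PymAux
open scoped Classical

namespace PymAux

variable {V : Type u}

theorem mem_of_head? {l : List V} {a : V} (h : l.head? = some a) : a ∈ l := by
  cases l with
  | nil => simp at h
  | cons x xs => simp at h; subst h; exact List.mem_cons_self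

theorem mem_of_getLast? {l : List V} {a : V} (h : l.getLast? = some a) : a ∈ l := by
  have hne : l ≠ [] := by rintro rfl; simp at h
  rw [List.getLast?_eq_getLast hne] at h
  rw [← Option.some.inj h]
  exact List.getLast_mem hne

theorem ne_nil_of_head? {l : List V} {a : V} (h : l.head? = some a) : l ≠ [] := by
  rintro rfl; simp at h

theorem ne_nil_of_getLast? {l : List V} {a : V} (h : l.getLast? = some a) : l ≠ [] := by
  rintro rfl; simp at h

theorem head?_of_prefix {H l : List V} (hp : H <+: l) (hH : H ≠ []) : l.head? = H.head? := by
  obtain ⟨s, rfl⟩ := hp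
  cases H with
  | nil => exact absurd rfl hH
  | cons a t => simp

theorem getLast?_of_suffix {t l : List V} (h : t <:+ l) (ht : t ≠ []) :
    l.getLast? = t.getLast? := by
  obtain ⟨s, rfl⟩ := h
  rw [List.getLast?_append]
  rw [List.getLast?_eq_getLast ht]
  rfl

theorem mem_zip_cons {a : V} {l : List V} {e : V × V} (he : e ∈ l.zip l.tail) :
    e ∈ (a :: l).zip l := by
  cases l with
  | nil => simp at he
  | cons b l' => exact List.mem_cons_of_mem _ he

theorem zip_mem_of_suffix {t l : List V} (h : t <:+ l) {e : V × V}
    (he : e ∈ t.zip t.tail) : e ∈ l.zip l.tail := by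
  obtain ⟨s, rfl⟩ := h
  induction s with
  | nil => exact he
  | cons a s ih => exact mem_zip_cons ih

theorem mem_zip_append_left {H u' : List V} {e : V × V}
    (h : e ∈ H.zip H.tail) : e ∈ (H ++ u').zip (H ++ u').tail := by
  induction H with
  | nil => simp at h
  | cons a H ih =>
    cases H with
    | nil => simp at h
    | cons b H2 =>
      simp only [List.cons_append, List.tail_cons, List.zip_cons_cons, List.mem_cons] at h ⊢
      rcases h with h | h
      · exact Or.inl h
      · exact Or.inr (ih h)

theorem zip_mem_of_prefix {H l : List V} (hp : H <+: l) {e : V × V}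
    (he : e ∈ H.zip H.tail) : e ∈ l.zip l.tail := by
  obtain ⟨s, rfl⟩ := hp; exact mem_zip_append_left he

theorem zip_glue {H t : List V} (hH : H ≠ []) (ht : t.head? = H.getLast?) {e : V × V}
    (h : e ∈ (H ++ t.tail).zip (H ++ t.tail).tail) :
    e ∈ H.zip H.tail ∨ e ∈ t.zip t.tail := by
  induction H with
  | nil => exact absurd rfl hH
  | cons a H ih =>
    cases H with
    | nil =>
      right
      have hta : t = a :: t.tail := by
        cases t with
        | nil => simp at ht
        | cons x xs => simp at ht; simp [ht]
      rw [hta]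
      simpa using h
    | cons b H2 =>
      have ht' : t.head? = (b :: H2).getLast? := by
        rw [ht]; simp [List.getLast?_cons]
      simp only [List.cons_append, List.tail_cons, List.zip_cons_cons, List.mem_cons] at h ⊢
      rcases h with h | h
      · exact Or.inl (Or.inl h)
      · rcases ih (by simp) ht' (by
            simpa only [List.cons_append, List.tail_cons, List.zip_cons_cons] using h) with
          h' | h'
        · exact Or.inl (Or.inr h')
        · exact Or.inr h'

theorem getLast?_glue {H t : List V} (hH : H ≠ []) (ht : t.head? = H.getLast?) :
    (H ++ t.tail).getLast? = t.getLast? := by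
  cases t with
  | nil =>
    exfalso
    rw [List.getLast?_eq_getLast hH] at ht
    simp at ht
  | cons x xs =>
    cases xs with
    | nil =>
      simp only [List.tail_cons, List.append_nil, List.getLast?_singleton]
      simp at ht
      rw [ht, List.getLast?_eq_getLast hH]
    | cons y ys =>
      simp only [List.tail_cons]
      rw [List.getLast?_append]
      have : (y :: ys).getLast? = (x :: y :: ys).getLast? := by
        simp [List.getLast?_cons]
      rw [← this]
      rw [List.getLast?_eq_getLast (by simp : (y :: ys) ≠ [])]
      rfl

theorem getLast?_take_indexOf {l : List V} {a : V} (h : a ∈ l) :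
    (l.take (l.idxOf a + 1)).getLast? = some a := by
  induction l with
  | nil => simp at h
  | cons b l ih =>
    by_cases hba : b = a
    · subst hba
      simp [List.idxOf_cons_self]
    · have ha : a ∈ l := by
        rcases List.mem_cons.mp h with h' | h'
        · exact absurd h'.symm hba
        · exact h'
      have hidx : (b :: l).idxOf a = l.idxOf a + 1 := by
        simp [List.idxOf_cons, hba]
      rw [hidx]
      rw [List.take_succ_cons]
      have hne : l.take (l.idxOf a + 1) ≠ [] := by
        have : l ≠ [] := by rintro rfl; simp at ha
        simp [List.take_eq_nil_iff, this]
      rw [List.getLast?_cons]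
      rw [ih ha]
      rfl

theorem le_indexOf_of_mem_drop {l : List V} (hn : l.Nodup) {x : V} {n : ℕ}
    (h : x ∈ l.drop n) : n ≤ l.idxOf x := by
  by_contra hlt
  push_neg at hlt
  have hxl : x ∈ l := List.mem_of_mem_drop h
  have h1 : l.idxOf x < l.length := List.idxOf_lt_length_iff.mpr hxl
  have hx : x ∈ l.take n := by
    refine List.mem_iff_getElem.mpr ⟨l.idxOf x, ?_, ?_⟩
    · simpa [List.length_take] using ⟨hlt, h1⟩
    · rw [List.getElem_take]; exact List.getElem_idxOf h1
  have hnd : (l.take n ++ l.drop n).Nodup := by rw [List.take_append_drop]; exact hn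
  exact (List.nodup_append'.mp hnd).2.2 hx h

theorem head_not_mem_tail_of_suffix {t l : List V} (hn : l.Nodup) (ht : t <:+ l) {a : V}
    (ha : l.head? = some a) : a ∉ t.tail := by
  obtain ⟨s, rfl⟩ := ht
  intro hmem
  have hmt : a ∈ t := List.mem_of_mem_tail hmem
  cases s with
  | nil =>
    cases t with
    | nil => simp at ha
    | cons x xs =>
      simp only [List.nil_append] at hn ha hmem
      simp at ha
      subst ha
      simp only [List.tail_cons] at hmem
      exact (List.nodup_cons.mp hn).1 hmem
  | cons b s =>
    have hab : b = a := by simpa using ha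
    subst hab
    have hn' : (b :: (s ++ t)).Nodup := by rw [List.cons_append] at hn; exact hn
    exact (List.nodup_cons.mp hn').1 (List.mem_append.mpr (Or.inr hmt))

theorem prefix_eq_of_getLast_mem {H l : List V} (hn : l.Nodup) (hp : H <+: l) {y : V}
    (hy : l.getLast? = some y) (hyH : y ∈ H) : H = l := by
  obtain ⟨s, rfl⟩ := hp
  cases s with
  | nil => simp
  | cons b s =>
    exfalso
    have hys : y ∈ b :: s := by
      have h2 : (H ++ b :: s).getLast? = (b :: s).getLast? :=
        getLast?_of_suffix ⟨H, rfl⟩ (by simp)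
      exact mem_of_getLast? (h2 ▸ hy)
    exact (List.nodup_append'.mp hn).2.2 hyH hys

theorem tail_eq_nil_of_head_eq_getLast {t l : List V} (hn : l.Nodup) (ht : t <:+ l)
    (h : t.head? = l.getLast?) (htne : t ≠ []) : t.tail = [] := by
  cases t with
  | nil => exact absurd rfl htne
  | cons x xs =>
    cases hxs : xs with
    | nil => rfl
    | cons y ys =>
      exfalso
      subst hxs
      have htn : (x :: y :: ys).Nodup := hn.sublist ht.sublist
      have h2 : l.getLast? = (x :: y :: ys).getLast? := getLast?_of_suffix ht (by simp)
      have h3 : (x :: y :: ys).getLast? = (y :: ys).getLast? := by simp [List.getLast?_cons]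
      have hx : (x : V) ∈ y :: ys := by
        apply mem_of_getLast?
        rw [← h3, ← h2, ← h]
        simp
      exact (List.nodup_cons.mp htn).1 hx

end PymAux
end PymAux
namespace PymAux
open scoped Classical

variable {V : Type u}

structure Coord (V : Type u) where
  head : List V
  att : Option (List V × DiPath V)

theorem Coord.ext' {c d : Coord V} (h1 : c.head = d.head) (h2 : c.att = d.att) : c = d := by
  cases c; cases d; cases h1; cases h2; rfl

def cle (c d : Coord V) : Prop :=
  d.head <+: c.head ∧ (d.head = c.head → c.att = d.att ∨ c.att = none)

theorem cle_refl (c : Coord V) : cle c c := ⟨List.prefix_refl _, fun _ => Or.inl rfl⟩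

theorem cle_trans {a b c : Coord V} (h1 : cle a b) (h2 : cle b c) : cle a c := by
  refine ⟨h2.1.trans h1.1, fun hca => ?_⟩
  have hcb : c.head = b.head := by
    apply h2.1.eq_of_length
    have l1 := h2.1.length_le
    have l2 := h1.1.length_le
    have : c.head.length = a.head.length := by rw [hca]
    omega
  have hba : b.head = a.head := by
    apply h1.1.eq_of_length
    rw [← hcb, hca]
  rcases h1.2 hba with h | h
  · rcases h2.2 hcb with h' | h'
    · exact Or.inl (h.trans h')
    · exact Or.inr (h.trans h')
  · exact Or.inr h

theorem cle_antisymm {c d : Coord V} (h1 : cle c d) (h2 : cle d c) : c = d := by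
  have hhead : d.head = c.head := by
    apply h1.1.eq_of_length
    exact le_antisymm h1.1.length_le h2.1.length_le
  refine Coord.ext' hhead.symm ?_
  rcases h1.2 hhead with h | h
  · exact h
  · rcases h2.2 hhead.symm with h' | h'
    · exact h'.symm
    · rw [h, h']

def crank (c : Coord V) : ℕ := 2 * c.head.length + (if c.att.isNone then 1 else 0)

theorem crank_le_of_cle {c d : Coord V} (h : cle c d) : crank d ≤ crank c := by
  have hl := h.1.length_le
  rcases lt_or_eq_of_le hl with hlt | heq
  · have h1 : crank d ≤ 2 * d.head.length + 1 := by unfold crank; split <;> omega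
    have h2 : 2 * c.head.length ≤ crank c := by unfold crank; split <;> omega
    omega
  · have hhead : d.head = c.head := h.1.eq_of_length heq
    rcases h.2 hhead with h' | h'
    · have : crank d = crank c := by unfold crank; rw [hhead, ← h']
      omega
    · unfold crank
      rw [hhead, h']
      simp only [Option.isNone_none, if_true]
      split <;> omega

theorem eq_of_cle_crank {c d : Coord V} (h : cle c d) (hr : crank d = crank c) : c = d := by
  have hl := h.1.length_le
  rcases lt_or_eq_of_le hl with hlt | heq
  · exfalso
    have h1 : crank d ≤ 2 * d.head.length + 1 := by unfold crank; split <;> omega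
    have h2 : 2 * c.head.length ≤ crank c := by unfold crank; split <;> omega
    omega
  · have hhead : d.head = c.head := h.1.eq_of_length heq
    refine Coord.ext' hhead.symm ?_
    rcases h.2 hhead with h' | h'
    · exact h'
    · unfold crank at hr
      rw [hhead, h'] at hr
      simp only [Option.isNone_none, if_true] at hr
      have hd : d.att.isNone := by
        by_contra hne
        rw [if_neg hne] at hr
        omega
      rw [h', Option.isNone_iff_eq_none.mp hd]

structure St (V : Type u) where
  sig : DiPath V → Coord V
  F : Set (DiPath V)

variable (Ps Qs : Set (DiPath V))

def Sle (s s' : St V) : Prop := (∀ P ∈ Ps, cle (s.sig P) (s'.sig P)) ∧ s.F ⊆ s'.F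

theorem Sle_refl (s : St V) : Sle Ps s s := ⟨fun P _ => cle_refl _, subset_rfl⟩

theorem Sle_trans {a b c : St V} (h1 : Sle Ps a b) (h2 : Sle Ps b c) : Sle Ps a c :=
  ⟨fun P hP => cle_trans (h1.1 P hP) (h2.1 P hP), h1.2.trans h2.2⟩

def Valid (s : St V) : Prop :=
  (∀ P ∈ Ps, (s.sig P).head ≠ [] ∧ (s.sig P).head <+: P.verts) ∧
  (∀ P ∈ Ps, (s.sig P).att = none → (s.sig P).head = P.verts) ∧
  (∀ P ∈ Ps, ∀ t Q, (s.sig P).att = some (t, Q) →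
      Q ∈ Qs ∧ Q ∉ s.F ∧ t ≠ [] ∧ t <:+ Q.verts ∧ t.head? = (s.sig P).head.getLast? ∧
      ∀ P' ∈ Ps, ∀ x ∈ t.tail, x ∉ (s.sig P').head) ∧
  (∀ P ∈ Ps, ∀ P' ∈ Ps, ∀ t t' Q, (s.sig P).att = some (t, Q) →
      (s.sig P').att = some (t', Q) → P = P') ∧
  (s.F ⊆ Qs ∧ ∀ Q ∈ s.F, ∀ P ∈ Ps, ∀ x ∈ Q.verts, x ∉ (s.sig P).head)

def ServedQ (s : St V) (Q : DiPath V) : Prop :=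
  Q ∈ s.F ∨ ∃ P ∈ Ps, ∃ t, (s.sig P).att = some (t, Q)

def initSt : St V := ⟨fun P => ⟨P.verts, none⟩, ∅⟩

theorem initSt_valid : Valid Ps Qs (initSt : St V) := by
  refine ⟨fun P _ => ⟨P.ne, List.prefix_refl _⟩, fun P _ _ => rfl, ?_, ?_, ?_⟩
  · intro P _ t Q h; simp [initSt] at h
  · intro P _ P' _ t t' Q h; simp [initSt] at h
  · exact ⟨by simp [initSt], by simp [initSt]⟩

end PymAux
namespace PymAux
open scoped Classical

variable {V : Type u} {Ps Qs : Set (DiPath V)}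

theorem chain_upper {C : Set (St V)} (hC : IsChain (Sle Ps) C) {s₁ s₂ : St V}
    (h1 : s₁ ∈ C) (h2 : s₂ ∈ C) : ∃ s₃ ∈ C, Sle Ps s₁ s₃ ∧ Sle Ps s₂ s₃ := by
  by_cases heq : s₁ = s₂
  · exact ⟨s₂, h2, heq ▸ Sle_refl Ps s₂, Sle_refl Ps s₂⟩
  · rcases hC h1 h2 heq with h | h
    · exact ⟨s₂, h2, h, Sle_refl Ps s₂⟩
    · exact ⟨s₁, h1, Sle_refl Ps s₁, h⟩

theorem chain_bound {C : Set (St V)} (hC : IsChain (Sle Ps) C)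
    (hv : ∀ s ∈ C, Valid Ps Qs s) (hne : C.Nonempty) :
    ∃ b, Valid Ps Qs b ∧ ∀ s ∈ C, Sle Ps s b := by
  classical
  -- for each P pick a chain element whose P-coordinate is maximal (minimal crank)
  have hex : ∀ P : DiPath V, ∃ s, s ∈ C ∧
      (P ∈ Ps → ∀ s' ∈ C, cle (s'.sig P) (s.sig P)) := by
    intro P
    by_cases hP : P ∈ Ps
    · set N : Set ℕ := {n | ∃ s ∈ C, crank (s.sig P) = n} with hN
      have hNne : N.Nonempty := ⟨crank (hne.choose.sig P), hne.choose, hne.choose_spec, rfl⟩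
      have hmem := Nat.sInf_mem hNne
      obtain ⟨s₀, hs₀, hs₀r⟩ := hmem
      refine ⟨s₀, hs₀, fun _ s' hs' => ?_⟩
      by_cases heq : s' = s₀
      · subst heq; exact cle_refl _
      · rcases hC hs' hs₀ heq with h | h
        · exact h.1 P hP
        · have hc := h.1 P hP
          have h1 : crank (s'.sig P) ∈ N := ⟨s', hs', rfl⟩
          have h2 := Nat.sInf_le h1
          have h3 := crank_le_of_cle hc
          have : crank (s'.sig P) = crank (s₀.sig P) := by omega
          rw [eq_of_cle_crank hc (by omega)]
          exact cle_refl _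
    · exact ⟨hne.choose, hne.choose_spec, fun h => absurd h hP⟩
  choose f hfC hfmax using hex
  set b : St V := ⟨fun P => ((f P).sig P), ⋃ s ∈ C, s.F⟩ with hb
  have hble : ∀ s ∈ C, Sle Ps s b := by
    intro s hs
    exact ⟨fun P hP => hfmax P hP s hs, fun Q hQ => Set.mem_biUnion hs hQ⟩
  -- stabilization: if s ∈ C is above f P, its P-coordinate equals b's
  have hstab : ∀ P ∈ Ps, ∀ s ∈ C, Sle Ps (f P) s → s.sig P = b.sig P := by
    intro P hP s hs hle
    exact cle_antisymm (hfmax P hP s hs) (hle.1 P hP)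
  refine ⟨b, ?_, hble⟩
  refine ⟨?_, ?_, ?_, ?_, ?_, ?_⟩
  · intro P hP; exact (hv (f P) (hfC P)).1 P hP
  · intro P hP h; exact (hv (f P) (hfC P)).2.1 P hP h
  · intro P hP t Q hatt
    have hVP := (hv (f P) (hfC P)).2.2.1 P hP t Q hatt
    refine ⟨hVP.1, ?_, hVP.2.2.1, hVP.2.2.2.1, hVP.2.2.2.2.1, ?_⟩
    · -- Q ∉ b.F
      intro hQF
      obtain ⟨s₀, hs₀, hQs₀⟩ := Set.mem_iUnion₂.mp hQF
      obtain ⟨s₃, hs₃, h31, h32⟩ := chain_upper hC hs₀ (hfC P)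
      have hcoord := hstab P hP s₃ hs₃ h32
      have hatt3 : (s₃.sig P).att = some (t, Q) := by rw [hcoord]; exact hatt
      exact ((hv s₃ hs₃).2.2.1 P hP t Q hatt3).2.1 (h31.2 hQs₀)
    · -- tail clean w.r.t. every head of b
      intro P' hP' x hx hxb
      obtain ⟨s₃, hs₃, h31, h32⟩ := chain_upper hC (hfC P) (hfC P')
      have hcoord := hstab P hP s₃ hs₃ h31
      have hcoord' := hstab P' hP' s₃ hs₃ h32
      have hatt3 : (s₃.sig P).att = some (t, Q) := by rw [hcoord]; exact hatt
      exact ((hv s₃ hs₃).2.2.1 P hP t Q hatt3).2.2.2.2.2 P' hP' x hx (by rw [hcoord']; exact hxb)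
  · intro P hP P' hP' t t' Q hatt hatt'
    obtain ⟨s₃, hs₃, h31, h32⟩ := chain_upper hC (hfC P) (hfC P')
    have hcoord := hstab P hP s₃ hs₃ h31
    have hcoord' := hstab P' hP' s₃ hs₃ h32
    exact (hv s₃ hs₃).2.2.2.1 P hP P' hP' t t' Q (by rw [hcoord]; exact hatt)
      (by rw [hcoord']; exact hatt')
  · intro Q hQ
    obtain ⟨s₀, hs₀, hQs₀⟩ := Set.mem_iUnion₂.mp hQ
    exact (hv s₀ hs₀).2.2.2.2.1 hQs₀
  · intro Q hQ P hP x hxQ hxb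
    obtain ⟨s₀, hs₀, hQs₀⟩ := Set.mem_iUnion₂.mp hQ
    obtain ⟨s₃, hs₃, h31, h32⟩ := chain_upper hC hs₀ (hfC P)
    have hcoord := hstab P hP s₃ hs₃ h32
    exact (hv s₃ hs₃).2.2.2.2.2 Q (h31.2 hQs₀) P hP x hxQ (by rw [hcoord]; exact hxb)

end PymAux
namespace PymAux
open scoped Classical

variable {V : Type u} {Ps Qs : Set (DiPath V)}

theorem step (hQsd : ∀ Q ∈ Qs, ∀ Q' ∈ Qs, Q ≠ Q' → Q.vertexSet ∩ Q'.vertexSet = ∅)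
    {m : St V} (hm : Valid Ps Qs m) {Q : DiPath V} (hQ : Q ∈ Qs) (hns : ¬ ServedQ Ps m Q) :
    ∃ s', Valid Ps Qs s' ∧ Sle Ps m s' ∧ ¬ Sle Ps s' m := by
  classical
  have hnF : Q ∉ m.F := fun h => hns (Or.inl h)
  have hnatt : ∀ P ∈ Ps, ∀ t, (m.sig P).att ≠ some (t, Q) :=
    fun P hP t h => hns (Or.inr ⟨P, hP, t, h⟩)
  set cl : List V := Q.verts.filter (fun v => decide (∃ P ∈ Ps, v ∈ (m.sig P).head)) with hcl
  by_cases hclnil : cl = []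
  · -- add Q as a full path
    refine ⟨⟨m.sig, insert Q m.F⟩, ?_, ?_, ?_⟩
    · refine ⟨hm.1, hm.2.1, ?_, hm.2.2.2.1, ?_, ?_⟩
      · intro P hP t Q' hatt
        have hV := hm.2.2.1 P hP t Q' hatt
        refine ⟨hV.1, ?_, hV.2.2.1, hV.2.2.2.1, hV.2.2.2.2.1, hV.2.2.2.2.2⟩
        intro hmem
        rcases Set.mem_insert_iff.mp hmem with h | h
        · exact hnatt P hP t (h ▸ hatt)
        · exact hV.2.1 h
      · exact Set.insert_subset hQ hm.2.2.2.2.1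
      · intro Q' hQ' P hP x hxQ' hxh
        rcases Set.mem_insert_iff.mp hQ' with h | h
        · subst h
          have : x ∈ cl := List.mem_filter.mpr ⟨hxQ', by simp; exact ⟨P, hP, hxh⟩⟩
          rw [hclnil] at this; simp at this
        · exact hm.2.2.2.2.2 Q' h P hP x hxQ' hxh
    · exact ⟨fun P _ => cle_refl _, Set.subset_insert _ _⟩
    · intro hle
      exact hnF (hle.2 (Set.mem_insert _ _))
  · -- attach Q at its last crossing with the current system
    have hclsub : ∀ v ∈ cl, v ∈ Q.verts ∧ ∃ P ∈ Ps, v ∈ (m.sig P).head := by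
      intro v hv
      have := List.mem_filter.mp hv
      refine ⟨this.1, by simpa using this.2⟩
    have hmax : ∃ v ∈ cl, ∀ w ∈ cl, Q.verts.idxOf w ≤ Q.verts.idxOf v := by
      obtain ⟨v, hv, hmax⟩ := cl.toFinset.exists_max_image (fun v => Q.verts.idxOf v)
        (by simpa [List.toFinset_eq_empty_iff] using hclnil)
      exact ⟨v, List.mem_toFinset.mp hv, fun w hw => hmax w (List.mem_toFinset.mpr hw)⟩
    obtain ⟨v, hvcl, hvmax⟩ := hmax
    obtain ⟨hvQ, P₀, hP₀, hvhead⟩ := hclsub v hvcl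
    set old := m.sig P₀ with hold
    set H' : List V := old.head.take (old.head.idxOf v + 1) with hH'
    set t : List V := Q.verts.drop (Q.verts.idxOf v) with ht
    have hH'last : H'.getLast? = some v := getLast?_take_indexOf hvhead
    have hH'pre : H' <+: old.head := List.take_prefix _ _
    have hH'ne : H' ≠ [] := ne_nil_of_getLast? hH'last
    have ht_suffix : t <:+ Q.verts := List.drop_suffix _ _
    have hidxlt : Q.verts.idxOf v < Q.verts.length := List.idxOf_lt_length_iff.mpr hvQ
    have ht_head : t.head? = some v := by
      rw [ht, List.head?_drop]
      rw [List.getElem?_eq_getElem hidxlt]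
      rw [List.getElem_idxOf hidxlt]
    have ht_ne : t ≠ [] := ne_nil_of_head? ht_head
    have htail_clean : ∀ P' ∈ Ps, ∀ x ∈ t.tail, x ∉ (m.sig P').head := by
      intro P' hP' x hx hxhead
      have hx' : x ∈ Q.verts.drop (Q.verts.idxOf v + 1) := by
        rw [ht, List.tail_drop] at hx; exact hx
      have hxQ : x ∈ Q.verts := List.mem_of_mem_drop hx'
      have hxcl : x ∈ cl := List.mem_filter.mpr ⟨hxQ, by simp; exact ⟨P', hP', hxhead⟩⟩
      have h1 := hvmax x hxcl
      have h2 := le_indexOf_of_mem_drop Q.nodup hx'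
      omega
    have hprefix₀ : old.head <+: P₀.verts := (hm.1 P₀ hP₀).2
    -- the new coordinate is above the old one
    have hcleold : cle old ⟨H', some (t, Q)⟩ := by
      refine ⟨hH'pre, ?_⟩
      intro hheads
      right
      -- H' = old.head, so old.head ends at v; if old had an attachment, its tail would
      -- start at v, but that tail is part of a member of Qs distinct from Q.
      rcases hatt : old.att with _ | p
      · rfl
      · exfalso
        obtain ⟨t₁, Q₁⟩ := p
        have hV := hm.2.2.1 P₀ hP₀ t₁ Q₁ hatt
        have hlast : old.head.getLast? = some v := by rw [← hheads]; exact hH'last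
        have hvt₁ : v ∈ t₁ := mem_of_head? (by rw [hV.2.2.2.2.1, hlast])
        have hvQ₁ : v ∈ Q₁.verts := hV.2.2.2.1.subset hvt₁
        have hQne : Q ≠ Q₁ := by
          rintro rfl
          exact hnatt P₀ hP₀ t₁ hatt
        have hdisj := hQsd Q hQ Q₁ hV.1 hQne
        have : v ∈ Q.vertexSet ∩ Q₁.vertexSet := ⟨hvQ, hvQ₁⟩
        rw [hdisj] at this
        exact this
    have hupd : ∀ P', P' ≠ P₀ →
          (Function.update m.sig P₀ (⟨H', some (t, Q)⟩ : Coord V) P') = m.sig P' :=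
        fun P' h => Function.update_of_ne h _ _
    have hheadsub : ∀ P' ∈ Ps, ∀ x,
          x ∈ (Function.update m.sig P₀ (⟨H', some (t, Q)⟩ : Coord V) P').head →
          x ∈ (m.sig P').head := by
      intro P' _ x hx
      by_cases h : P' = P₀
      · subst h
        rw [Function.update_self] at hx
        exact hH'pre.subset hx
      · rw [hupd P' h] at hx; exact hx
    refine ⟨⟨Function.update m.sig P₀ ⟨H', some (t, Q)⟩, m.F⟩, ?_, ?_, ?_⟩
    · -- validity
      refine ⟨?_, ?_, ?_, ?_, ?_, ?_⟩
      · intro P hP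
        dsimp only
        by_cases h : P = P₀
        · subst h
          rw [Function.update_self]
          exact ⟨hH'ne, hH'pre.trans hprefix₀⟩
        · rw [hupd P h]; exact hm.1 P hP
      · intro P hP hattn
        dsimp only at hattn ⊢
        by_cases h : P = P₀
        · subst h; rw [Function.update_self] at hattn; simp at hattn
        · rw [hupd P h] at hattn ⊢; exact hm.2.1 P hP hattn
      · intro P hP t' Q' hatt
        dsimp only at hatt ⊢
        by_cases h : P = P₀
        · subst h
          rw [Function.update_self] at hatt ⊢
          simp only at hatt
          have hts : t' = t ∧ Q' = Q := by
            have := Option.some.inj hatt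
            exact ⟨(congrArg Prod.fst this).symm, (congrArg Prod.snd this).symm⟩
          obtain ⟨rfl, rfl⟩ := hts
          refine ⟨hQ, hnF, ht_ne, ht_suffix, by rw [ht_head, hH'last], ?_⟩
          intro P' hP' x hx hxh
          exact htail_clean P' hP' x hx (hheadsub P' hP' x hxh)
        · rw [hupd P h] at hatt
          have hV := hm.2.2.1 P hP t' Q' hatt
          refine ⟨hV.1, hV.2.1, hV.2.2.1, hV.2.2.2.1, ?_, ?_⟩
          · rw [hupd P h]; exact hV.2.2.2.2.1
          · intro P' hP' x hx hxh
            exact hV.2.2.2.2.2 P' hP' x hx (hheadsub P' hP' x hxh)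
      · intro P hP P' hP' t₁ t₂ Q' hatt hatt'
        dsimp only at hatt hatt'
        by_cases h : P = P₀ <;> by_cases h' : P' = P₀
        · rw [h, h']
        · exfalso
          subst h
          rw [Function.update_self] at hatt
          simp only at hatt
          have : Q' = Q := (congrArg Prod.snd (Option.some.inj hatt)).symm
          subst this
          rw [hupd P' h'] at hatt'
          exact hnatt P' hP' t₂ hatt'
        · exfalso
          subst h'
          rw [Function.update_self] at hatt'
          simp only at hatt'
          have : Q' = Q := (congrArg Prod.snd (Option.some.inj hatt')).symm
          subst this
          rw [hupd P h] at hatt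
          exact hnatt P hP t₁ hatt
        · rw [hupd P h] at hatt
          rw [hupd P' h'] at hatt'
          exact hm.2.2.2.1 P hP P' hP' t₁ t₂ Q' hatt hatt'
      · exact hm.2.2.2.2.1
      · intro Q' hQ' P hP x hxQ' hxh
        dsimp only at hxh hQ'
        exact hm.2.2.2.2.2 Q' hQ' P hP x hxQ' (hheadsub P hP x hxh)
    · -- m ≤ s'
      refine ⟨?_, subset_rfl⟩
      intro P hP
      dsimp only
      by_cases h : P = P₀
      · subst h
        rw [Function.update_self]
        exact hcleold
      · rw [hupd P h]
        exact cle_refl _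
    · -- ¬ s' ≤ m
      intro hle
      have h1 := hle.1 P₀ hP₀
      simp only [Function.update_self] at h1
      have h2 : cle old ⟨H', some (t, Q)⟩ := hcleold
      have := cle_antisymm h2 h1
      have hatt : old.att = some (t, Q) := by rw [this]
      exact hnatt P₀ hP₀ t hatt

end PymAux
namespace PymAux
open scoped Classical

variable {V : Type u} {Ps Qs : Set (DiPath V)}

theorem exists_good (hQsd : ∀ Q ∈ Qs, ∀ Q' ∈ Qs, Q ≠ Q' → Q.vertexSet ∩ Q'.vertexSet = ∅) :
    ∃ m : St V, Valid Ps Qs m ∧ ∀ Q ∈ Qs, ServedQ Ps m Q := by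
  classical
  obtain ⟨m, hmax⟩ := exists_maximal_of_chains_bounded
    (α := {s : St V // Valid Ps Qs s}) (r := fun a b => Sle Ps a.1 b.1)
    (fun c hc => by
      by_cases hcne : c.Nonempty
      · have hchain : IsChain (Sle Ps) (Subtype.val '' c) := by
          rintro _ ⟨a, ha, rfl⟩ _ ⟨b, hb, rfl⟩ hne
          have hab : a ≠ b := fun h => hne (congrArg Subtype.val h)
          exact hc ha hb hab
        obtain ⟨b, hbv, hble⟩ := chain_bound (Qs := Qs) hchain
          (by rintro _ ⟨a, _, rfl⟩; exact a.2)
          (hcne.image _)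
        exact ⟨⟨b, hbv⟩, fun a ha => hble a.1 ⟨a, ha, rfl⟩⟩
      · exact ⟨⟨initSt, initSt_valid Ps Qs⟩, fun a ha =>
          absurd ⟨a, ha⟩ hcne⟩)
    (fun {a b c} h1 h2 => Sle_trans Ps h1 h2)
  refine ⟨m.1, m.2, ?_⟩
  intro Q hQ
  by_contra hns
  obtain ⟨s', hs'v, h1, h2⟩ := step hQsd m.2 hQ hns
  exact h2 (hmax ⟨s', hs'v⟩ h1)

end PymAux
namespace PymAux
open scoped Classical

variable {V : Type u}

theorem dipath_ext {P Q : DiPath V} (h : P.verts = Q.verts) : P = Q := by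
  cases P; cases Q; cases h; rfl

theorem head?_verts (P : DiPath V) : P.verts.head? = some P.first :=
  List.head?_eq_head P.ne

theorem getLast?_verts (P : DiPath V) : P.verts.getLast? = some P.last :=
  List.getLast?_eq_getLast P.ne

theorem first_eq_of_head? {P : DiPath V} {a : V} (h : P.verts.head? = some a) :
    P.first = a := by
  rw [head?_verts] at h; exact Option.some.inj h

theorem last_eq_of_getLast? {P : DiPath V} {a : V} (h : P.verts.getLast? = some a) :
    P.last = a := by
  rw [getLast?_verts] at h; exact Option.some.inj h

theorem first_mem_X {D : Set (V × V)} {X Y : Set V} {P : DiPath V}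
    (h : IsXYPath D X Y P) : P.first ∈ X := by
  have h1 : P.first ∈ P.vertexSet ∩ X := by
    rw [h.2.1]; exact Set.mem_singleton _
  exact h1.2

theorem last_mem_Y {D : Set (V × V)} {X Y : Set V} {P : DiPath V}
    (h : IsXYPath D X Y P) : P.last ∈ Y := by
  have h1 : P.last ∈ P.vertexSet ∩ Y := by
    rw [h.2.2]; exact Set.mem_singleton _
  exact h1.2

def rtl (c : Coord V) : List V :=
  match c.att with
  | none => []
  | some (t, _) => t.tail

theorem rtl_none {c : Coord V} (h : c.att = none) : rtl c = [] := by
  obtain ⟨hd, att⟩ := c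
  dsimp only at h
  subst h
  rfl

theorem rtl_some {c : Coord V} {t : List V} {Q : DiPath V} (h : c.att = some (t, Q)) :
    rtl c = t.tail := by
  obtain ⟨hd, att⟩ := c
  dsimp only at h
  subst h
  rfl

noncomputable def gp (m : St V) (P : DiPath V) : DiPath V :=
  if h : ((m.sig P).head ++ rtl (m.sig P)) ≠ [] ∧ ((m.sig P).head ++ rtl (m.sig P)).Nodup
  then ⟨_, h.1, h.2⟩ else P

theorem assemble {D : Set (V × V)} {X Y : Set V} {Ps Qs : Set (DiPath V)}
    (hPs : DisjXYSystem D X Y Ps) (hQs : DisjXYSystem D X Y Qs)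
    {m : St V} (hm : Valid Ps Qs m) (hsv : ∀ Q ∈ Qs, ServedQ Ps m Q) :
    ∃ Rs, DisjXYSystem D X Y Rs ∧ Vfirst Ps ⊆ Vfirst Rs ∧ Vlast Qs ⊆ Vlast Rs := by
  classical
  obtain ⟨hV1, hV2, hV3, hV4, hV5⟩ := hm
  -- basic facts in the attached case
  have hsome : ∀ P ∈ Ps, ∀ t Q, (m.sig P).att = some (t, Q) →
      (gp m P).verts = (m.sig P).head ++ t.tail ∧
      (gp m P).verts.head? = some P.first ∧
      (gp m P).verts.getLast? = some Q.last := by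
    intro P hP t Q hatt
    obtain ⟨hQQs, hQF, htne, htsuf, hthead, hclean⟩ := hV3 P hP t Q hatt
    obtain ⟨hhne, hhpre⟩ := hV1 P hP
    have hnodup : ((m.sig P).head ++ rtl (m.sig P)).Nodup := by
      rw [rtl_some hatt]
      rw [List.nodup_append']
      refine ⟨hhpre.sublist.nodup P.nodup, ((t.tail_sublist).trans htsuf.sublist).nodup Q.nodup, ?_⟩
      intro x hx hx'
      exact hclean P hP x hx' hx
    have hne : ((m.sig P).head ++ rtl (m.sig P)) ≠ [] := by
      rw [rtl_some hatt]
      simp [hhne]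
    have hverts : (gp m P).verts = (m.sig P).head ++ t.tail := by
      unfold gp
      rw [dif_pos ⟨hne, hnodup⟩]
      dsimp only
      rw [rtl_some hatt]
    refine ⟨hverts, ?_, ?_⟩
    · rw [hverts, List.head?_append]
      rw [← head?_of_prefix hhpre hhne, head?_verts]
      rfl
    · rw [hverts, getLast?_glue hhne hthead, ← getLast?_of_suffix htsuf htne,
        getLast?_verts]
  have hnonecase : ∀ P ∈ Ps, (m.sig P).att = none → gp m P = P := by
    intro P hP hatt
    have hrl : (m.sig P).head ++ rtl (m.sig P) = P.verts := by
      rw [rtl_none hatt, List.append_nil, hV2 P hP hatt]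
    apply dipath_ext
    unfold gp
    rw [dif_pos (by rw [hrl]; exact ⟨P.ne, P.nodup⟩)]
    dsimp only
    exact hrl
  -- membership decomposition
  have hsplit : ∀ P ∈ Ps, ∀ x, x ∈ (gp m P).verts →
      x ∈ (m.sig P).head ∨ ∃ t Q, (m.sig P).att = some (t, Q) ∧ x ∈ t.tail := by
    intro P hP x hx
    rcases hatt : (m.sig P).att with _ | ⟨t, Q⟩
    · left
      rw [hnonecase P hP hatt] at hx
      rw [hV2 P hP hatt]
      exact hx
    · rw [(hsome P hP t Q hatt).1] at hx
      rcases List.mem_append.mp hx with h | h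
      · exact Or.inl h
      · exact Or.inr ⟨t, Q, rfl, h⟩
  have hfirst : ∀ P ∈ Ps, (gp m P).first = P.first := by
    intro P hP
    rcases hatt : (m.sig P).att with _ | ⟨t, Q⟩
    · rw [hnonecase P hP hatt]
    · exact first_eq_of_head? (hsome P hP t Q hatt).2.1
  -- each gp m P is an X→Y path of D
  have hXY : ∀ P ∈ Ps, IsXYPath D X Y (gp m P) := by
    intro P hP
    rcases hatt : (m.sig P).att with _ | ⟨t, Q⟩
    · rw [hnonecase P hP hatt]; exact hPs.1 P hP
    · obtain ⟨hQQs, hQF, htne, htsuf, hthead, hclean⟩ := hV3 P hP t Q hatt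
      obtain ⟨hhne, hhpre⟩ := hV1 P hP
      obtain ⟨hverts, hh?, hl?⟩ := hsome P hP t Q hatt
      have hgl : (gp m P).last = Q.last := last_eq_of_getLast? hl?
      have hgf : (gp m P).first = P.first := first_eq_of_head? hh?
      have hmem : ∀ x, x ∈ (gp m P).verts ↔ x ∈ (m.sig P).head ∨ x ∈ t.tail := by
        intro x; rw [hverts]; exact List.mem_append
      refine ⟨?_, ?_, ?_⟩
      · -- edges
        intro e he
        have he' : e ∈ (gp m P).verts.zip (gp m P).verts.tail := he
        rw [hverts] at he'
        rcases zip_glue hhne hthead he' with h | h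
        · exact (hPs.1 P hP).1 (zip_mem_of_prefix hhpre h)
        · exact (hQs.1 Q hQQs).1 (zip_mem_of_suffix htsuf h)
      · -- X
        apply Set.eq_of_subset_of_subset
        · rintro x ⟨hxv, hxX⟩
          rcases (hmem x).mp hxv with h | h
          · have : x ∈ P.vertexSet ∩ X := ⟨hhpre.subset h, hxX⟩
            rw [(hPs.1 P hP).2.1] at this
            rw [hgf]
            exact this
          · exfalso
            have : x ∈ Q.vertexSet ∩ X := ⟨(t.tail_sublist.trans htsuf.sublist).subset h, hxX⟩
            rw [(hQs.1 Q hQQs).2.1] at this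
            have hx : x = Q.first := this
            subst hx
            exact head_not_mem_tail_of_suffix Q.nodup htsuf (head?_verts Q) h
        · rintro x hx
          have hx' : x = (gp m P).first := hx
          subst hx'
          refine ⟨?_, ?_⟩
          · exact mem_of_head? (List.head?_eq_head (gp m P).ne)
          · rw [hgf]; exact first_mem_X (hPs.1 P hP)
      · -- Y
        apply Set.eq_of_subset_of_subset
        · rintro x ⟨hxv, hxY⟩
          rcases (hmem x).mp hxv with h | h
          · have hxP : x ∈ P.vertexSet ∩ Y := ⟨hhpre.subset h, hxY⟩
            rw [(hPs.1 P hP).2.2] at hxP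
            have hx : x = P.last := hxP
            subst hx
            -- the head contains P.last, hence equals all of P
            have hheq : (m.sig P).head = P.verts :=
              prefix_eq_of_getLast_mem P.nodup hhpre (getLast?_verts P) h
            have hth : t.head? = some P.last := by
              rw [hthead, hheq, getLast?_verts]
            have hPlQ : P.last ∈ Q.vertexSet := htsuf.subset (mem_of_head? hth)
            have : P.last ∈ Q.vertexSet ∩ Y := ⟨hPlQ, hxY⟩
            rw [(hQs.1 Q hQQs).2.2] at this
            have hPQ : P.last = Q.last := this
            rw [hgl, ← hPQ]
            rfl
          · have : x ∈ Q.vertexSet ∩ Y := ⟨(t.tail_sublist.trans htsuf.sublist).subset h, hxY⟩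
            rw [(hQs.1 Q hQQs).2.2] at this
            rw [hgl]
            exact this
        · rintro x hx
          have hx' : x = (gp m P).last := hx
          subst hx'
          refine ⟨mem_of_getLast? (getLast?_verts _), ?_⟩
          rw [hgl]
          exact last_mem_Y (hQs.1 Q hQQs)
  -- disjointness helpers
  have hdisj_gg : ∀ P ∈ Ps, ∀ P' ∈ Ps, P ≠ P' →
      (gp m P).vertexSet ∩ (gp m P').vertexSet = ∅ := by
    intro P hP P' hP' hne
    rw [Set.eq_empty_iff_forall_notMem]
    rintro x ⟨hx, hx'⟩
    rcases hsplit P hP x hx with h | ⟨t, Q, hatt, h⟩ <;>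
      rcases hsplit P' hP' x hx' with h' | ⟨t', Q', hatt', h'⟩
    · have : x ∈ P.vertexSet ∩ P'.vertexSet := ⟨(hV1 P hP).2.subset h, (hV1 P' hP').2.subset h'⟩
      rw [hPs.2 P hP P' hP' hne] at this
      exact this
    · exact (hV3 P' hP' t' Q' hatt').2.2.2.2.2 P hP x h' h
    · exact (hV3 P hP t Q hatt).2.2.2.2.2 P' hP' x h h'
    · by_cases hQQ : Q = Q'
      · subst hQQ
        exact hne (hV4 P hP P' hP' t t' Q hatt hatt')
      · obtain ⟨hQQs, _, _, htsuf, _, _⟩ := hV3 P hP t Q hatt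
        obtain ⟨hQQs', _, _, htsuf', _, _⟩ := hV3 P' hP' t' Q' hatt'
        have : x ∈ Q.vertexSet ∩ Q'.vertexSet :=
          ⟨(t.tail_sublist.trans htsuf.sublist).subset h,
           (t'.tail_sublist.trans htsuf'.sublist).subset h'⟩
        rw [hQs.2 Q hQQs Q' hQQs' hQQ] at this
        exact this
  have hdisj_gF : ∀ P ∈ Ps, ∀ Q₀ ∈ m.F, (gp m P).vertexSet ∩ Q₀.vertexSet = ∅ := by
    intro P hP Q₀ hQ₀
    rw [Set.eq_empty_iff_forall_notMem]
    rintro x ⟨hx, hx'⟩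
    rcases hsplit P hP x hx with h | ⟨t, Q, hatt, h⟩
    · exact hV5.2 Q₀ hQ₀ P hP x hx' h
    · obtain ⟨hQQs, hQF, _, htsuf, _, _⟩ := hV3 P hP t Q hatt
      have hQQ₀ : Q ≠ Q₀ := fun hh => hQF (hh ▸ hQ₀)
      have : x ∈ Q.vertexSet ∩ Q₀.vertexSet :=
        ⟨(t.tail_sublist.trans htsuf.sublist).subset h, hx'⟩
      rw [hQs.2 Q hQQs Q₀ (hV5.1 hQ₀) hQQ₀] at this
      exact this
  refine ⟨(gp m) '' Ps ∪ m.F, ⟨?_, ?_⟩, ?_, ?_⟩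
  · rintro R (⟨P, hP, rfl⟩ | hRF)
    · exact hXY P hP
    · exact hQs.1 R (hV5.1 hRF)
  · rintro R (⟨P, hP, rfl⟩ | hRF) R' (⟨P', hP', rfl⟩ | hRF') hne
    · by_cases hPP : P = P'
      · exact absurd (congrArg (gp m) hPP) hne
      · exact hdisj_gg P hP P' hP' hPP
    · exact hdisj_gF P hP R' hRF'
    · rw [Set.inter_comm]
      exact hdisj_gF P' hP' R hRF
    · exact hQs.2 R (hV5.1 hRF) R' (hV5.1 hRF') hne
  · rintro x ⟨P, hP, rfl⟩
    exact ⟨gp m P, Or.inl ⟨P, hP, rfl⟩, hfirst P hP⟩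
  · rintro y ⟨Q, hQ, rfl⟩
    rcases hsv Q hQ with h | ⟨P, hP, t, hatt⟩
    · exact ⟨Q, Or.inr h, rfl⟩
    · exact ⟨gp m P, Or.inl ⟨P, hP, rfl⟩, last_eq_of_getLast? (hsome P hP t Q hatt).2.2⟩

end PymAux
/-- (Pym's linking theorem) Given two systems `Ps`, `Qs` of disjoint `X→Y` paths of a
digraph `D`, there is a system `Rs` of disjoint `X→Y` paths with
`V_first(Ps) ⊆ V_first(Rs)` and `V_last(Qs) ⊆ V_last(Rs)`. -/
theorem pym {V : Type u} (D : Set (V × V)) (X Y : Set V) (Ps Qs : Set (DiPath V))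
    (hPs : DisjXYSystem D X Y Ps) (hQs : DisjXYSystem D X Y Qs) :
    ∃ Rs, DisjXYSystem D X Y Rs ∧ Vfirst Ps ⊆ Vfirst Rs ∧ Vlast Qs ⊆ Vlast Rs := by
  classical
  obtain ⟨m, hm, hsv⟩ := PymAux.exists_good (Ps := Ps) (Qs := Qs)
    (fun Q hQ Q' hQ' h => hQs.2 Q hQ Q' hQ' h)
  exact PymAux.assemble hPs hQs hm hsv

end FlamePaper
end

section
/- A rooted digraph L ⊆ D is D-vertex-large if and only if L contains all outgoing edges of r in D, and 𝔖_L(v) ∩ 𝔖_D(v) ≠ ∅ for every v ∈ V−r. -/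
namespace FlamePaper

universe u
variable {V : Type u}

/-!
An Erdős–Menger system for `v` chooses internal vertices or edges of its paths. A chosen edge
other than `rv` can be traded for an internal endpoint, and the paths whose chosen edge is `rv`
can be dropped; this yields a common element of `𝔖_L(v)` and `𝔖_D(v)`. The one-edge path `rv`
can only be met at the edge `rv` itself, which forces `out_D(r) ⊆ L`. Conversely, a system of
`L` realising a common separation becomes an Erdős–Menger system of `D` once the one-edge path
`rv` (if it is an edge of `D`) is added to it, with `rv` as its chosen edge.
-/

lemma List.exists_eq_append_cons_cons_of_mem_zip_tail {α : Type*} {l : List α}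
    {a b : α} (h : (a, b) ∈ l.zip l.tail) : ∃ l₁ l₂, l = l₁ ++ a :: b :: l₂ := by
  induction l with
  | nil => simp at h
  | cons x t ih =>
    cases t with
    | nil => simp at h
    | cons y t =>
      obtain ⟨rfl, rfl⟩ | h := (by simpa using h : (a = x ∧ b = y) ∨ (a, b) ∈ (y :: t).zip t)
      · exact ⟨[], t, rfl⟩
      · obtain ⟨l₁, l₂, hl⟩ := ih h
        exact ⟨x :: l₁, l₂, by simp [hl]⟩

namespace DiPath

lemma first_mem_s7 (P : DiPath V) : P.first ∈ P.vertexSet := P.verts.head_mem P.ne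

lemma last_mem_s7 (P : DiPath V) : P.last ∈ P.vertexSet := P.verts.getLast_mem P.ne

lemma fst_mem_of_mem_edges {P : DiPath V} {e : V × V} (he : e ∈ P.edges) :
    e.1 ∈ P.vertexSet := (List.of_mem_zip he).1

lemma snd_mem_of_mem_edges {P : DiPath V} {e : V × V} (he : e ∈ P.edges) :
    e.2 ∈ P.vertexSet := List.mem_of_mem_tail (List.of_mem_zip he).2

lemma fst_ne_snd_of_mem_edges {P : DiPath V} {a b : V} (he : (a, b) ∈ P.edges) : a ≠ b := by
  obtain ⟨l₁, l₂, hl⟩ := List.exists_eq_append_cons_cons_of_mem_zip_tail he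
  have hnd := P.nodup
  rw [hl, List.nodup_append] at hnd
  simp only [List.nodup_cons, List.mem_cons, not_or] at hnd
  exact hnd.2.1.1.1

lemma fst_ne_last_of_mem_edges {P : DiPath V} {a b : V} (he : (a, b) ∈ P.edges) :
    a ≠ P.last := by
  obtain ⟨l₁, l₂, hl⟩ := List.exists_eq_append_cons_cons_of_mem_zip_tail he
  have hnd := P.nodup
  have hlast : P.last ∈ b :: l₂ := by
    have : P.last = (l₁ ++ [a] ++ b :: l₂).getLast (by simp) := by simp [DiPath.last, hl]
    rw [this, List.getLast_append_of_ne_nil _ (List.cons_ne_nil _ _)]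
    exact List.getLast_mem _
  rw [hl, List.nodup_append] at hnd
  exact fun h => (List.nodup_cons.mp hnd.2.1).1 (h ▸ hlast)

def ofEdge (u v : V) (h : u ≠ v) : DiPath V := ⟨[u, v], by simp, by simp [h]⟩

variable {u v : V} {h : u ≠ v}

lemma ofEdge_edges : (ofEdge u v h).edges = {(u, v)} := by
  ext e; simp [DiPath.edges, ofEdge]

lemma ofEdge_vertexSet : (ofEdge u v h).vertexSet = {u, v} := by
  ext x; simp [DiPath.vertexSet, ofEdge]

lemma ofEdge_internal : (ofEdge u v h).internal = ∅ := by
  rw [DiPath.internal, ofEdge_vertexSet]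
  exact Set.sdiff_self

end DiPath

variable {D L : Set (V × V)} {r v : V} {P Q : DiPath V} {Ps : Set (DiPath V)}

lemma IsPath.mono (hDL : D ⊆ L) (hP : IsPath D r v P) : IsPath L r v P :=
  ⟨hP.1.trans hDL, hP.2⟩

lemma isPath_ofEdge (h : r ≠ v) (hD : (r, v) ∈ D) : IsPath D r v (DiPath.ofEdge r v h) :=
  ⟨by simpa [IsPathIn, DiPath.ofEdge_edges] using hD, rfl, rfl⟩

lemma IsPath.diff_singleton (hP : IsPath D r v P) (he : (r, v) ∉ P.edges) :
    IsPath (D \ {(r, v)}) r v P :=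
  ⟨fun _ heP => ⟨hP.1 heP, fun h => he (Set.mem_singleton_iff.mp h ▸ heP)⟩, hP.2⟩

lemma IsPath.pair_subset_vertexSet (hP : IsPath D r v P) : {r, v} ⊆ P.vertexSet := by
  rintro x (rfl | rfl)
  · exact hP.2.1 ▸ P.first_mem_s7
  · exact hP.2.2 ▸ P.last_mem_s7

lemma IsPath.not_mem_internal (hP : IsPath D r v P) {x : V} (hx : x = r ∨ x = v) :
    x ∉ P.internal := fun h => h.2 (by rw [hP.2.1, hP.2.2]; exact hx)

/-- The tail is internal unless it is `r`; then the head is, as the edge is not `rv`. -/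
lemma IsPath.exists_internal_of_mem_edges (hP : IsPath D r v P) {a b : V}
    (he : (a, b) ∈ P.edges) (hne : (a, b) ≠ (r, v)) : ∃ x ∈ P.internal, x = a ∨ x = b := by
  have ha_last : a ≠ v := hP.2.2 ▸ DiPath.fst_ne_last_of_mem_edges he
  by_cases har : a = r
  · subst har
    refine ⟨b, ⟨DiPath.snd_mem_of_mem_edges he, ?_⟩, Or.inr rfl⟩
    rw [hP.2.1, hP.2.2]
    rintro (hb | hb)
    · exact DiPath.fst_ne_snd_of_mem_edges he hb.symm
    · exact hne (by rw [hb])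
  · refine ⟨a, ⟨DiPath.fst_mem_of_mem_edges he, ?_⟩, Or.inl rfl⟩
    rw [hP.2.1, hP.2.2]
    rintro (h | h) <;> contradiction

lemma IntDisjSystem.mono (hDL : D ⊆ L) (hPs : IntDisjSystem D r v Ps) :
    IntDisjSystem L r v Ps :=
  ⟨fun P hP => (hPs.1 P hP).mono hDL, hPs.2⟩

lemma IntDisjSystem.of_liesIn (hPs : IntDisjSystem D r v Ps) (hL : LiesIn Ps L) :
    IntDisjSystem L r v Ps :=
  ⟨fun P hP => ⟨hL P hP, (hPs.1 P hP).2⟩, hPs.2⟩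

lemma IntDisjSystem.subset {Ps' : Set (DiPath V)} (hPs : IntDisjSystem D r v Ps)
    (h : Ps' ⊆ Ps) : IntDisjSystem D r v Ps' :=
  ⟨fun P hP => hPs.1 P (h hP), fun P hP Q hQ => hPs.2 P (h hP) Q (h hQ)⟩

lemma IntDisjSystem.insert_ofEdge (h : r ≠ v) (hD : (r, v) ∈ D)
    (hPs : IntDisjSystem D r v Ps) : IntDisjSystem D r v (insert (DiPath.ofEdge r v h) Ps) := by
  refine ⟨?_, ?_⟩
  · rintro P (rfl | hP)
    exacts [isPath_ofEdge h hD, hPs.1 P hP]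
  · rintro P (rfl | hP) Q (rfl | hQ) hne
    · exact absurd rfl hne
    · rw [DiPath.ofEdge_vertexSet, Set.inter_eq_left]
      exact (hPs.1 Q hQ).pair_subset_vertexSet
    · rw [DiPath.ofEdge_vertexSet, Set.inter_eq_right]
      exact (hPs.1 P hP).pair_subset_vertexSet
    · exact hPs.2 P hP Q hQ hne

lemma Separates.anti {S : Set V} (hDL : D ⊆ L) (h : Separates L r v S) :
    Separates D r v S :=
  fun P hP => h P (hP.mono hDL)

lemma mem_sepSet_of_separates (hPs : IntDisjSystem D r v Ps) {sel : DiPath V → V}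
    (hsel : ∀ P ∈ Ps, sel P ∈ P.internal)
    (hS : Separates (D \ {(r, v)}) r v (sel '' Ps)) : sel '' Ps ∈ SepSet D r v := by
  refine ⟨?_, ?_, hS, Ps, hPs, sel, hsel, rfl⟩ <;>
  · rintro ⟨P, hP, hx⟩
    exact (hPs.1 P hP).not_mem_internal (by simp [← hx]) (hsel P hP)

/-- The one-edge path `rv` has no internal vertex to be met at. -/
lemma EMSystem.exists_mem_edges (h : EMSystem D r v Ps) (hrv : r ≠ v) (hD : (r, v) ∈ D) :
    ∃ P ∈ Ps, (r, v) ∈ P.edges := by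
  obtain ⟨hPs, sel, hsel, hhit⟩ := h
  obtain ⟨P, hP, hx, he⟩ := hhit _ (isPath_ofEdge hrv hD)
  refine ⟨P, hP, ?_⟩
  cases hs : sel P with
  | inl x =>
    have hx' := hx x hs
    rw [DiPath.ofEdge_vertexSet] at hx'
    exact absurd ((hsel P hP).1 x hs) ((hPs.1 P hP).not_mem_internal hx')
  | inr e =>
    have he' := he e hs
    rw [DiPath.ofEdge_edges, Set.mem_singleton_iff] at he'
    exact he' ▸ (hsel P hP).2 e hs

lemma EMSystem.exists_separating_internal_selection (h : EMSystem D r v Ps) :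
    ∃ Ps' ⊆ Ps, ∃ sel : DiPath V → V,
      (∀ P ∈ Ps', sel P ∈ P.internal) ∧ Separates (D \ {(r, v)}) r v (sel '' Ps') := by
  have : Nonempty V := ⟨r⟩
  obtain ⟨hPs, sel, hsel, hhit⟩ := h
  set Ps' := {P ∈ Ps | sel P ≠ Sum.inr (r, v)}
  have hchoice : ∀ P ∈ Ps', ∃ x ∈ P.internal, ∀ Q : DiPath V,
      (∀ y, sel P = Sum.inl y → y ∈ Q.vertexSet) →
      (∀ e, sel P = Sum.inr e → e ∈ Q.edges) → x ∈ Q.vertexSet := by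
    rintro P ⟨hP, hne⟩
    cases hs : sel P with
    | inl x => exact ⟨x, (hsel P hP).1 x hs, fun Q hQ _ => hQ x rfl⟩
    | inr e =>
      obtain ⟨a, b⟩ := e
      obtain ⟨x, hx, hxe⟩ := (hPs.1 P hP).exists_internal_of_mem_edges ((hsel P hP).2 _ hs)
        (fun h => hne (by rw [hs, h]))
      refine ⟨x, hx, fun Q _ hQ => ?_⟩
      rcases hxe with rfl | rfl
      exacts [DiPath.fst_mem_of_mem_edges (hQ _ rfl), DiPath.snd_mem_of_mem_edges (hQ _ rfl)]
  choose! f hf hfQ using hchoice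
  refine ⟨Ps', fun P hP => hP.1, f, hf, fun Q hQ => ?_⟩
  obtain ⟨P, hP, hx, he⟩ := hhit Q (hQ.mono Set.sdiff_subset)
  have hP' : P ∈ Ps' := ⟨hP, fun hs => (hQ.1 (he _ hs)).2 rfl⟩
  exact ⟨f P, hfQ P hP' Q hx he, P, hP', rfl⟩

lemma sepSet_inter_nonempty_of_emSystem (hLD : L ⊆ D) (h : EMSystem D r v Ps)
    (hL : LiesIn Ps L) : (SepSet L r v ∩ SepSet D r v).Nonempty := by
  obtain ⟨Ps', hsub, sel, hsel, hS⟩ := h.exists_separating_internal_selection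
  have hPs' : IntDisjSystem D r v Ps' := h.1.subset hsub
  exact ⟨_, mem_sepSet_of_separates (hPs'.of_liesIn fun P hP => hL P (hsub hP)) hsel
      (hS.anti (Set.sdiff_subset_sdiff_left hLD)),
    mem_sepSet_of_separates hPs' hsel hS⟩

lemma outEdges_subset_of_isLarge (hroot : IsRooted D r) (h : IsLarge D L r) :
    outEdges D r ⊆ L := by
  rintro ⟨a, v⟩ ⟨hD, rfl : a = r⟩
  have hrv : a ≠ v := by
    rintro rfl
    exact (hroot ▸ (⟨hD, rfl⟩ : (a, a) ∈ inEdges D a) : (a, a) ∈ (∅ : Set (V × V)))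
  obtain ⟨Ps, hPs, hL⟩ := h.2 v hrv.symm
  obtain ⟨P, hP, he⟩ := hPs.exists_mem_edges hrv hD
  exact hL P hP he

lemma exists_emSystem_of_mem_sepSet (hvr : v ≠ r) (hLD : L ⊆ D)
    (hout : (r, v) ∈ D → (r, v) ∈ L) {S : Set V} (hSL : S ∈ SepSet L r v)
    (hSD : Separates (D \ {(r, v)}) r v S) : ∃ Ps, EMSystem D r v Ps ∧ LiesIn Ps L := by
  obtain ⟨-, -, -, Ps, hPs, sel, hsel, rfl⟩ := hSL
  have hlies : LiesIn Ps L := fun P hP => (hPs.1 P hP).1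
  have hPsD := hPs.mono hLD
  by_cases hD : (r, v) ∈ D
  · set P₀ := DiPath.ofEdge r v hvr.symm
    have hP₀ : P₀ ∉ Ps := fun h => by simpa [P₀, DiPath.ofEdge_internal] using hsel P₀ h
    have hne : ∀ P ∈ Ps, P ≠ P₀ := fun P hP h => hP₀ (h ▸ hP)
    classical
    refine ⟨insert P₀ Ps, ⟨hPsD.insert_ofEdge hvr.symm hD,
      fun P => if P = P₀ then .inr (r, v) else .inl (sel P), ?_, fun Q hQ => ?_⟩, ?_⟩
    · rintro P (rfl | hP)
      · simp [P₀, DiPath.ofEdge_edges]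
      · simpa [hne P hP] using hsel P hP
    · by_cases hQe : (r, v) ∈ Q.edges
      · exact ⟨P₀, Set.mem_insert _ _, by simp, by simpa using hQe⟩
      · obtain ⟨x, hxQ, P, hP, rfl⟩ := hSD Q (hQ.diff_singleton hQe)
        exact ⟨P, Set.mem_insert_of_mem _ hP, by simpa [hne P hP] using hxQ, by simp [hne P hP]⟩
    · rintro P (rfl | hP)
      · simpa [IsPathIn, P₀, DiPath.ofEdge_edges] using hout hD
      · exact hlies P hP
  · refine ⟨Ps, ⟨hPsD, fun P => .inl (sel P), fun P hP => ?_, fun Q hQ => ?_⟩, hlies⟩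
    · simpa using hsel P hP
    · obtain ⟨x, hxQ, P, hP, rfl⟩ := hSD Q (hQ.diff_singleton fun he => hD (hQ.1 he))
      exact ⟨P, hP, by simpa using hxQ, by simp⟩

theorem reform_largeness_general {V : Type u} (r : V) (D L : Set (V × V))
    (hroot : IsRooted D r) (hLD : L ⊆ D) :
    IsLarge D L r ↔
      outEdges D r ⊆ L ∧ ∀ v, v ≠ r → (SepSet L r v ∩ SepSet D r v).Nonempty := by
  refine ⟨fun h => ⟨outEdges_subset_of_isLarge hroot h, fun v hv => ?_⟩, ?_⟩
  · obtain ⟨Ps, hPs, hL⟩ := h.2 v hv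
    exact sepSet_inter_nonempty_of_emSystem hLD hPs hL
  · rintro ⟨hout, hsep⟩
    refine ⟨hLD, fun v hv => ?_⟩
    obtain ⟨S, hSL, hSD⟩ := hsep v hv
    exact exists_emSystem_of_mem_sepSet hv hLD (fun h => hout ⟨h, rfl⟩) hSL hSD.2.2.1

/-- Reformulation of largeness: `L ⊆ D` is `D`-vertex-large iff `L` contains all
outgoing edges of `r` in `D` and `𝔖_L(v) ∩ 𝔖_D(v) ≠ ∅` for every `v ≠ r`. -/
theorem reform_largeness {V : Type u} [Infinite V] (r : V) (D L : Set (V × V))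
    (hroot : IsRooted D r) (hLD : L ⊆ D) :
    IsLarge D L r ↔
      outEdges D r ⊆ L ∧ ∀ v, v ≠ r → (SepSet L r v ∩ SepSet D r v).Nonempty :=
  reform_largeness_general r D L hroot hLD

end FlamePaper
end

section
/- (Augmenting walk lemma) Let D be a digraph and let P be a system of pairwise disjoint X→Y paths in D for vertex sets X, Y. Then either there is an XY-separation S consisting of exactly one vertex from each path of P, or there is a system Q of pairwise disjoint X→Y paths in D such that |P∖Q| + 1 = |Q∖P| is finite, the set of first vertices of Q contains that of P, and the set of last vertices of Q contains that of P. -/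
namespace FlamePaper

universe u
variable {V : Type u}

/-! ### Auxiliary list lemmas for the augmenting walk lemma -/

namespace AW

/-- The list of consecutive pairs of a list. -/
def el (l : List V) : List (V × V) := l.zip l.tail

@[simp] lemma el_nil : el ([] : List V) = [] := rfl
@[simp] lemma el_singleton (a : V) : el [a] = [] := rfl
@[simp] lemma el_cons_cons (a b : V) (l : List V) :
    el (a :: b :: l) = (a, b) :: el (b :: l) := rfl

lemma el_append_cons (l₁ : List V) (h : l₁ ≠ []) (b : V) (l₂ : List V) :
    el (l₁ ++ b :: l₂) = el l₁ ++ (l₁.getLast h, b) :: el (b :: l₂) := by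
  induction l₁ with
  | nil => simp at h
  | cons a t ih =>
    cases t with
    | nil => simp [el]
    | cons c t' =>
      have := ih (by simp)
      simp only [List.cons_append, el_cons_cons] at *
      rw [this]
      simp [List.getLast]

lemma el_concat (l : List V) (h : l ≠ []) (b : V) :
    el (l ++ [b]) = el l ++ [(l.getLast h, b)] := by
  simpa using el_append_cons l h b []

lemma mem_el {e : V × V} {l : List V} (he : e ∈ el l) :
    ∃ l₁ l₂, l = l₁ ++ e.1 :: e.2 :: l₂ := by
  induction l with
  | nil => simp [el] at he
  | cons a t ih =>
    cases t with
    | nil => simp [el] at he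
    | cons b t' =>
      rw [el_cons_cons] at he
      rcases List.mem_cons.1 he with h1 | h2
      · exact ⟨[], t', by simp [h1]⟩
      · obtain ⟨l₁, l₂, hl⟩ := ih h2
        exact ⟨a :: l₁, l₂, by rw [List.cons_append, ← hl]⟩

lemma el_split_mem (l l₁ l₂ : List V) (a b : V) (h : l = l₁ ++ a :: b :: l₂) :
    (a, b) ∈ el l := by
  subst h
  rw [show l₁ ++ a :: b :: l₂ = (l₁ ++ [a]) ++ b :: l₂ by simp,
    el_append_cons (l₁ ++ [a]) (by simp) b l₂]
  simp

lemma fst_mem_of_mem_el {e : V × V} {l : List V} (he : e ∈ el l) : e.1 ∈ l := by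
  obtain ⟨l₁, l₂, hl⟩ := mem_el he; subst hl; simp

lemma snd_mem_of_mem_el {e : V × V} {l : List V} (he : e ∈ el l) : e.2 ∈ l := by
  obtain ⟨l₁, l₂, hl⟩ := mem_el he; subst hl; simp

end AW

namespace AW

lemma dipath_ext {P Q : DiPath V} (h : P.verts = Q.verts) : P = Q := by
  cases P; cases Q; simpa using h

lemma mem_vertexSet_iff {v : V} {P : DiPath V} : v ∈ P.vertexSet ↔ v ∈ P.verts := Iff.rfl

lemma mem_edges_iff {e : V × V} {P : DiPath V} : e ∈ P.edges ↔ e ∈ el P.verts := Iff.rfl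

lemma first_eq {P : DiPath V} {l : List V} (h : P.verts = l) (hl : l ≠ []) :
    P.first = l.head hl := by
  unfold DiPath.first; congr 1

lemma last_eq {P : DiPath V} {l : List V} (h : P.verts = l) (hl : l ≠ []) :
    P.last = l.getLast hl := by
  unfold DiPath.last; congr 1

lemma first_mem {P : DiPath V} : P.first ∈ P.vertexSet := by
  rw [mem_vertexSet_iff]; exact List.head_mem P.ne

lemma last_mem {P : DiPath V} : P.last ∈ P.vertexSet := by
  rw [mem_vertexSet_iff]; exact List.getLast_mem P.ne

/-- If the head and the last of a nodup nonempty list agree, it is a singleton. -/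
lemma eq_singleton_of_first_eq_last {P : DiPath V} (h : P.first = P.last) :
    P.verts = [P.first] := by
  rcases hv : P.verts with _ | ⟨a, t⟩
  · exact absurd hv P.ne
  · cases t with
    | nil => simp [first_eq hv]
    | cons b t' =>
      exfalso
      have h1 : P.first = a := by simp [first_eq hv (by simp)]
      have h2 : P.last ∈ b :: t' := by
        rw [last_eq hv (by simp)]
        rw [List.getLast_cons (by simp : (b :: t') ≠ [])]
        exact List.getLast_mem _
      have hn := P.nodup
      rw [hv] at hn
      rw [← h, h1] at h2
      exact (List.nodup_cons.1 hn).1 h2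

end AW

namespace AW

/-- The vertices used by a path system. -/
def sysV (Qs : Set (DiPath V)) : Set V := ⋃ R ∈ Qs, R.vertexSet

/-- The edges used by a path system. -/
def sysE (Qs : Set (DiPath V)) : Set (V × V) := ⋃ R ∈ Qs, R.edges

lemma mem_sysV {Qs : Set (DiPath V)} {v : V} :
    v ∈ sysV Qs ↔ ∃ R ∈ Qs, v ∈ R.vertexSet := by simp [sysV]

lemma mem_sysE {Qs : Set (DiPath V)} {e : V × V} :
    e ∈ sysE Qs ↔ ∃ R ∈ Qs, e ∈ R.edges := by simp [sysE]

/-- The conclusion of the augmenting case. -/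
def Augmented (D : Set (V × V)) (X Y : Set V) (Ps : Set (DiPath V)) : Prop :=
  ∃ Qs, DisjXYSystem D X Y Qs ∧ (Ps \ Qs).Finite ∧ (Qs \ Ps).Finite ∧
    (Ps \ Qs).ncard + 1 = (Qs \ Ps).ncard ∧
    Vfirst Ps ⊆ Vfirst Qs ∧ Vlast Ps ⊆ Vlast Qs

/-- Invariants of the states of the augmenting-walk machine: `Qs` is a system of
disjoint paths of `D`, all of whose members but the "open" path `O` are `X→Y` paths
ending in `Vlast Ps`, while `O` starts in `X` and avoids `Y`; moreover `Qs` arises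
from `Ps` by a finite exchange adding one extra path. -/
structure Good (D : Set (V × V)) (X Y : Set V) (Ps : Set (DiPath V))
    (Qs : Set (DiPath V)) (O : DiPath V) : Prop where
  mem : O ∈ Qs
  subD : ∀ R ∈ Qs, R.edges ⊆ D
  firstX : ∀ R ∈ Qs, R.first ∈ X
  uniqX : ∀ R ∈ Qs, ∀ v ∈ R.vertexSet, v ∈ X → v = R.first
  lastY : ∀ R ∈ Qs, R ≠ O → R.last ∈ Y
  uniqY : ∀ R ∈ Qs, R ≠ O → ∀ v ∈ R.vertexSet, v ∈ Y → v = R.last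
  openY : ∀ v ∈ O.vertexSet, v ∉ Y
  disj : ∀ R ∈ Qs, ∀ R' ∈ Qs, R ≠ R' → ∀ v ∈ R.vertexSet, v ∉ R'.vertexSet
  gfirst : ∀ P ∈ Ps, ∃ R ∈ Qs, R.first = P.first
  glast1 : ∀ P ∈ Ps, ∃ R ∈ Qs, R ≠ O ∧ R.last = P.last
  glast2 : ∀ R ∈ Qs, R ≠ O → ∃ P ∈ Ps, P.last = R.last
  count : ∃ A B : Set (DiPath V), A.Finite ∧ B.Finite ∧ A ⊆ Ps ∧
    Qs = (Ps \ A) ∪ B ∧ B ∩ (Ps \ A) = ∅ ∧ A.ncard + 1 = B.ncard ∧ O ∈ B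

/-- The augmenting-walk machine: states reachable from a trivial one-vertex
augmentation of `Ps` by the three kinds of alternating-walk moves. -/
inductive Reach (D : Set (V × V)) (X Y : Set V) (Ps : Set (DiPath V)) :
    Set (DiPath V) → DiPath V → Prop
  | base (x : V) (t : DiPath V) (ht : t.verts = [x]) (hx : x ∈ X) (hxY : x ∉ Y)
      (hxV : ∀ P ∈ Ps, x ∉ P.vertexSet) :
      Reach D X Y Ps (insert t Ps) t
  | ext {Qs O} (h : Reach D X Y Ps Qs O) (z : V) (O' : DiPath V)
      (hO'v : O'.verts = O.verts ++ [z]) (hz : (O.last, z) ∈ D) (hzX : z ∉ X)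
      (hzY : z ∉ Y) (hzV : ∀ R ∈ Qs, z ∉ R.vertexSet) :
      Reach D X Y Ps (insert O' (Qs \ {O})) O'
  | enter {Qs O} (h : Reach D X Y Ps Qs O) (z : V) (Qc : DiPath V) (hQc : Qc ∈ Qs)
      (hne : Qc ≠ O) (l₁ l₂ : List V) (hsplit : Qc.verts = l₁ ++ z :: l₂) (hl₁ : l₁ ≠ [])
      (hz : (O.last, z) ∈ D) (hzX : z ∉ X) (C O' : DiPath V)
      (hCv : C.verts = O.verts ++ z :: l₂) (hO'v : O'.verts = l₁) :
      Reach D X Y Ps (insert C (insert O' (Qs \ {O, Qc}))) O'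
  | trunc {Qs O} (h : Reach D X Y Ps Qs O) (v : V) (l₁ l₂ : List V)
      (hsplit : O.verts = l₁ ++ v :: l₂) (O' : DiPath V) (hO'v : O'.verts = l₁ ++ [v]) :
      Reach D X Y Ps (insert O' (Qs \ {O})) O'

/-- Ends of open paths of reachable states. -/
def TSet (D : Set (V × V)) (X Y : Set V) (Ps : Set (DiPath V)) : Set V :=
  {v | ∃ Qs O, Reach D X Y Ps Qs O ∧ O.last = v}

/-- Marked vertices: ends of open paths and their out-neighbours outside `X`. -/
def MSet (D : Set (V × V)) (X Y : Set V) (Ps : Set (DiPath V)) : Set V :=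
  TSet D X Y Ps ∪
    {v | ∃ Qs O, Reach D X Y Ps Qs O ∧ (O.last, v) ∈ D ∧ v ∉ X}

end AW

namespace AW

section
variable {D : Set (V × V)} {X Y : Set V} {Ps : Set (DiPath V)}

lemma Ps_subD (hPs : DisjXYSystem D X Y Ps) {P : DiPath V} (hP : P ∈ Ps) : P.edges ⊆ D :=
  (hPs.1 P hP).1

lemma Ps_firstX (hPs : DisjXYSystem D X Y Ps) {P : DiPath V} (hP : P ∈ Ps) : P.first ∈ X := by
  have h := (hPs.1 P hP).2.1
  have : P.first ∈ P.vertexSet ∩ X := h ▸ rfl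
  exact this.2

lemma Ps_uniqX (hPs : DisjXYSystem D X Y Ps) {P : DiPath V} (hP : P ∈ Ps)
    {v : V} (hv : v ∈ P.vertexSet) (hvX : v ∈ X) : v = P.first := by
  have h := (hPs.1 P hP).2.1
  have : v ∈ P.vertexSet ∩ X := ⟨hv, hvX⟩
  rwa [h] at this

lemma Ps_lastY (hPs : DisjXYSystem D X Y Ps) {P : DiPath V} (hP : P ∈ Ps) : P.last ∈ Y := by
  have h := (hPs.1 P hP).2.2
  have : P.last ∈ P.vertexSet ∩ Y := h ▸ rfl
  exact this.2

lemma Ps_uniqY (hPs : DisjXYSystem D X Y Ps) {P : DiPath V} (hP : P ∈ Ps)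
    {v : V} (hv : v ∈ P.vertexSet) (hvY : v ∈ Y) : v = P.last := by
  have h := (hPs.1 P hP).2.2
  have : v ∈ P.vertexSet ∩ Y := ⟨hv, hvY⟩
  rwa [h] at this

lemma Ps_disj (hPs : DisjXYSystem D X Y Ps) {P P' : DiPath V} (hP : P ∈ Ps) (hP' : P' ∈ Ps)
    (hne : P ≠ P') {v : V} (hv : v ∈ P.vertexSet) : v ∉ P'.vertexSet := by
  intro hv'
  have := hPs.2 P hP P' hP' hne
  have : v ∈ P.vertexSet ∩ P'.vertexSet := ⟨hv, hv'⟩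
  rw [hPs.2 P hP P' hP' hne] at this
  exact this

lemma not_mem_Ps_of_last (hPs : DisjXYSystem D X Y Ps) {P : DiPath V} (h : P.last ∉ Y) :
    P ∉ Ps := fun hP => h (Ps_lastY hPs hP)

lemma open_not_mem_Ps (hPs : DisjXYSystem D X Y Ps) {Qs : Set (DiPath V)} {O : DiPath V}
    (G : Good D X Y Ps Qs O) : O ∉ Ps :=
  not_mem_Ps_of_last hPs (G.openY O.last last_mem)

lemma good_ext (hPs : DisjXYSystem D X Y Ps) {Qs : Set (DiPath V)} {O : DiPath V}
    (G : Good D X Y Ps Qs O) (z : V) (O' : DiPath V)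
    (hO'v : O'.verts = O.verts ++ [z]) (hz : (O.last, z) ∈ D) (hzX : z ∉ X)
    (hzY : z ∉ Y) (hzV : ∀ R ∈ Qs, z ∉ R.vertexSet) :
    Good D X Y Ps (insert O' (Qs \ {O})) O' := by
  have hvmem : ∀ v, v ∈ O'.vertexSet ↔ v ∈ O.vertexSet ∨ v = z := by
    intro v; rw [mem_vertexSet_iff, hO'v]; simp [mem_vertexSet_iff]
  have hfirst : O'.first = O.first := by
    rw [first_eq hO'v (by simp [O.ne]), first_eq (rfl : O.verts = O.verts) O.ne]
    exact List.head_append_of_ne_nil O.ne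
  have hlast : O'.last = z := by
    rw [last_eq hO'v (by simp [O.ne])]
    exact List.getLast_append _
  have hedge : ∀ e, e ∈ O'.edges ↔ e ∈ O.edges ∨ e = (O.last, z) := by
    intro e
    rw [mem_edges_iff, mem_edges_iff, hO'v, el_concat O.verts O.ne z]
    simp [DiPath.last]
  have hO'Qs : O' ∉ Qs := fun hmem => hzV O' hmem ((hvmem z).2 (Or.inr rfl))
  refine ⟨by simp, ?_, ?_, ?_, ?_, ?_, ?_, ?_, ?_, ?_, ?_, ?_⟩
  · rintro R (rfl | ⟨hR, -⟩)
    · intro e he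
      rcases (hedge e).1 he with h1 | rfl
      · exact G.subD O G.mem h1
      · exact hz
    · exact G.subD R hR
  · rintro R (rfl | ⟨hR, -⟩)
    · rw [hfirst]; exact G.firstX O G.mem
    · exact G.firstX R hR
  · rintro R (rfl | ⟨hR, -⟩) v hv hvX
    · rcases (hvmem v).1 hv with h1 | rfl
      · rw [hfirst]; exact G.uniqX O G.mem v h1 hvX
      · exact absurd hvX hzX
    · exact G.uniqX R hR v hv hvX
  · rintro R (rfl | ⟨hR, hRO⟩) hne
    · exact absurd rfl hne
    · exact G.lastY R hR (by simpa using hRO)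
  · rintro R (rfl | ⟨hR, hRO⟩) hne v hv hvY
    · exact absurd rfl hne
    · exact G.uniqY R hR (by simpa using hRO) v hv hvY
  · intro v hv hvY
    rcases (hvmem v).1 hv with h1 | rfl
    · exact G.openY v h1 hvY
    · exact hzY hvY
  · rintro R (rfl | ⟨hR, hRO⟩) R' (rfl | ⟨hR', hR'O⟩) hne v hv hv'
    · exact hne rfl
    · have hR'O2 : O ≠ R' := fun hc => hR'O (by simp [← hc])
      rcases (hvmem v).1 hv with h1 | rfl
      · exact G.disj O G.mem R' hR' hR'O2 v h1 hv'
      · exact hzV R' hR' hv'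
    · have hRO2 : O ≠ R := fun hc => hRO (by simp [← hc])
      rcases (hvmem v).1 hv' with h1 | rfl
      · exact G.disj O G.mem R hR hRO2 v h1 hv
      · exact hzV R hR hv
    · exact G.disj R hR R' hR' hne v hv hv'
  · intro P hP
    obtain ⟨R, hR, hRf⟩ := G.gfirst P hP
    by_cases hRO : R = O
    · exact ⟨O', by simp, by rw [hfirst, ← hRO, hRf]⟩
    · exact ⟨R, by simp [hR, hRO], hRf⟩
  · intro P hP
    obtain ⟨R, hR, hRO, hRl⟩ := G.glast1 P hP
    refine ⟨R, by simp [hR, hRO], fun hc => ?_, hRl⟩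
    · rw [hc] at hR; exact hO'Qs hR
  · rintro R (rfl | ⟨hR, hRO⟩) hne
    · exact absurd rfl hne
    · exact G.glast2 R hR (by simpa using hRO)
  · obtain ⟨A, B, hAfin, hBfin, hAP, hQsE, hBP, hcard, hOB⟩ := G.count
    have hOPs : O ∉ Ps := open_not_mem_Ps hPs G
    have hO'Ps : O' ∉ Ps := not_mem_Ps_of_last hPs (by rw [hlast]; exact hzY)
    refine ⟨A, insert O' (B \ {O}), hAfin, (hBfin.diff).insert _, hAP, ?_, ?_, ?_, by simp⟩
    · ext R
      simp only [Set.mem_insert_iff, Set.mem_diff, Set.mem_union, Set.mem_singleton_iff, hQsE]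
      constructor
      · rintro (rfl | ⟨(h1 | h1), h2⟩)
        · tauto
        · exact Or.inl h1
        · tauto
      · rintro (⟨h1, h2⟩ | (rfl | ⟨h1, h2⟩))
        · exact Or.inr ⟨Or.inl ⟨h1, h2⟩, fun hc => hOPs (hc ▸ h1)⟩
        · tauto
        · tauto
    · rw [Set.eq_empty_iff_forall_notMem]
      rintro R ⟨(rfl | ⟨h1, -⟩), h2, h3⟩
      · exact hO'Ps h2
      · exact (Set.eq_empty_iff_forall_notMem.1 hBP R) ⟨h1, h2, h3⟩
    · have h1 : O' ∉ B \ {O} := fun hc => hO'Qs (by rw [hQsE]; exact Or.inr hc.1)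
      rw [Set.ncard_insert_of_notMem h1 (hBfin.diff),
        Set.ncard_diff_singleton_of_mem hOB]
      omega

end
end AW

namespace AW
section
variable {D : Set (V × V)} {X Y : Set V} {Ps : Set (DiPath V)}

lemma good_base (hPs : DisjXYSystem D X Y Ps) (x : V) (t : DiPath V) (ht : t.verts = [x])
    (hx : x ∈ X) (hxY : x ∉ Y) (hxV : ∀ P ∈ Ps, x ∉ P.vertexSet) :
    Good D X Y Ps (insert t Ps) t := by
  have hvmem : ∀ v, v ∈ t.vertexSet ↔ v = x := by
    intro v; rw [mem_vertexSet_iff, ht]; simp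
  have hfirst : t.first = x := by rw [first_eq ht (by simp)]; rfl
  have hlast : t.last = x := by rw [last_eq ht (by simp)]; rfl
  have hedges : t.edges = ∅ := by
    rw [Set.eq_empty_iff_forall_notMem]
    intro e he
    rw [mem_edges_iff, ht] at he
    simp at he
  have htPs : t ∉ Ps := fun hc => hxV t hc ((hvmem x).2 rfl)
  refine ⟨by simp, ?_, ?_, ?_, ?_, ?_, ?_, ?_, ?_, ?_, ?_, ?_⟩
  · rintro R (rfl | hR)
    · rw [hedges]; exact Set.empty_subset _
    · exact Ps_subD hPs hR
  · rintro R (rfl | hR)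
    · rwa [hfirst]
    · exact Ps_firstX hPs hR
  · rintro R (rfl | hR) v hv hvX
    · rw [hfirst]; exact (hvmem v).1 hv
    · exact Ps_uniqX hPs hR hv hvX
  · rintro R (rfl | hR) hne
    · exact absurd rfl hne
    · exact Ps_lastY hPs hR
  · rintro R (rfl | hR) hne v hv hvY
    · exact absurd rfl hne
    · exact Ps_uniqY hPs hR hv hvY
  · intro v hv
    rw [(hvmem v).1 hv]; exact hxY
  · rintro R (rfl | hR) R' (rfl | hR') hne v hv hv'
    · exact hne rfl
    · rw [(hvmem v).1 hv] at hv'; exact hxV R' hR' hv'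
    · rw [(hvmem v).1 hv'] at hv; exact hxV R hR hv
    · exact Ps_disj hPs hR hR' hne hv hv'
  · exact fun P hP => ⟨P, Or.inr hP, rfl⟩
  · exact fun P hP => ⟨P, Or.inr hP, fun hc => htPs (hc ▸ hP), rfl⟩
  · rintro R (rfl | hR) hne
    · exact absurd rfl hne
    · exact ⟨R, hR, rfl⟩
  · refine ⟨∅, {t}, Set.finite_empty, Set.finite_singleton t, Set.empty_subset _, ?_, ?_, by simp, rfl⟩
    · rw [Set.diff_empty, Set.union_singleton]
    · rw [Set.eq_empty_iff_forall_notMem]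
      rintro R ⟨rfl, hR, -⟩
      exact htPs hR

lemma head_append_cons_eq (l₁ : List V) (a : V) (l₂ l₂' : List V) :
    (l₁ ++ a :: l₂).head (by simp) = (l₁ ++ a :: l₂').head (by simp) := by
  cases l₁ <;> simp

lemma getLast_append_cons (l₁ : List V) (a : V) (l₂ : List V) :
    (l₁ ++ a :: l₂).getLast (by simp) = (a :: l₂).getLast (by simp) :=
  List.getLast_append_of_ne_nil _ (by simp)

lemma good_trunc (hPs : DisjXYSystem D X Y Ps) {Qs : Set (DiPath V)} {O : DiPath V}
    (G : Good D X Y Ps Qs O) (v : V) (l₁ l₂ : List V)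
    (hsplit : O.verts = l₁ ++ v :: l₂) (O' : DiPath V) (hO'v : O'.verts = l₁ ++ [v]) :
    Good D X Y Ps (insert O' (Qs \ {O})) O' := by
  have hsub : ∀ w, w ∈ O'.vertexSet → w ∈ O.vertexSet := by
    intro w hw
    rw [mem_vertexSet_iff, hO'v] at hw
    rw [mem_vertexSet_iff, hsplit]
    rcases List.mem_append.1 hw with h | h
    · exact List.mem_append.2 (Or.inl h)
    · simp at h; simp [h]
  have hfirst : O'.first = O.first := by
    rw [first_eq hO'v (by simp), first_eq hsplit (by simp)]
    exact (head_append_cons_eq l₁ v [] l₂).symm ▸ rfl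
  have hlast : O'.last = v := by
    rw [last_eq hO'v (by simp)]
    exact List.getLast_append _
  have hesub : ∀ e, e ∈ O'.edges → e ∈ O.edges := by
    intro e he
    rw [mem_edges_iff, hO'v] at he
    rw [mem_edges_iff, hsplit]
    cases hl : l₁ with
    | nil => subst hl; simp [el] at he
    | cons b t =>
      subst hl
      rw [el_append_cons _ (by simp) v []] at he
      rw [el_append_cons _ (by simp) v l₂]
      rcases List.mem_append.1 he with h | h
      · exact List.mem_append.2 (Or.inl h)
      · simp at h
        subst h
        exact List.mem_append.2 (Or.inr (by simp))
  have key : ∀ R ∈ Qs, R ≠ O → R ≠ O' := by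
    intro R hR hRO hc
    exact G.disj R hR O G.mem hRO O'.first (hc ▸ first_mem) (hfirst ▸ first_mem)
  refine ⟨by simp, ?_, ?_, ?_, ?_, ?_, ?_, ?_, ?_, ?_, ?_, ?_⟩
  · rintro R (rfl | ⟨hR, -⟩)
    · exact fun e he => G.subD O G.mem (hesub e he)
    · exact G.subD R hR
  · rintro R (rfl | ⟨hR, -⟩)
    · rw [hfirst]; exact G.firstX O G.mem
    · exact G.firstX R hR
  · rintro R (rfl | ⟨hR, -⟩) w hw hwX
    · rw [hfirst]; exact G.uniqX O G.mem w (hsub w hw) hwX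
    · exact G.uniqX R hR w hw hwX
  · rintro R (rfl | ⟨hR, hRO⟩) hne
    · exact absurd rfl hne
    · exact G.lastY R hR (by simpa using hRO)
  · rintro R (rfl | ⟨hR, hRO⟩) hne w hw hwY
    · exact absurd rfl hne
    · exact G.uniqY R hR (by simpa using hRO) w hw hwY
  · exact fun w hw => G.openY w (hsub w hw)
  · rintro R (rfl | ⟨hR, hRO⟩) R' (rfl | ⟨hR', hR'O⟩) hne w hw hw'
    · exact hne rfl
    · have : O ≠ R' := fun hc => hR'O (by simp [← hc])
      exact G.disj O G.mem R' hR' this w (hsub w hw) hw'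
    · have : R ≠ O := fun hc => hRO (by simp [hc])
      exact G.disj R hR O G.mem this w hw (hsub w hw')
    · exact G.disj R hR R' hR' hne w hw hw'
  · intro P hP
    obtain ⟨R, hR, hRf⟩ := G.gfirst P hP
    by_cases hRO : R = O
    · exact ⟨O', by simp, by rw [hfirst, ← hRO, hRf]⟩
    · exact ⟨R, by simp [hR, hRO], hRf⟩
  · intro P hP
    obtain ⟨R, hR, hRO, hRl⟩ := G.glast1 P hP
    exact ⟨R, by simp [hR, hRO], key R hR hRO, hRl⟩
  · rintro R (rfl | ⟨hR, hRO⟩) hne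
    · exact absurd rfl hne
    · exact G.glast2 R hR (by simpa using hRO)
  · obtain ⟨A, B, hAfin, hBfin, hAP, hQsE, hBP, hcard, hOB⟩ := G.count
    have hOPs : O ∉ Ps := open_not_mem_Ps hPs G
    have hO'Ps : O' ∉ Ps := by
      refine not_mem_Ps_of_last hPs ?_
      rw [hlast]
      exact G.openY v (by rw [mem_vertexSet_iff, hsplit]; simp)
    have hO'B : O' ∉ B \ {O} := by
      rintro ⟨h1, h2⟩
      exact key O' (by rw [hQsE]; exact Or.inr h1) (by simpa using h2) rfl
    refine ⟨A, insert O' (B \ {O}), hAfin, (hBfin.diff).insert _, hAP, ?_, ?_, ?_, by simp⟩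
    · ext R
      simp only [Set.mem_insert_iff, Set.mem_diff, Set.mem_union, Set.mem_singleton_iff, hQsE]
      constructor
      · rintro (rfl | ⟨(h1 | h1), h2⟩)
        · tauto
        · exact Or.inl h1
        · tauto
      · rintro (⟨h1, h2⟩ | (rfl | ⟨h1, h2⟩))
        · exact Or.inr ⟨Or.inl ⟨h1, h2⟩, fun hc => hOPs (hc ▸ h1)⟩
        · tauto
        · tauto
    · rw [Set.eq_empty_iff_forall_notMem]
      rintro R ⟨(rfl | ⟨h1, -⟩), h2, h3⟩
      · exact hO'Ps h2
      · exact (Set.eq_empty_iff_forall_notMem.1 hBP R) ⟨h1, h2, h3⟩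
    · rw [Set.ncard_insert_of_notMem hO'B (hBfin.diff),
        Set.ncard_diff_singleton_of_mem hOB]
      omega

end
end AW

namespace AW
section
variable {D : Set (V × V)} {X Y : Set V} {Ps : Set (DiPath V)}

lemma good_enter (hPs : DisjXYSystem D X Y Ps) {Qs : Set (DiPath V)} {O : DiPath V}
    (G : Good D X Y Ps Qs O) (z : V) (Qc : DiPath V) (hQc : Qc ∈ Qs)
    (hne : Qc ≠ O) (l₁ l₂ : List V) (hsplit : Qc.verts = l₁ ++ z :: l₂) (hl₁ : l₁ ≠ [])
    (hz : (O.last, z) ∈ D) (hzX : z ∉ X) (C O' : DiPath V)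
    (hCv : C.verts = O.verts ++ z :: l₂) (hO'v : O'.verts = l₁) :
    Good D X Y Ps (insert C (insert O' (Qs \ {O, Qc}))) O' := by
  -- basic membership facts
  have hQcmem : ∀ w, w ∈ Qc.vertexSet ↔ w ∈ l₁ ∨ w ∈ z :: l₂ := by
    intro w; rw [mem_vertexSet_iff, hsplit]; simp
  have hCmem : ∀ w, w ∈ C.vertexSet ↔ w ∈ O.vertexSet ∨ w ∈ z :: l₂ := by
    intro w; rw [mem_vertexSet_iff, hCv]; simp [mem_vertexSet_iff]
  have hO'mem : ∀ w, w ∈ O'.vertexSet ↔ w ∈ l₁ := by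
    intro w; rw [mem_vertexSet_iff, hO'v]
  have hQcnd := Qc.nodup
  rw [hsplit] at hQcnd
  have hdisj12 : List.Disjoint l₁ (z :: l₂) := List.disjoint_of_nodup_append hQcnd
  -- first/last facts
  have hQcfirst : Qc.first = l₁.head hl₁ := by
    rw [first_eq hsplit (by simp)]
    cases l₁ with
    | nil => exact absurd rfl hl₁
    | cons a t => rfl
  have hQclast : Qc.last = (z :: l₂).getLast (by simp) := by
    rw [last_eq hsplit (by simp)]
    exact List.getLast_append_of_ne_nil _ (by simp)
  have hCfirst : C.first = O.first := by
    rw [first_eq hCv (by simp [O.ne]), first_eq (rfl : O.verts = O.verts) O.ne]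
    exact List.head_append_of_ne_nil O.ne
  have hClast : C.last = Qc.last := by
    rw [last_eq hCv (by simp [O.ne]), hQclast]
    exact List.getLast_append_of_ne_nil _ (by simp)
  have hO'first : O'.first = Qc.first := by
    rw [first_eq hO'v hl₁, hQcfirst]
  have hO'last : O'.last = l₁.getLast hl₁ := last_eq hO'v hl₁
  -- edge facts
  have hCedge : ∀ e, e ∈ C.edges ↔ e ∈ O.edges ∨ e = (O.last, z) ∨ e ∈ el (z :: l₂) := by
    intro e
    rw [mem_edges_iff, mem_edges_iff, hCv, el_append_cons O.verts O.ne z l₂]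
    simp [DiPath.last]
  have hQcedge : ∀ e, e ∈ Qc.edges ↔
      e ∈ el l₁ ∨ e = (l₁.getLast hl₁, z) ∨ e ∈ el (z :: l₂) := by
    intro e
    rw [mem_edges_iff, hsplit, el_append_cons l₁ hl₁ z l₂]
    simp
  have hO'edge : ∀ e, e ∈ O'.edges ↔ e ∈ el l₁ := by
    intro e; rw [mem_edges_iff, hO'v]
  -- Y / X facts
  have hsuffY : ∀ w ∈ z :: l₂, w ∈ Y → w = Qc.last := by
    intro w hw hwY
    exact G.uniqY Qc hQc hne w ((hQcmem w).2 (Or.inr hw)) hwY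
  have hQclastmem : Qc.last ∈ z :: l₂ := by
    rw [hQclast]; exact List.getLast_mem _
  have hl₁Y : ∀ w ∈ l₁, w ∉ Y := by
    intro w hw hwY
    have := hsuffY w ?_ hwY
    · subst this
      exact hdisj12 hw hQclastmem
    · have := G.uniqY Qc hQc hne w ((hQcmem w).2 (Or.inl hw)) hwY
      rw [this]; exact hQclastmem
  have hsuffX : ∀ w ∈ z :: l₂, w ∉ X := by
    intro w hw hwX
    have := G.uniqX Qc hQc w ((hQcmem w).2 (Or.inr hw)) hwX
    rw [this, hQcfirst] at hw
    exact hdisj12 (List.head_mem hl₁) hw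
  have hl₁X : ∀ w ∈ l₁, w ∈ X → w = O'.first := by
    intro w hw hwX
    rw [hO'first]
    exact G.uniqX Qc hQc w ((hQcmem w).2 (Or.inl hw)) hwX
  -- z not on O
  have hzQc : z ∈ Qc.vertexSet := (hQcmem z).2 (Or.inr (by simp))
  have hsuffQc : ∀ w ∈ z :: l₂, w ∈ Qc.vertexSet := fun w hw => (hQcmem w).2 (Or.inr hw)
  have hl₁Qc : ∀ w ∈ l₁, w ∈ Qc.vertexSet := fun w hw => (hQcmem w).2 (Or.inl hw)
  have hQcO : ∀ w ∈ Qc.vertexSet, w ∉ O.vertexSet := G.disj Qc hQc O G.mem hne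
  -- new paths are distinct from everything
  have hCQs : C ∉ Qs := by
    intro hmem
    have hCO : C ≠ O := by
      intro hc
      exact hQcO z hzQc (by rw [← hc]; exact (hCmem z).2 (Or.inr (by simp)))
    exact G.disj C hmem O G.mem hCO O.first ((hCmem O.first).2 (Or.inl first_mem)) first_mem
  have hO'Qs : O' ∉ Qs := by
    intro hmem
    have hO'Qc : O' ≠ Qc := by
      intro hc
      have : z ∈ O'.vertexSet := hc ▸ hzQc
      exact hdisj12 ((hO'mem z).1 this) (by simp)
    exact G.disj O' hmem Qc hQc hO'Qc O'.first first_mem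
      (hO'first ▸ first_mem)
  have hCO' : C ≠ O' := by
    intro hc
    have : z ∈ O'.vertexSet := hc ▸ (hCmem z).2 (Or.inr (by simp))
    exact hdisj12 ((hO'mem z).1 this) (by simp)
  refine ⟨by simp, ?_, ?_, ?_, ?_, ?_, ?_, ?_, ?_, ?_, ?_, ?_⟩
  · rintro R (rfl | rfl | ⟨hR, -⟩)
    · intro e he
      rcases (hCedge e).1 he with h1 | rfl | h1
      · exact G.subD O G.mem h1
      · exact hz
      · exact G.subD Qc hQc ((hQcedge e).2 (Or.inr (Or.inr h1)))
    · intro e he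
      exact G.subD Qc hQc ((hQcedge e).2 (Or.inl ((hO'edge e).1 he)))
    · exact G.subD R hR
  · rintro R (rfl | rfl | ⟨hR, -⟩)
    · rw [hCfirst]; exact G.firstX O G.mem
    · rw [hO'first]; exact G.firstX Qc hQc
    · exact G.firstX R hR
  · rintro R (rfl | rfl | ⟨hR, -⟩) w hw hwX
    · rcases (hCmem w).1 hw with h1 | h1
      · rw [hCfirst]; exact G.uniqX O G.mem w h1 hwX
      · exact absurd hwX (hsuffX w h1)
    · exact hl₁X w ((hO'mem w).1 hw) hwX
    · exact G.uniqX R hR w hw hwX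
  · rintro R (rfl | rfl | ⟨hR, hR2⟩) hneq
    · rw [hClast]; exact G.lastY Qc hQc hne
    · exact absurd rfl hneq
    · exact G.lastY R hR (fun hc => hR2 (by simp [hc]))
  · rintro R (rfl | rfl | ⟨hR, hR2⟩) hneq w hw hwY
    · rcases (hCmem w).1 hw with h1 | h1
      · exact absurd hwY (G.openY w h1)
      · rw [hClast]; exact hsuffY w h1 hwY
    · exact absurd rfl hneq
    · exact G.uniqY R hR (fun hc => hR2 (by simp [hc])) w hw hwY
  · intro w hw
    exact hl₁Y w ((hO'mem w).1 hw)
  · rintro R (rfl | rfl | ⟨hR, hR2⟩) R' (rfl | rfl | ⟨hR', hR2'⟩) hneq w hw hw'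
    · exact hneq rfl
    · rcases (hCmem w).1 hw with h1 | h1
      · exact hQcO w (hl₁Qc w ((hO'mem w).1 hw')) h1
      · exact hdisj12 ((hO'mem w).1 hw') h1
    · have hRO : O ≠ R' := fun hc => hR2' (by simp [← hc])
      have hRQc : Qc ≠ R' := fun hc => hR2' (by simp [← hc])
      rcases (hCmem w).1 hw with h1 | h1
      · exact G.disj O G.mem R' hR' hRO w h1 hw'
      · exact G.disj Qc hQc R' hR' hRQc w (hsuffQc w h1) hw'
    · rcases (hCmem w).1 hw' with h1 | h1
      · exact hQcO w (hl₁Qc w ((hO'mem w).1 hw)) h1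
      · exact hdisj12 ((hO'mem w).1 hw) h1
    · exact hneq rfl
    · have hRQc : Qc ≠ R' := fun hc => hR2' (by simp [← hc])
      exact G.disj Qc hQc R' hR' hRQc w (hl₁Qc w ((hO'mem w).1 hw)) hw'
    · have hRO : O ≠ R := fun hc => hR2 (by simp [← hc])
      have hRQc : Qc ≠ R := fun hc => hR2 (by simp [← hc])
      rcases (hCmem w).1 hw' with h1 | h1
      · exact G.disj O G.mem R hR hRO w h1 hw
      · exact G.disj Qc hQc R hR hRQc w (hsuffQc w h1) hw
    · have hRQc : Qc ≠ R := fun hc => hR2 (by simp [← hc])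
      exact G.disj Qc hQc R hR hRQc w (hl₁Qc w ((hO'mem w).1 hw')) hw
    · exact G.disj R hR R' hR' hneq w hw hw'
  · intro P hP
    obtain ⟨R, hR, hRf⟩ := G.gfirst P hP
    by_cases h1 : R = O
    · exact ⟨C, by simp, by rw [hCfirst, ← h1, hRf]⟩
    · by_cases h2 : R = Qc
      · exact ⟨O', by simp, by rw [hO'first, ← h2, hRf]⟩
      · exact ⟨R, by simp [hR, h1, h2], hRf⟩
  · intro P hP
    obtain ⟨R, hR, hRO, hRl⟩ := G.glast1 P hP
    by_cases h2 : R = Qc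
    · exact ⟨C, by simp, hCO', by rw [hClast, ← h2, hRl]⟩
    · refine ⟨R, by simp [hR, hRO, h2], fun hc => hO'Qs (hc ▸ hR), hRl⟩
  · rintro R (rfl | rfl | ⟨hR, hR2⟩) hneq
    · obtain ⟨P, hP, hPl⟩ := G.glast2 Qc hQc hne
      exact ⟨P, hP, by rw [hPl, hClast]⟩
    · exact absurd rfl hneq
    · exact G.glast2 R hR (fun hc => hR2 (by simp [hc]))
  · obtain ⟨A, B, hAfin, hBfin, hAP, hQsE, hBP, hcard, hOB⟩ := G.count
    have hOPs : O ∉ Ps := open_not_mem_Ps hPs G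
    have hBPs : ∀ R ∈ B, R ∈ Ps → R ∈ A := by
      intro R hRB hRPs
      by_contra hc
      exact (Set.eq_empty_iff_forall_notMem.1 hBP R) ⟨hRB, hRPs, hc⟩
    have hQcQs := hQc
    rw [hQsE] at hQcQs
    have hOB' : O ∈ B \ {O, Qc} → False := by simp
    rcases hQcQs with hQcPA | hQcB
    · -- Qc is an original path not yet removed
      have hQcA : Qc ∉ A := hQcPA.2
      have hQcB : Qc ∉ B := fun hc =>
        (Set.eq_empty_iff_forall_notMem.1 hBP Qc) ⟨hc, hQcPA⟩
      refine ⟨insert Qc A, insert C (insert O' (B \ {O})), hAfin.insert _,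
        ((hBfin.diff).insert _).insert _, Set.insert_subset hQcPA.1 hAP, ?_, ?_, ?_, by simp⟩
      · have step1 : Qs \ {O, Qc} = (Ps \ insert Qc A) ∪ (B \ {O}) := by
          ext R
          constructor
          · rintro ⟨hRQ, hno⟩
            simp only [Set.mem_insert_iff, Set.mem_singleton_iff, not_or] at hno
            rw [hQsE] at hRQ
            rcases hRQ with ⟨h1, h2⟩ | h1
            · refine Or.inl ⟨h1, ?_⟩
              simp only [Set.mem_insert_iff, not_or]
              exact ⟨hno.2, h2⟩
            · exact Or.inr ⟨h1, by simp [hno.1]⟩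
          · rintro (⟨h1, h2⟩ | ⟨h1, h2⟩)
            · simp only [Set.mem_insert_iff, not_or] at h2
              refine ⟨by rw [hQsE]; exact Or.inl ⟨h1, h2.2⟩, ?_⟩
              simp only [Set.mem_insert_iff, Set.mem_singleton_iff, not_or]
              exact ⟨fun hc => hOPs (hc ▸ h1), h2.1⟩
            · simp only [Set.mem_singleton_iff] at h2
              refine ⟨by rw [hQsE]; exact Or.inr h1, ?_⟩
              simp only [Set.mem_insert_iff, Set.mem_singleton_iff, not_or]
              exact ⟨h2, fun hc => hQcB (hc ▸ h1)⟩
        rw [step1, Set.union_insert, Set.union_insert]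
      · rw [Set.eq_empty_iff_forall_notMem]
        rintro R ⟨h1, h2, h3⟩
        simp only [Set.mem_insert_iff, not_or] at h3
        rcases h1 with rfl | rfl | ⟨h4, -⟩
        · exact hCQs (by rw [hQsE]; exact Or.inl ⟨h2, h3.2⟩)
        · exact hO'Qs (by rw [hQsE]; exact Or.inl ⟨h2, h3.2⟩)
        · exact (Set.eq_empty_iff_forall_notMem.1 hBP R) ⟨h4, h2, h3.2⟩
      · have e1 : O' ∉ B \ {O} := fun hc => hO'Qs (by rw [hQsE]; exact Or.inr hc.1)
        have e2 : C ∉ insert O' (B \ {O}) := by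
          rintro (rfl | hc)
          · exact hCO' rfl
          · exact hCQs (by rw [hQsE]; exact Or.inr hc.1)
        rw [Set.ncard_insert_of_notMem e2 (((hBfin.diff)).insert _),
          Set.ncard_insert_of_notMem e1 (hBfin.diff),
          Set.ncard_diff_singleton_of_mem hOB,
          Set.ncard_insert_of_notMem hQcA hAfin]
        have pB : 0 < B.ncard := (Set.ncard_pos hBfin).mpr ⟨O, hOB⟩
        omega
    · -- Qc was an exchanged path
      have hQcO : Qc ≠ O := hne
      have hQcPA2 : Qc ∉ Ps \ A := fun hc =>
        (Set.eq_empty_iff_forall_notMem.1 hBP Qc) ⟨hQcB, hc⟩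
      refine ⟨A, insert C (insert O' (B \ {O, Qc})), hAfin,
        ((hBfin.diff).insert _).insert _, hAP, ?_, ?_, ?_, by simp⟩
      · have step1 : Qs \ {O, Qc} = (Ps \ A) ∪ (B \ {O, Qc}) := by
          ext R
          constructor
          · rintro ⟨hRQ, hno⟩
            rw [hQsE] at hRQ
            rcases hRQ with h1 | h1
            · exact Or.inl h1
            · exact Or.inr ⟨h1, hno⟩
          · rintro (⟨h1, h2⟩ | ⟨h1, h2⟩)
            · refine ⟨by rw [hQsE]; exact Or.inl ⟨h1, h2⟩, ?_⟩
              simp only [Set.mem_insert_iff, Set.mem_singleton_iff, not_or]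
              exact ⟨fun hc => hOPs (hc ▸ h1), fun hc => hQcPA2 (hc ▸ ⟨h1, h2⟩)⟩
            · exact ⟨by rw [hQsE]; exact Or.inr h1, h2⟩
        rw [step1, Set.union_insert, Set.union_insert]
      · rw [Set.eq_empty_iff_forall_notMem]
        rintro R ⟨h1, h2, h3⟩
        rcases h1 with rfl | rfl | ⟨h4, -⟩
        · exact hCQs (by rw [hQsE]; exact Or.inl ⟨h2, h3⟩)
        · exact hO'Qs (by rw [hQsE]; exact Or.inl ⟨h2, h3⟩)
        · exact (Set.eq_empty_iff_forall_notMem.1 hBP R) ⟨h4, h2, h3⟩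
      · have e1 : O' ∉ B \ {O, Qc} := fun hc => hO'Qs (by rw [hQsE]; exact Or.inr hc.1)
        have e2 : C ∉ insert O' (B \ {O, Qc}) := by
          rintro (rfl | hc)
          · exact hCO' rfl
          · exact hCQs (by rw [hQsE]; exact Or.inr hc.1)
        have e3 : Qc ∈ B \ {O} := ⟨hQcB, by simpa using hQcO⟩
        have e4 : B \ {O, Qc} = (B \ {O}) \ {Qc} := by
          ext R; simp only [Set.mem_diff, Set.mem_insert_iff, Set.mem_singleton_iff]; tauto
        have pB2 : 0 < (B \ {O}).ncard := (Set.ncard_pos (hBfin.diff)).mpr ⟨Qc, e3⟩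
        have c0 : (B \ {O}).ncard + 1 = B.ncard := by
          rw [Set.ncard_diff_singleton_of_mem hOB]
          have pB : 0 < B.ncard := (Set.ncard_pos hBfin).mpr ⟨O, hOB⟩
          omega
        have c1 : ((B \ {O}) \ {Qc}).ncard + 1 = (B \ {O}).ncard := by
          rw [Set.ncard_diff_singleton_of_mem e3]
          omega
        rw [Set.ncard_insert_of_notMem e2 (((hBfin.diff)).insert _),
          Set.ncard_insert_of_notMem e1 (hBfin.diff), e4]
        omega

end
end AW

namespace AW
section
variable {D : Set (V × V)} {X Y : Set V} {Ps : Set (DiPath V)}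

lemma reach_good (hPs : DisjXYSystem D X Y Ps) {Qs : Set (DiPath V)} {O : DiPath V}
    (h : Reach D X Y Ps Qs O) : Good D X Y Ps Qs O := by
  induction h with
  | base x t ht hx hxY hxV => exact good_base hPs x t ht hx hxY hxV
  | ext h z O' hO'v hz hzX hzY hzV ih => exact good_ext hPs ih z O' hO'v hz hzX hzY hzV
  | enter h z Qc hQc hne l₁ l₂ hsplit hl₁ hz hzX C O' hCv hO'v ih =>
    exact good_enter hPs ih z Qc hQc hne l₁ l₂ hsplit hl₁ hz hzX C O' hCv hO'v
  | trunc h v l₁ l₂ hsplit O' hO'v ih => exact good_trunc hPs ih v l₁ l₂ hsplit O' hO'v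

lemma mem_T_of_reach {Qs : Set (DiPath V)} {O : DiPath V}
    (h : Reach D X Y Ps Qs O) : O.last ∈ TSet D X Y Ps := ⟨Qs, O, h, rfl⟩

lemma nodup_concat_of_split {l : List V} (hnd : l.Nodup) {s t : List V} {v : V}
    (h : l = s ++ v :: t) : (s ++ [v]).Nodup := by
  subst h
  refine List.Nodup.sublist ?_ hnd
  exact List.Sublist.append_left (List.cons_sublist_cons.2 (List.nil_sublist t)) s

lemma T_of_mem_open {Qs : Set (DiPath V)} {O : DiPath V}
    (h : Reach D X Y Ps Qs O) {v : V} (hv : v ∈ O.vertexSet) : v ∈ TSet D X Y Ps := by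
  obtain ⟨s, t, hst⟩ := List.append_of_mem (mem_vertexSet_iff.1 hv)
  refine ⟨_, ⟨s ++ [v], by simp, nodup_concat_of_split O.nodup hst⟩,
    Reach.trunc h v s t hst _ rfl, ?_⟩
  exact List.getLast_append _

lemma reach_spade (hPs : DisjXYSystem D X Y Ps) {Qs : Set (DiPath V)} {O : DiPath V}
    (h : Reach D X Y Ps Qs O) :
    ∀ P ∈ Ps, ∀ e ∈ P.edges, e ∈ sysE Qs ∨ e.1 ∈ TSet D X Y Ps := by
  induction h with
  | base x t ht hx hxY hxV =>
    intro P hP e he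
    exact Or.inl (mem_sysE.2 ⟨P, Or.inr hP, he⟩)
  | ext h z O' hO'v hz hzX hzY hzV ih =>
    rename_i Qs O
    intro P hP e he
    rcases ih P hP e he with h1 | h1
    · obtain ⟨R, hR, heR⟩ := mem_sysE.1 h1
      by_cases hRO : R = O
      · rw [hRO] at heR
        refine Or.inl (mem_sysE.2 ⟨O', by simp, ?_⟩)
        rw [mem_edges_iff, hO'v, el_concat O.verts O.ne z]
        exact List.mem_append.2 (Or.inl (mem_edges_iff.1 heR))
      · exact Or.inl (mem_sysE.2 ⟨R, by simp [hR, hRO], heR⟩)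
    · exact Or.inr h1
  | enter h z Qc hQc hne l₁ l₂ hsplit hl₁ hz hzX C O' hCv hO'v ih =>
    rename_i Qs O
    intro P hP e he
    have hnew := Reach.enter h z Qc hQc hne l₁ l₂ hsplit hl₁ hz hzX C O' hCv hO'v
    rcases ih P hP e he with h1 | h1
    · obtain ⟨R, hR, heR⟩ := mem_sysE.1 h1
      by_cases hRO : R = O
      · rw [hRO] at heR
        refine Or.inl (mem_sysE.2 ⟨C, by simp, ?_⟩)
        rw [mem_edges_iff, hCv, el_append_cons O.verts O.ne z l₂]
        exact List.mem_append.2 (Or.inl (mem_edges_iff.1 heR))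
      · by_cases hRQc : R = Qc
        · rw [hRQc] at heR
          rw [mem_edges_iff, hsplit, el_append_cons l₁ hl₁ z l₂] at heR
          rcases List.mem_append.1 heR with h2 | h2
          · refine Or.inl (mem_sysE.2 ⟨O', by simp, ?_⟩)
            rw [mem_edges_iff, hO'v]
            exact h2
          · rcases List.mem_cons.1 h2 with h3 | h3
            · refine Or.inr ?_
              have : O'.last = l₁.getLast hl₁ := last_eq hO'v hl₁
              have hT := mem_T_of_reach hnew
              rw [this] at hT
              rw [h3]
              exact hT
            · refine Or.inl (mem_sysE.2 ⟨C, by simp, ?_⟩)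
              rw [mem_edges_iff, hCv, el_append_cons O.verts O.ne z l₂]
              exact List.mem_append.2 (Or.inr (List.mem_cons.2 (Or.inr h3)))
        · exact Or.inl (mem_sysE.2 ⟨R, by simp [hR, hRO, hRQc], heR⟩)
    · exact Or.inr h1
  | trunc h v l₁ l₂ hsplit O' hO'v ih =>
    rename_i Qs O
    intro P hP e he
    rcases ih P hP e he with h1 | h1
    · obtain ⟨R, hR, heR⟩ := mem_sysE.1 h1
      by_cases hRO : R = O
      · rw [hRO] at heR
        rw [mem_edges_iff, hsplit] at heR
        by_cases hl : l₁ = []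
        · subst hl
          rw [List.nil_append] at heR
          refine Or.inr (T_of_mem_open h ?_)
          rw [mem_vertexSet_iff, hsplit]
          exact List.mem_append.2 (Or.inr (fst_mem_of_mem_el heR))
        · rw [el_append_cons l₁ hl v l₂] at heR
          rcases List.mem_append.1 heR with h2 | h2
          · refine Or.inl (mem_sysE.2 ⟨O', by simp, ?_⟩)
            rw [mem_edges_iff, hO'v, el_concat l₁ hl v]
            exact List.mem_append.2 (Or.inl h2)
          · rcases List.mem_cons.1 h2 with h3 | h3
            · refine Or.inl (mem_sysE.2 ⟨O', by simp, ?_⟩)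
              rw [mem_edges_iff, hO'v, el_concat l₁ hl v, h3]
              simp
            · refine Or.inr (T_of_mem_open h ?_)
              rw [mem_vertexSet_iff, hsplit]
              exact List.mem_append.2 (Or.inr (fst_mem_of_mem_el h3))
      · exact Or.inl (mem_sysE.2 ⟨R, by simp [hR, hRO], heR⟩)
    · exact Or.inr h1

lemma reach_vsub (hPs : DisjXYSystem D X Y Ps) {Qs : Set (DiPath V)} {O : DiPath V}
    (h : Reach D X Y Ps Qs O) :
    ∀ w ∈ sysV Qs, w ∈ sysV Ps ∨ w ∈ TSet D X Y Ps := by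
  induction h with
  | base x t ht hx hxY hxV =>
    intro w hw
    obtain ⟨R, hR, hwR⟩ := mem_sysV.1 hw
    rcases hR with rfl | hR
    · rw [mem_vertexSet_iff, ht] at hwR
      simp only [List.mem_singleton] at hwR
      refine Or.inr ?_
      have := mem_T_of_reach (Reach.base (D := D) x R ht hx hxY hxV)
      rw [last_eq ht (by simp)] at this
      simp only [List.getLast_singleton] at this
      rwa [hwR]
    · exact Or.inl (mem_sysV.2 ⟨R, hR, hwR⟩)
  | ext h z O' hO'v hz hzX hzY hzV ih =>
    rename_i Qs O
    intro w hw
    obtain ⟨R, hR, hwR⟩ := mem_sysV.1 hw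
    rcases hR with rfl | ⟨hR, -⟩
    · rw [mem_vertexSet_iff, hO'v] at hwR
      rcases List.mem_append.1 hwR with h1 | h1
      · exact ih w (mem_sysV.2 ⟨O, (reach_good hPs h).mem, h1⟩)
      · simp only [List.mem_singleton] at h1
        subst h1
        refine Or.inr ?_
        have := mem_T_of_reach (Reach.ext h w R hO'v hz hzX hzY hzV)
        rwa [last_eq hO'v (by simp [O.ne]), List.getLast_append] at this
    · exact ih w (mem_sysV.2 ⟨R, hR, hwR⟩)
  | enter h z Qc hQc hne l₁ l₂ hsplit hl₁ hz hzX C O' hCv hO'v ih =>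
    rename_i Qs O
    intro w hw
    obtain ⟨R, hR, hwR⟩ := mem_sysV.1 hw
    rcases hR with rfl | rfl | ⟨hR, -⟩
    · rw [mem_vertexSet_iff, hCv] at hwR
      rcases List.mem_append.1 hwR with h1 | h1
      · exact ih w (mem_sysV.2 ⟨O, (reach_good hPs h).mem, h1⟩)
      · refine ih w (mem_sysV.2 ⟨Qc, hQc, ?_⟩)
        rw [mem_vertexSet_iff, hsplit]
        exact List.mem_append.2 (Or.inr h1)
    · rw [mem_vertexSet_iff, hO'v] at hwR
      refine ih w (mem_sysV.2 ⟨Qc, hQc, ?_⟩)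
      rw [mem_vertexSet_iff, hsplit]
      exact List.mem_append.2 (Or.inl hwR)
    · exact ih w (mem_sysV.2 ⟨R, hR, hwR⟩)
  | trunc h v l₁ l₂ hsplit O' hO'v ih =>
    rename_i Qs O
    intro w hw
    obtain ⟨R, hR, hwR⟩ := mem_sysV.1 hw
    rcases hR with rfl | ⟨hR, -⟩
    · refine ih w (mem_sysV.2 ⟨O, (reach_good hPs h).mem, ?_⟩)
      rw [mem_vertexSet_iff, hO'v] at hwR
      rw [mem_vertexSet_iff, hsplit]
      rcases List.mem_append.1 hwR with h1 | h1
      · exact List.mem_append.2 (Or.inl h1)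
      · simp only [List.mem_singleton] at h1
        subst h1
        exact List.mem_append.2 (Or.inr (by simp))
    · exact ih w (mem_sysV.2 ⟨R, hR, hwR⟩)

end
end AW

namespace AW
section
variable {D : Set (V × V)} {X Y : Set V} {Ps : Set (DiPath V)}

lemma trunc_T {Qs : Set (DiPath V)} {O : DiPath V} (h : Reach D X Y Ps Qs O)
    {R : DiPath V} (hR : R ∈ Qs) {u' u : V} (heR : (u', u) ∈ R.edges)
    (hRO : R = O) : u' ∈ TSet D X Y Ps := by
  subst hRO
  refine T_of_mem_open h ?_
  exact fst_mem_of_mem_el (mem_edges_iff.1 heR)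

lemma key1 (hPs : DisjXYSystem D X Y Ps) {P : DiPath V} (hP : P ∈ Ps) {u' u : V}
    (he : (u', u) ∈ P.edges) (hu : u ∈ MSet D X Y Ps) : u' ∈ TSet D X Y Ps := by
  rcases hu with ⟨Qs, O, hr, hlast⟩ | ⟨Qs, O, hr, hD, huX⟩
  · -- u is the end of the open path of the state (Qs, O)
    have G := reach_good hPs hr
    rcases reach_spade hPs hr P hP (u', u) he with h1 | h1
    · obtain ⟨R, hR, heR⟩ := mem_sysE.1 h1
      have huR : u ∈ R.vertexSet := snd_mem_of_mem_el (mem_edges_iff.1 heR)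
      have huO : u ∈ O.vertexSet := hlast ▸ last_mem
      by_cases hRO : R = O
      · exact trunc_T hr hR heR hRO
      · exact absurd huO (G.disj R hR O G.mem hRO u huR)
    · exact h1
  · -- there is an edge from the end of the open path to u
    have G := reach_good hPs hr
    rcases reach_spade hPs hr P hP (u', u) he with h1 | h1
    · obtain ⟨R, hR, heR⟩ := mem_sysE.1 h1
      by_cases hRO : R = O
      · exact trunc_T hr hR heR hRO
      · -- enter the closed path R at u; the new open path ends at u'
        obtain ⟨m₁, m₂, hm⟩ := mem_el (mem_edges_iff.1 heR)
        simp only at hm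
        have hm' : R.verts = (m₁ ++ [u']) ++ u :: m₂ := by simp [hm]
        have hnodC : (O.verts ++ u :: m₂).Nodup := by
          rw [List.nodup_append]
          refine ⟨O.nodup, ?_, ?_⟩
          · have := R.nodup
            rw [hm'] at this
            exact ((List.nodup_append.1 this).2.1)
          · intro a haO b haU rfl
            have haR : a ∈ R.vertexSet := by
              rw [mem_vertexSet_iff, hm']
              exact List.mem_append.2 (Or.inr haU)
            exact G.disj R hR O G.mem hRO a haR haO
        have hnodO' : (m₁ ++ [u']).Nodup := nodup_concat_of_split R.nodup hm
        have hnew := Reach.enter hr u R hR hRO (m₁ ++ [u']) m₂ hm' (by simp) hD huX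
          ⟨O.verts ++ u :: m₂, by simp [O.ne], hnodC⟩ ⟨m₁ ++ [u'], by simp, hnodO'⟩
          rfl rfl
        have := mem_T_of_reach hnew
        rwa [last_eq (rfl : (⟨m₁ ++ [u'], by simp, hnodO'⟩ : DiPath V).verts = m₁ ++ [u'])
          (by simp), List.getLast_append] at this
    · exact h1

lemma T_sub_M : TSet D X Y Ps ⊆ MSet D X Y Ps := Set.subset_union_left

lemma key (hPs : DisjXYSystem D X Y Ps) {P : DiPath V} (hP : P ∈ Ps) :
    ∀ (l₁ : List V) {u : V} {l₂ : List V}, u ∈ MSet D X Y Ps →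
      P.verts = l₁ ++ u :: l₂ → ∀ w ∈ l₁, w ∈ TSet D X Y Ps := by
  intro l₁
  induction l₁ using List.reverseRecOn with
  | nil => intro u l₂ _ _ w hw; simp at hw
  | append_singleton m u' ih =>
    intro u l₂ hu hsplit w hw
    have hsplit' : P.verts = m ++ u' :: u :: l₂ := by simpa using hsplit
    have hT : u' ∈ TSet D X Y Ps :=
      key1 hPs hP (mem_edges_iff.2 (el_split_mem P.verts m l₂ u' u hsplit')) hu
    rcases List.mem_append.1 hw with h1 | h1
    · exact ih (T_sub_M hT) hsplit' w h1
    · simp only [List.mem_singleton] at h1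
      rwa [h1]

end
end AW

namespace AW
section
variable {D : Set (V × V)} {X Y : Set V} {Ps : Set (DiPath V)}

lemma inter_eq_singleton {s T : Set V} {a : V} (ha : a ∈ s) (haT : a ∈ T)
    (h : ∀ v ∈ s, v ∈ T → v = a) : s ∩ T = {a} := by
  ext v
  constructor
  · rintro ⟨h1, h2⟩; exact h v h1 h2
  · rintro rfl; exact ⟨ha, haT⟩

lemma count_conclude {Qs' A B : Set (DiPath V)} (hAfin : A.Finite) (hBfin : B.Finite)
    (hAP : A ⊆ Ps) (hQsE : Qs' = (Ps \ A) ∪ B) (hBP : B ∩ (Ps \ A) = ∅)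
    (hcard : A.ncard + 1 = B.ncard) :
    (Ps \ Qs').Finite ∧ (Qs' \ Ps).Finite ∧ (Ps \ Qs').ncard + 1 = (Qs' \ Ps).ncard := by
  have hCA : B ∩ Ps ⊆ A := by
    rintro b ⟨hbB, hbPs⟩
    by_contra hc
    exact (Set.eq_empty_iff_forall_notMem.1 hBP b) ⟨hbB, hbPs, hc⟩
  have h1 : Ps \ Qs' = A \ (B ∩ Ps) := by
    ext x
    simp only [Set.mem_diff, hQsE, Set.mem_union, Set.mem_inter_iff, not_or]
    constructor
    · rintro ⟨hx, h2, h3⟩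
      refine ⟨?_, fun hc => h3 hc.1⟩
      by_contra hc
      exact h2 ⟨hx, hc⟩
    · rintro ⟨hxA, h2⟩
      exact ⟨hAP hxA, fun hc => hc.2 hxA, fun hc => h2 ⟨hc, hAP hxA⟩⟩
  have h2 : Qs' \ Ps = B \ (B ∩ Ps) := by
    ext x
    simp only [Set.mem_diff, hQsE, Set.mem_union, Set.mem_inter_iff, not_and]
    constructor
    · rintro ⟨h3 | h3, h4⟩
      · exact absurd h3.1 h4
      · exact ⟨h3, fun _ => h4⟩
    · rintro ⟨h3, h4⟩
      have := h4 h3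
      exact ⟨Or.inr h3, this⟩
  have hsub2 : B ∩ Ps ⊆ B := Set.inter_subset_left
  rw [h1, h2, Set.ncard_diff hCA (hBfin.subset (Set.inter_subset_left.trans (subset_refl B))), Set.ncard_diff hsub2 (hBfin.subset Set.inter_subset_left)]
  have e1 : (B ∩ Ps).ncard ≤ A.ncard := Set.ncard_le_ncard hCA hAfin
  refine ⟨hAfin.diff, hBfin.diff, by omega⟩

lemma aug_base (hPs : DisjXYSystem D X Y Ps) (x : V) (t : DiPath V) (ht : t.verts = [x])
    (hx : x ∈ X) (hxY : x ∈ Y) (hxV : ∀ P ∈ Ps, x ∉ P.vertexSet) :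
    Augmented D X Y Ps := by
  have hvmem : ∀ v, v ∈ t.vertexSet ↔ v = x := by
    intro v; rw [mem_vertexSet_iff, ht]; simp
  have hfirst : t.first = x := by rw [first_eq ht (by simp)]; rfl
  have hlast : t.last = x := by rw [last_eq ht (by simp)]; rfl
  have htPs : t ∉ Ps := fun hc => hxV t hc ((hvmem x).2 rfl)
  refine ⟨insert t Ps, ⟨?_, ?_⟩, ?_, ?_, ?_, ?_, ?_⟩
  · rintro R (rfl | hR)
    · refine ⟨?_, ?_, ?_⟩
      · intro e he
        rw [mem_edges_iff, ht] at he
        simp at he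
      · exact inter_eq_singleton first_mem (hfirst ▸ hx)
          (fun v hv _ => by rw [hfirst]; exact (hvmem v).1 hv)
      · exact inter_eq_singleton last_mem (hlast ▸ hxY)
          (fun v hv _ => by rw [hlast]; exact (hvmem v).1 hv)
    · exact hPs.1 R hR
  · rintro R (rfl | hR) R' (rfl | hR') hne
    · exact absurd rfl hne
    · rw [Set.eq_empty_iff_forall_notMem]
      rintro v ⟨hv, hv'⟩
      rw [(hvmem v).1 hv] at hv'
      exact hxV R' hR' hv'
    · rw [Set.eq_empty_iff_forall_notMem]
      rintro v ⟨hv, hv'⟩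
      rw [(hvmem v).1 hv'] at hv
      exact hxV R hR hv
    · exact hPs.2 R hR R' hR' hne
  · rw [Set.diff_eq_empty.2 (Set.subset_insert t Ps)]; exact Set.finite_empty
  · have hdiff : insert t Ps \ Ps = {t} := by
      ext R
      simp only [Set.mem_diff, Set.mem_insert_iff, Set.mem_singleton_iff]
      constructor
      · rintro ⟨rfl | h1, h2⟩
        · rfl
        · exact absurd h1 h2
      · rintro rfl
        exact ⟨Or.inl rfl, htPs⟩
    rw [hdiff]; exact Set.finite_singleton t
  · have hdiff : insert t Ps \ Ps = {t} := by
      ext R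
      simp only [Set.mem_diff, Set.mem_insert_iff, Set.mem_singleton_iff]
      constructor
      · rintro ⟨rfl | h1, h2⟩
        · rfl
        · exact absurd h1 h2
      · rintro rfl
        exact ⟨Or.inl rfl, htPs⟩
    rw [Set.diff_eq_empty.2 (Set.subset_insert t Ps), hdiff]
    simp
  · intro v hv
    obtain ⟨P, hP, rfl⟩ := hv
    exact ⟨P, Or.inr hP, rfl⟩
  · intro v hv
    obtain ⟨P, hP, rfl⟩ := hv
    exact ⟨P, Or.inr hP, rfl⟩

end
end AW

namespace AW
section
variable {D : Set (V × V)} {X Y : Set V} {Ps : Set (DiPath V)}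

lemma aug_ext (hPs : DisjXYSystem D X Y Ps) {Qs : Set (DiPath V)} {O : DiPath V}
    (hr : Reach D X Y Ps Qs O) {z : V} (hz : (O.last, z) ∈ D) (hzX : z ∉ X)
    (hzY : z ∈ Y) (hzV : ∀ R ∈ Qs, z ∉ R.vertexSet) : Augmented D X Y Ps := by
  have G := reach_good hPs hr
  have hzO : z ∉ O.vertexSet := hzV O G.mem
  set O' : DiPath V := ⟨O.verts ++ [z], by simp [O.ne], by
    rw [List.nodup_append]
    exact ⟨O.nodup, List.nodup_singleton z, fun a ha b hb hab => by
      simp only [List.mem_singleton] at hb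
      subst hab; subst hb
      exact hzO ha⟩⟩ with hO'def
  have hO'v : O'.verts = O.verts ++ [z] := rfl
  have hvmem : ∀ v, v ∈ O'.vertexSet ↔ v ∈ O.vertexSet ∨ v = z := by
    intro v; rw [mem_vertexSet_iff, hO'v]; simp [mem_vertexSet_iff]
  have hfirst : O'.first = O.first := by
    rw [first_eq hO'v (by simp [O.ne]), first_eq (rfl : O.verts = O.verts) O.ne]
    exact List.head_append_of_ne_nil O.ne
  have hlast : O'.last = z := by
    rw [last_eq hO'v (by simp [O.ne])]
    exact List.getLast_append _
  have hedge : ∀ e, e ∈ O'.edges ↔ e ∈ O.edges ∨ e = (O.last, z) := by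
    intro e
    rw [mem_edges_iff, mem_edges_iff, hO'v, el_concat O.verts O.ne z]
    simp [DiPath.last]
  have hO'Qs : O' ∉ Qs := fun hmem => hzV O' hmem ((hvmem z).2 (Or.inr rfl))
  refine ⟨insert O' (Qs \ {O}), ⟨?_, ?_⟩, ?_⟩
  · rintro R (rfl | ⟨hR, hRO⟩)
    · refine ⟨?_, ?_, ?_⟩
      · intro e he
        rcases (hedge e).1 he with h1 | rfl
        · exact G.subD O G.mem h1
        · exact hz
      · refine inter_eq_singleton first_mem (hfirst ▸ G.firstX O G.mem) ?_
        intro v hv hvX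
        rcases (hvmem v).1 hv with h1 | rfl
        · rw [hfirst]; exact G.uniqX O G.mem v h1 hvX
        · exact absurd hvX hzX
      · refine inter_eq_singleton last_mem (hlast ▸ hzY) ?_
        intro v hv hvY
        rcases (hvmem v).1 hv with h1 | rfl
        · exact absurd hvY (G.openY v h1)
        · exact hlast.symm
    · refine ⟨G.subD R hR, ?_, ?_⟩
      · exact inter_eq_singleton first_mem (G.firstX R hR) (G.uniqX R hR)
      · have hRO' : R ≠ O := by simpa using hRO
        exact inter_eq_singleton last_mem (G.lastY R hR hRO') (G.uniqY R hR hRO')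
  · rintro R (rfl | ⟨hR, hRO⟩) R' (rfl | ⟨hR', hR'O⟩) hne
    · exact absurd rfl hne
    · have hOR' : O ≠ R' := fun hc => hR'O (by simp [← hc])
      rw [Set.eq_empty_iff_forall_notMem]
      rintro v ⟨hv, hv'⟩
      rcases (hvmem v).1 hv with h1 | rfl
      · exact G.disj O G.mem R' hR' hOR' v h1 hv'
      · exact hzV R' hR' hv'
    · have hOR : O ≠ R := fun hc => hRO (by simp [← hc])
      rw [Set.eq_empty_iff_forall_notMem]
      rintro v ⟨hv, hv'⟩
      rcases (hvmem v).1 hv' with h1 | rfl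
      · exact G.disj O G.mem R hR hOR v h1 hv
      · exact hzV R hR hv
    · rw [Set.eq_empty_iff_forall_notMem]
      rintro v ⟨hv, hv'⟩
      exact G.disj R hR R' hR' hne v hv hv'
  · obtain ⟨A, B, hAfin, hBfin, hAP, hQsE, hBP, hcard, hOB⟩ := G.count
    have hOPs : O ∉ Ps := open_not_mem_Ps hPs G
    have hO'B : O' ∉ B \ {O} := fun hc => hO'Qs (by rw [hQsE]; exact Or.inr hc.1)
    have hsetE : insert O' (Qs \ {O}) = (Ps \ A) ∪ insert O' (B \ {O}) := by
      ext R
      simp only [Set.mem_insert_iff, Set.mem_diff, Set.mem_union, Set.mem_singleton_iff, hQsE]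
      constructor
      · rintro (rfl | ⟨(h1 | h1), h2⟩)
        · tauto
        · exact Or.inl h1
        · tauto
      · rintro (⟨h1, h2⟩ | (rfl | ⟨h1, h2⟩))
        · exact Or.inr ⟨Or.inl ⟨h1, h2⟩, fun hc => hOPs (hc ▸ h1)⟩
        · tauto
        · tauto
    have hint : insert O' (B \ {O}) ∩ (Ps \ A) = ∅ := by
      rw [Set.eq_empty_iff_forall_notMem]
      rintro R ⟨(rfl | ⟨h1, -⟩), h2, h3⟩
      · exact hO'Qs (by rw [hQsE]; exact Or.inl ⟨h2, h3⟩)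
      · exact (Set.eq_empty_iff_forall_notMem.1 hBP R) ⟨h1, h2, h3⟩
    have hcard' : A.ncard + 1 = (insert O' (B \ {O})).ncard := by
      rw [Set.ncard_insert_of_notMem hO'B (hBfin.diff),
        Set.ncard_diff_singleton_of_mem hOB]
      omega
    obtain ⟨hfin1, hfin2, hncard⟩ := count_conclude (Qs' := insert O' (Qs \ {O}))
      hAfin ((hBfin.diff).insert _) hAP hsetE hint hcard'
    refine ⟨hfin1, hfin2, hncard, ?_, ?_⟩
    · intro v hv
      obtain ⟨P, hP, rfl⟩ := hv
      obtain ⟨R, hR, hRf⟩ := G.gfirst P hP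
      by_cases hRO : R = O
      · exact ⟨O', by simp, by rw [hfirst, ← hRO, hRf]⟩
      · exact ⟨R, by simp [hR, hRO], hRf⟩
    · intro v hv
      obtain ⟨P, hP, rfl⟩ := hv
      obtain ⟨R, hR, hRO, hRl⟩ := G.glast1 P hP
      exact ⟨R, by simp [hR, hRO], hRl⟩

end
end AW

namespace AW
section
attribute [local instance] Classical.propDecidable

/-- The last vertex of `P` lying in `S`, or `P.first` if there is none. -/
noncomputable def selS (S : Set V) (P : DiPath V) : V :=
  if h : P.verts.filter (fun v => decide (v ∈ S)) = [] then P.first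
  else (P.verts.filter (fun v => decide (v ∈ S))).getLast h

lemma selS_mem (S : Set V) (P : DiPath V) : selS S P ∈ P.vertexSet := by
  unfold selS
  split_ifs with h
  · exact first_mem
  · rw [mem_vertexSet_iff]
    exact List.mem_of_mem_filter (List.getLast_mem h)

lemma selS_eq_first (S : Set V) (P : DiPath V) (h : ∀ v ∈ P.verts, v ∉ S) :
    selS S P = P.first := by
  unfold selS
  rw [dif_pos]
  rw [List.filter_eq_nil_iff]
  intro a ha
  simp only [decide_eq_true_eq]
  exact h a ha

lemma getLast_of_append_split {F l₁ l₂ : List V} {w : V} (hne : F ≠ [])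
    (h : F = l₁ ++ w :: l₂) : F.getLast hne = (w :: l₂).getLast (by simp) := by
  subst h
  exact getLast_append_cons _ _ _

lemma selS_spec (S : Set V) (P : DiPath V) {v : V} (hv : v ∈ P.verts) (hvS : v ∈ S) :
    selS S P ∈ S ∧ ∃ l₁ l₂, P.verts = l₁ ++ selS S P :: l₂ ∧ ∀ w ∈ l₂, w ∉ S := by
  have hvf : v ∈ P.verts.filter (fun u => decide (u ∈ S)) :=
    List.mem_filter.2 ⟨hv, by simp [hvS]⟩
  have hne : P.verts.filter (fun u => decide (u ∈ S)) ≠ [] :=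
    List.ne_nil_of_mem hvf
  have hsel : selS S P = (P.verts.filter (fun u => decide (u ∈ S))).getLast hne := by
    unfold selS
    rw [dif_neg hne]
  set w := (P.verts.filter (fun u => decide (u ∈ S))).getLast hne with hw
  have hwf : w ∈ P.verts.filter (fun u => decide (u ∈ S)) := List.getLast_mem hne
  have hwP : w ∈ P.verts := List.mem_of_mem_filter hwf
  have hwS : w ∈ S := by
    have := List.of_mem_filter hwf
    simpa using this
  obtain ⟨l₁, l₂, hsp⟩ := List.append_of_mem hwP
  rw [hsel]
  refine ⟨hwS, l₁, l₂, hsp, ?_⟩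
  intro u hu huS
  have hnd := P.nodup
  rw [hsp] at hnd
  have hwl₂ : w ∉ l₂ := by
    have h1 : (w :: l₂).Nodup := hnd.of_append_right
    exact (List.nodup_cons.1 h1).1
  have hfil : P.verts.filter (fun u => decide (u ∈ S)) =
      l₁.filter (fun u => decide (u ∈ S)) ++ w :: l₂.filter (fun u => decide (u ∈ S)) := by
    rw [hsp, List.filter_append, List.filter_cons_of_pos (by simp [hwS])]
  have e2 := getLast_of_append_split hne hfil
  rw [← hw] at e2
  cases hfl : l₂.filter (fun u => decide (u ∈ S)) with
  | nil =>
    have : u ∈ l₂.filter (fun u => decide (u ∈ S)) := List.mem_filter.2 ⟨hu, by simp [huS]⟩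
    rw [hfl] at this
    simp at this
  | cons b fl =>
    rw [hfl, List.getLast_cons (by simp)] at e2
    have : w ∈ b :: fl := by
      rw [e2]
      exact List.getLast_mem _
    rw [← hfl] at this
    exact hwl₂ (List.mem_of_mem_filter this)

/-- `z` cannot be the head of a duplicate-free list if it occurs later. -/
lemma ne_head_of_split {l l₁ l₂ : List V} {w z : V} (hnd : l.Nodup)
    (h : l = l₁ ++ w :: z :: l₂) (hne : l ≠ []) : z ≠ l.head hne := by
  subst h
  cases l₁ with
  | nil =>
    rw [List.nil_append] at hnd
    simp only [List.nil_append, List.head_cons]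
    intro hc
    rw [List.nodup_cons] at hnd
    exact hnd.1 (by rw [← hc]; simp)
  | cons a t =>
    rw [List.cons_append] at hnd
    simp only [List.cons_append, List.head_cons]
    intro hc
    rw [List.nodup_cons] at hnd
    exact hnd.1 (by rw [← hc]; simp)
end
end AW

namespace AW
section
variable {D : Set (V × V)} {X Y : Set V} {Ps : Set (DiPath V)}

lemma separation (hPs : DisjXYSystem D X Y Ps) (hA : ¬ Augmented D X Y Ps)
    (hsel : ∀ P ∈ Ps, selS (MSet D X Y Ps) P ∉ (Q : DiPath V).vertexSet)
    (hQ : IsXYPath D X Y Q) : False := by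
  obtain ⟨hQD, hQX, hQY⟩ := hQ
  have qfX : Q.first ∈ X := by
    have : Q.first ∈ Q.vertexSet ∩ X := hQX ▸ rfl
    exact this.2
  have quX : ∀ v ∈ Q.vertexSet, v ∈ X → v = Q.first := by
    intro v hv hvX
    have : v ∈ Q.vertexSet ∩ X := ⟨hv, hvX⟩
    rwa [hQX] at this
  have qlY : Q.last ∈ Y := by
    have : Q.last ∈ Q.vertexSet ∩ Y := hQY ▸ rfl
    exact this.2
  have quY : ∀ v ∈ Q.vertexSet, v ∈ Y → v = Q.last := by
    intro v hv hvY
    have : v ∈ Q.vertexSet ∩ Y := ⟨hv, hvY⟩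
    rwa [hQY] at this
  -- Step A : some vertex of Q lies in TSet
  have hTQ : ∃ w ∈ Q.verts, w ∈ TSet D X Y Ps := by
    by_cases hq₀V : ∃ P ∈ Ps, Q.first ∈ P.vertexSet
    · obtain ⟨P₀, hP₀, hq₀P⟩ := hq₀V
      have hq₀first : Q.first = P₀.first := Ps_uniqX hPs hP₀ hq₀P qfX
      by_cases hM : ∃ v ∈ P₀.verts, v ∈ MSet D X Y Ps
      · obtain ⟨v, hv, hvM⟩ := hM
        obtain ⟨hselM, l₁, l₂, hsp, -⟩ := selS_spec (MSet D X Y Ps) P₀ hv hvM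
        cases l₁ with
        | nil =>
          exfalso
          rw [List.nil_append] at hsp
          have : P₀.first = selS (MSet D X Y Ps) P₀ := by
            rw [first_eq hsp (by simp)]
            simp
          exact hsel P₀ hP₀ (by rw [← this, ← hq₀first]; exact first_mem)
        | cons a t =>
          have hq₀a : Q.first = a := by
            rw [hq₀first, first_eq hsp (by simp)]
            rfl
          refine ⟨Q.first, mem_vertexSet_iff.1 first_mem, ?_⟩
          refine key hPs hP₀ (a :: t) hselM hsp Q.first ?_
          rw [hq₀a]
          simp
      · push_neg at hM
        exfalso
        refine hsel P₀ hP₀ ?_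
        rw [selS_eq_first _ _ hM, ← hq₀first]
        exact first_mem
    · push_neg at hq₀V
      by_cases hq₀Y : Q.first ∈ Y
      · exact absurd (aug_base hPs Q.first Q
          (eq_singleton_of_first_eq_last (quY Q.first first_mem hq₀Y)) qfX hq₀Y hq₀V) hA
      · refine ⟨Q.first, mem_vertexSet_iff.1 first_mem, ?_⟩
        have ht : (⟨[Q.first], by simp, by simp⟩ : DiPath V).last = Q.first := by
          rw [last_eq (P := ⟨[Q.first], by simp, by simp⟩) rfl (by simp)]
          simp
        have := mem_T_of_reach (Reach.base (D := D) Q.first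
          ⟨[Q.first], by simp, by simp⟩ rfl qfX hq₀Y hq₀V)
        rwa [ht] at this
  -- Step B : take the last vertex of Q in TSet and derive a contradiction
  obtain ⟨w₀, hw₀Q, hw₀T⟩ := hTQ
  obtain ⟨hwT, l₁, l₂, hsp, hl₂⟩ := selS_spec (TSet D X Y Ps) Q hw₀Q hw₀T
  set w := selS (TSet D X Y Ps) Q with hwdef
  obtain ⟨Qs, O, hr, hOlast⟩ := hwT
  have G := reach_good hPs hr
  cases l₂ with
  | nil =>
    -- w is the last vertex of Q, hence in Y; but open paths avoid Y
    have hwlast : Q.last = w := by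
      rw [last_eq hsp (by simp)]
      exact List.getLast_append _
    have hwY : w ∈ Y := hwlast ▸ qlY
    exact G.openY O.last last_mem (hOlast.symm ▸ hwY)
  | cons z l₂' =>
    have hsp' : Q.verts = (l₁ ++ [w]) ++ z :: l₂' := by simp [hsp]
    have hedgeQ : (w, z) ∈ Q.edges :=
      mem_edges_iff.2 (el_split_mem Q.verts l₁ l₂' w z hsp)
    have hedgeD : (O.last, z) ∈ D := by
      rw [hOlast]
      exact hQD hedgeQ
    have hzQ : z ∈ Q.vertexSet := by
      rw [mem_vertexSet_iff, hsp]
      simp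
    have hzX : z ∉ X := by
      intro hzX
      have h1 : z = Q.first := quX z hzQ hzX
      have h2 := ne_head_of_split Q.nodup hsp Q.ne
      rw [first_eq (rfl : Q.verts = Q.verts) Q.ne] at h1
      exact h2 h1
    have hzT : z ∉ TSet D X Y Ps := hl₂ z (by simp)
    by_cases hzV : ∃ R ∈ Qs, z ∈ R.vertexSet
    · obtain ⟨R, hR, hzR⟩ := hzV
      by_cases hRO : R = O
      · exact hzT (T_of_mem_open hr (hRO ▸ hzR))
      · have hzM : z ∈ MSet D X Y Ps := Or.inr ⟨Qs, O, hr, hedgeD, hzX⟩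
        have hzS : z ∈ sysV Qs := mem_sysV.2 ⟨R, hR, hzR⟩
        rcases reach_vsub hPs hr z hzS with h1 | h1
        · obtain ⟨P₁, hP₁, hzP₁⟩ := mem_sysV.1 h1
          obtain ⟨hselM, m₁, m₂, hspP, hm₂⟩ :=
            selS_spec (MSet D X Y Ps) P₁ (mem_vertexSet_iff.1 hzP₁) hzM
          have hzP₁' : z ∈ P₁.verts := mem_vertexSet_iff.1 hzP₁
          rw [hspP] at hzP₁'
          rcases List.mem_append.1 hzP₁' with h2 | h2
          · exact hzT (key hPs hP₁ m₁ hselM hspP z h2)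
          · rcases List.mem_cons.1 h2 with h3 | h3
            · exact hsel P₁ hP₁ (h3 ▸ hzQ)
            · exact hm₂ z h3 hzM
        · exact hzT h1
    · push_neg at hzV
      by_cases hzY : z ∈ Y
      · exact hA (aug_ext hPs hr hedgeD hzX hzY hzV)
      · have hzO : z ∉ O.vertexSet := hzV O G.mem
        have hnew := Reach.ext hr z ⟨O.verts ++ [z], by simp [O.ne], by
            rw [List.nodup_append]
            exact ⟨O.nodup, List.nodup_singleton z, fun a ha b hb hab => by
              simp only [List.mem_singleton] at hb
              subst hab; subst hb
              exact hzO ha⟩⟩ rfl hedgeD hzX hzY hzV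
        have := mem_T_of_reach hnew
        rw [last_eq (rfl : (O.verts ++ [z] : List V) = _) (by simp [O.ne]),
          List.getLast_append] at this
        exact hzT this

end
end AW
/-- (Augmenting walk lemma) For a system `Ps` of disjoint `X→Y` paths of `D`, either
there is an `XY`-separation consisting of exactly one vertex from each path of `Ps`,
or there is a system `Qs` of disjoint `X→Y` paths with `|Ps∖Qs| + 1 = |Qs∖Ps| < ℵ₀`,
`V_first(Qs) ⊇ V_first(Ps)` and `V_last(Qs) ⊇ V_last(Ps)`. -/
theorem augmenting_walk {V : Type u} (D : Set (V × V)) (X Y : Set V)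
    (Ps : Set (DiPath V)) (h : DisjXYSystem D X Y Ps) :
    (∃ sel : DiPath V → V, (∀ P ∈ Ps, sel P ∈ P.vertexSet) ∧
        ∀ Q : DiPath V, IsXYPath D X Y Q → ((sel '' Ps) ∩ Q.vertexSet).Nonempty) ∨
    (∃ Qs, DisjXYSystem D X Y Qs ∧ (Ps \ Qs).Finite ∧ (Qs \ Ps).Finite ∧
        (Ps \ Qs).ncard + 1 = (Qs \ Ps).ncard ∧
        Vfirst Ps ⊆ Vfirst Qs ∧ Vlast Ps ⊆ Vlast Qs) := by
  by_cases hAug : AW.Augmented D X Y Ps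
  · exact Or.inr hAug
  · refine Or.inl ⟨AW.selS (AW.MSet D X Y Ps), fun P hP => AW.selS_mem _ P, ?_⟩
    intro Q hQ
    by_contra hne
    refine AW.separation h hAug (Q := Q) ?_ hQ
    intro P hP hc
    exact hne ⟨AW.selS (AW.MSet D X Y Ps) P, ⟨P, hP, rfl⟩, hc⟩

end FlamePaper
end
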